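/- arXiv:1401.0570 — 11 statements merged into one kernel-verified Lean document; each statement's English description precedes it below -/
import Mathlib

section
/- Every locally indicable group is left-orderable. (Burns–Hale theorem, Theorem 2.6 of the paper.) -/
/-- A group `G` is left-orderable if there is a strict total order `<` on `G` such that
`g < h` implies `f*g < f*h` for all `f, g, h`. -/
def LeftOrderable (G : Type*) [Group G] : Prop :=
  ∃ r : G → G → Prop, IsStrictTotalOrder G r ∧ ∀ f g h : G, r g h → r (f * g) (f * h)

/-- A group `G` is locally indicable if every nontrivial finitely generated subgroup of `G`
admits a surjective group homomorphism onto the integers. -/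
def LocallyIndicable (G : Type*) [Group G] : Prop :=
  ∀ H : Subgroup G, H.FG → H ≠ ⊥ → ∃ φ : H →* Multiplicative ℤ, Function.Surjective φ

/-!
A left order is the same as a positive cone: a subsemigroup `P` such that `G ∖ {1}` is
the disjoint union of `P` and `P⁻¹`.
By compactness (an ultrafilter limit over the finite subsets of `G`) it suffices, for each
finite `F`, to find a subsemigroup avoiding `1` that contains `g` or `g⁻¹` for each nontrivial
`g ∈ F`. Such a partial cone is built by induction on `|F|`: map the subgroup generated by `F`
onto `ℤ`, decide the elements outside the kernel by the sign of their image, and those in the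
kernel, a strictly smaller part of `F`, by the inductive hypothesis.
-/

open Subgroup

section PartialCone

variable {G : Type*} [Group G]

def IsPartialCone (S : Subsemigroup G) (s : Set G) : Prop :=
  1 ∉ S ∧ ∀ g ∈ s, g ≠ 1 → g ∈ S ∨ g⁻¹ ∈ S

theorem leftOrderable_of_isPartialCone_univ {P : Subsemigroup G}
    (hP : IsPartialCone P Set.univ) : LeftOrderable G := by
  obtain ⟨hP1, hPtot⟩ := hP
  refine ⟨fun g h => g⁻¹ * h ∈ P, { trichotomous := ?_, irrefl := ?_, trans := ?_ }, ?_⟩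
  · intro g h hgh hhg
    by_contra hne
    rcases hPtot (g⁻¹ * h) trivial (by rwa [Ne, inv_mul_eq_one]) with h' | h'
    · exact hgh h'
    · exact hhg (by simpa using h')
  · intro g hg
    exact hP1 (by simpa using hg)
  · intro g h k hgh hhk
    simpa [mul_assoc] using P.mul_mem hgh hhk
  · intro f g h hgh
    simpa [mul_assoc] using hgh

theorem leftOrderable_of_forall_finset_exists_isPartialCone
    (h : ∀ F : Finset G, ∃ S : Subsemigroup G, IsPartialCone S F) : LeftOrderable G := by
  choose S hS using h
  obtain ⟨U, hU⟩ := Ultrafilter.exists_le (Filter.atTop : Filter (Finset G))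
  let P : Subsemigroup G :=
    { carrier := {g | ∀ᶠ F in U, g ∈ S F}
      mul_mem' := fun hg hh => (hg.and hh).mono fun F h => (S F).mul_mem h.1 h.2 }
  refine leftOrderable_of_isPartialCone_univ (P := P) ⟨fun h1 => ?_, fun g _ hg => ?_⟩
  · obtain ⟨F, hF⟩ := h1.exists
    exact (hS F).1 hF
  · have hgF : ∀ᶠ F in (U : Filter (Finset G)), g ∈ F :=
      (Filter.eventually_ge_atTop {g}).filter_mono hU |>.mono fun F h =>
        h (Finset.mem_singleton_self g)
    exact Ultrafilter.eventually_or.mp (hgF.mono fun F h => (hS F).2 g h hg)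

theorem IsPartialCone.mono {S : Subsemigroup G} {s t : Set G} (h : IsPartialCone S t)
    (hst : s ⊆ t) : IsPartialCone S s :=
  ⟨h.1, fun g hg => h.2 g (hst hg)⟩

theorem IsPartialCone.comap_subtype {H : Subgroup G} {S : Subsemigroup G} {s : Set G}
    (hS : IsPartialCone S s) :
    IsPartialCone (S.comap H.subtype.toMulHom) (Subtype.val ⁻¹' s) :=
  ⟨hS.1, fun x hx hx1 => hS.2 x hx (by simpa using hx1)⟩

theorem IsPartialCone.map_subtype {H : Subgroup G} {T : Subsemigroup H} {s : Set H}
    (hT : IsPartialCone T s) : IsPartialCone (T.map H.subtype.toMulHom) (Subtype.val '' s) := by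
  refine ⟨fun h1 => hT.1 ?_, ?_⟩
  · rwa [← Subsemigroup.mem_map_iff_mem (f := H.subtype.toMulHom) H.subtype_injective, map_one]
  · rintro _ ⟨x, hx, rfl⟩ hx1
    refine (hT.2 x hx (by simpa using hx1)).imp (Subsemigroup.mem_map_of_mem _) fun h => ?_
    exact Subsemigroup.mem_map_of_mem H.subtype.toMulHom h

end PartialCone

section LexCone

variable {H M : Type*} [Group H] [CommGroup M] [LinearOrder M] [IsOrderedMonoid M]

def lexCone (φ : H →* M) (T : Subsemigroup H) : Subsemigroup H where
  carrier := {x | 1 < φ x ∨ (φ x = 1 ∧ x ∈ T)}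
  mul_mem' := by
    rintro x y (hx | ⟨hx, hxT⟩) (hy | ⟨hy, hyT⟩) <;> simp only [Set.mem_ofPred_eq, map_mul]
    · exact Or.inl (one_lt_mul' hx hy)
    · exact Or.inl (by rwa [hy, mul_one])
    · exact Or.inl (by rwa [hx, one_mul])
    · exact Or.inr ⟨by rw [hx, hy, one_mul], T.mul_mem hxT hyT⟩

theorem isPartialCone_lexCone {φ : H →* M} {T : Subsemigroup H} {s : Set H}
    (hT : IsPartialCone T {x ∈ s | φ x = 1}) : IsPartialCone (lexCone φ T) s := by
  refine ⟨?_, fun x hx hx1 => ?_⟩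
  · rintro (h | ⟨-, h⟩)
    · simp at h
    · exact hT.1 h
  · rcases lt_trichotomy (φ x) 1 with hlt | heq | hgt
    · exact Or.inr (Or.inl (by rwa [map_inv, one_lt_inv']))
    · rcases hT.2 x ⟨hx, heq⟩ hx1 with h | h
      · exact Or.inl (Or.inr ⟨heq, h⟩)
      · exact Or.inr (Or.inr ⟨by rw [map_inv, heq, inv_one], h⟩)
    · exact Or.inl (Or.inl hgt)

end LexCone

theorem exists_mem_notMem_map_ker_of_surjective {G M : Type*} [Group G] [Group M] [Nontrivial M]
    {s : Set G} {φ : closure s →* M} (hφ : Function.Surjective φ) :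
    ∃ g ∈ s, g ∉ φ.ker.map (closure s).subtype := by
  by_contra! h
  obtain ⟨m, hm⟩ := exists_ne (1 : M)
  obtain ⟨x, rfl⟩ := hφ m
  have hx : (closure s).subtype x ∈ φ.ker.map (closure s).subtype := closure_le _ |>.mpr h x.2
  exact hm (MonoidHom.mem_ker.mp ((mem_map_iff_mem (closure s).subtype_injective).mp hx))

theorem LocallyIndicable.exists_isPartialCone {G : Type*} [Group G] (hG : LocallyIndicable G)
    (F : Finset G) : ∃ S : Subsemigroup G, IsPartialCone S F := by
  classical
  induction F using Finset.strongInduction with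
  | H F ih =>
    rcases (em (∃ g ∈ F, g ≠ 1)).symm with htriv | ⟨g₀, hg₀F, hg₀⟩
    · exact ⟨⊥, Subsemigroup.notMem_bot, fun g hg hg1 => (htriv ⟨g, hg, hg1⟩).elim⟩
    let H := closure (F : Set G)
    obtain ⟨φ, hφ⟩ := hG H ⟨F, rfl⟩ fun hbot => hg₀ (mem_bot.mp (hbot ▸ subset_closure hg₀F))
    let K := φ.ker.map H.subtype
    obtain ⟨S₁, hS₁⟩ := ih (F.filter (· ∈ K)) <|
      Finset.filter_ssubset.mpr (exists_mem_notMem_map_ker_of_surjective hφ)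
    have hT : IsPartialCone (S₁.comap H.subtype.toMulHom) {x ∈ Subtype.val ⁻¹' F | φ x = 1} :=
      hS₁.comap_subtype.mono fun x ⟨hxF, hx⟩ =>
        Finset.mem_filter.mpr ⟨hxF, mem_map_of_mem H.subtype (φ.mem_ker.mpr hx)⟩
    refine ⟨_, (isPartialCone_lexCone hT).map_subtype.mono fun g hg => ?_⟩
    exact ⟨⟨g, subset_closure hg⟩, hg, rfl⟩

/-- Burns–Hale: every locally indicable group is left-orderable. -/
theorem burns_hale (G : Type*) [Group G] (hG : LocallyIndicable G) : LeftOrderable G :=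
  leftOrderable_of_forall_finset_exists_isPartialCone hG.exists_isPartialCone
end

section
/- A group G is left-orderable if and only if every finitely generated subgroup of G is left-orderable. -/
/-!
Left-orderability of a subgroup is inherited by restricting the order. Conversely, order the
subgroups generated by finite subsets of `G` and fix an ultrafilter on the finite subsets that
refines `atTop`; declaring `g < h` when `g < h` in almost every one of these orders (an
ultralimit) gives a left order on `G`, the ultrafilter turning "not almost always `g < h` nor
almost always `h < g`" into "almost always `g = h`".
-/

open Filter Function

theorem LeftOrderable.of_injective {H G : Type*} [Group H] [Group G] (f : H →* G)
    (hf : Injective f) (hG : LeftOrderable G) : LeftOrderable H := by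
  obtain ⟨r, _, hmul⟩ := hG
  exact ⟨r on f, hf.isStrictTotalOrder_onFun r, fun a b c hbc => by
    simpa only [onFun, map_mul] using hmul (f a) (f b) (f c) hbc⟩

theorem LeftOrderable.of_eventually_mem {G ι : Type*} [Group G] (H : ι → Subgroup G)
    (hH : ∀ i, LeftOrderable (H i)) (l : Filter ι) [l.NeBot]
    (hmem : ∀ g : G, ∀ᶠ i in l, g ∈ H i) : LeftOrderable G := by
  choose r hr hmul using hH
  let U := Ultrafilter.of l
  have hmemU : ∀ g : G, ∀ᶠ i in U, g ∈ H i := fun g => Ultrafilter.of_le l (hmem g)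
  let R : G → G → Prop := fun g h =>
    ∀ᶠ i in U, ∃ (hg : g ∈ H i) (hh : h ∈ H i), r i ⟨g, hg⟩ ⟨h, hh⟩
  refine ⟨R, { trichotomous := ?_, irrefl := ?_, trans := ?_ }, ?_⟩
  · intro g h hgh hhg
    rw [← Ultrafilter.eventually_not] at hgh hhg
    obtain ⟨i, hg, hh, hngh, hnhg⟩ :=
      ((hmemU g).and ((hmemU h).and (hgh.and hhg))).exists
    exact congrArg Subtype.val
      ((hr i).trichotomous _ _ (fun h' => hngh ⟨hg, hh, h'⟩) fun h' => hnhg ⟨hh, hg, h'⟩)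
  · intro g hgg
    obtain ⟨i, _, _, hi⟩ := hgg.exists
    exact (hr i).irrefl _ hi
  · intro g h k hgh hhk
    filter_upwards [hgh, hhk] with i ⟨hg, _, hi⟩ ⟨_, hk, hi'⟩
    exact ⟨hg, hk, (hr i).trans _ _ _ hi hi'⟩
  · intro f g h hgh
    filter_upwards [hgh, hmemU f] with i ⟨hg, hh, hi⟩ hf
    exact ⟨mul_mem hf hg, mul_mem hf hh, hmul i ⟨f, hf⟩ _ _ hi⟩

/-- A group is left-orderable if and only if every finitely generated subgroup is
left-orderable. -/
theorem leftOrderable_iff_fg_subgroups (G : Type*) [Group G] :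
    LeftOrderable G ↔ ∀ H : Subgroup G, H.FG → LeftOrderable H := by
  refine ⟨fun hG H _ => hG.of_injective H.subtype H.subtype_injective, fun hfg => ?_⟩
  refine LeftOrderable.of_eventually_mem (fun s : Finset G => Subgroup.closure (s : Set G))
    (fun s => hfg _ ⟨s, rfl⟩) atTop fun g => ?_
  filter_upwards [eventually_ge_atTop {g}] with s hs
  exact Subgroup.subset_closure (hs (Finset.mem_singleton_self g))
end

section
/- A countable group G is left-orderable if and only if G is isomorphic to a subgroup of Homeo(I, ∂I). -/
open Set

namespace Stmt

lemma negOne_mem_I : (-1 : ℝ) ∈ Set.Icc (-1 : ℝ) 1 := by norm_num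
lemma one_mem_I : (1 : ℝ) ∈ Set.Icc (-1 : ℝ) 1 := by norm_num

/-- The group of homeomorphisms of `I = [-1,1]` fixing the endpoints `-1` and `1`,
realized as a subgroup of the group of bijections of `I`. -/
def HomeoI : Subgroup (Equiv.Perm (Set.Icc (-1 : ℝ) 1)) where
  carrier := {f | Continuous f ∧ Continuous f.symm ∧
    f ⟨-1, negOne_mem_I⟩ = ⟨-1, negOne_mem_I⟩ ∧ f ⟨1, one_mem_I⟩ = ⟨1, one_mem_I⟩}
  one_mem' := ⟨continuous_id, continuous_id, rfl, rfl⟩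
  mul_mem' := by
    rintro a b ⟨ha1, ha2, ha3, ha4⟩ ⟨hb1, hb2, hb3, hb4⟩
    refine ⟨ha1.comp hb1, ?_, ?_, ?_⟩
    · exact hb2.comp ha2
    · simp [Equiv.Perm.mul_apply, hb3, ha3]
    · simp [Equiv.Perm.mul_apply, hb4, ha4]
  inv_mem' := by
    rintro a ⟨ha1, ha2, ha3, ha4⟩
    refine ⟨ha2, by exact ha1, ?_, ?_⟩
    · show a.symm _ = _
      rw [Equiv.symm_apply_eq, ha3]
    · show a.symm _ = _
      rw [Equiv.symm_apply_eq, ha4]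

end Stmt

/-!
`⇐`: an element of `HomeoI` is strictly increasing and, being continuous, is determined by its
values on a dense sequence `u`; comparing elements lexicographically along `u` is therefore a
left-invariant total order.

`⇒`: `G` acts by left translation on `G ×ₗ ℚ`, a countable dense order without endpoints and
hence a copy of `ℚ`. Order automorphisms of `ℚ` extend to `ℝ` by taking suprema, and
conjugating by an order isomorphism `ℝ ≃o Ioo (-1) 1` and fixing `±1` turns them into
homeomorphisms of `[-1, 1]`.
-/

open Function

section LeftOrderable

variable {G K : Type*} [Group G] [Group K]

theorem LeftOrderable.exists_linearOrder (hG : LeftOrderable G) :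
    ∃ _ : LinearOrder G, MulLeftStrictMono G := by
  classical
  obtain ⟨r, hr, hmul⟩ := hG
  exact ⟨linearOrderOfSTO r, ⟨hmul⟩⟩

theorem LeftOrderable.of_injective_linearOrder {α : Type*} [LinearOrder α] (φ : G → α)
    (hφ : Injective φ) (hmul : ∀ f g h : G, φ g < φ h → φ (f * g) < φ (f * h)) :
    LeftOrderable G :=
  letI := LinearOrder.lift' φ hφ
  ⟨(· < ·), inferInstance, hmul⟩

theorem LeftOrderable.of_injective_s3 (hK : LeftOrderable K) (φ : G →* K) (hφ : Injective φ) :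
    LeftOrderable G := by
  obtain ⟨_, _⟩ := hK.exists_linearOrder
  refine .of_injective_linearOrder φ hφ fun f g h hgh => ?_
  simpa only [map_mul] using mul_lt_mul_right hgh (φ f)

theorem Pi.toLex_comp_lt_toLex_comp {ι α β : Type*} [LT ι] [Preorder α] [Preorder β] {f : α → β}
    (hf : StrictMono f) {x y : ι → α} (hxy : toLex x < toLex y) :
    toLex (f ∘ x) < toLex (f ∘ y) := by
  obtain ⟨i, heq, hlt⟩ := hxy
  exact ⟨i, fun j hj => congrArg f (heq j hj), hf hlt⟩

theorem LeftOrderable.of_mulAction {X : Type*} [LinearOrder X] [MulAction G X]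
    (hmono : ∀ g : G, StrictMono (g • · : X → X)) (u : ℕ → X)
    (hsep : ∀ g h : G, (∀ n, g • u n = h • u n) → g = h) : LeftOrderable G := by
  refine .of_injective_linearOrder (fun g => toLex fun n => g • u n)
    (fun g h hgh => hsep g h fun n => congrFun hgh n) fun f g h hgh => ?_
  simp only [mul_smul]
  exact Pi.toLex_comp_lt_toLex_comp (hmono f) hgh

end LeftOrderable

def OrderIso.autCongr {α β : Type*} [LE α] [LE β] (e : α ≃o β) : (α ≃o α) ≃* (β ≃o β) where
  toFun f := e.symm.trans (f.trans e)
  invFun f := e.trans (f.trans e.symm)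
  left_inv f := by ext; simp
  right_inv f := by ext; simp
  map_mul' f g := by ext; simp [RelIso.mul_apply]

def lexMulLeftHom (G β : Type*) [Group G] [Preorder G] [MulLeftMono G] [Preorder β] :
    G →* (G ×ₗ β ≃o G ×ₗ β) where
  toFun g := Prod.Lex.prodLexCongr (OrderIso.mulLeft g) (OrderIso.refl β)
  map_one' := by ext; simp [Prod.map]
  map_mul' g h := by ext; simp [RelIso.mul_apply, Prod.map, mul_assoc]

theorem lexMulLeftHom_injective (G β : Type*) [Group G] [Preorder G] [MulLeftMono G]
    [Preorder β] [Nonempty β] : Injective (lexMulLeftHom G β) := by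
  refine (injective_iff_map_eq_one _).2 fun g hg => ?_
  obtain ⟨b⟩ := ‹Nonempty β›
  simpa [lexMulLeftHom] using congrArg (fun e => (ofLex (e (toLex (1, b)))).1) hg

section RealExtension

noncomputable def extendReal (f : ℚ ≃o ℚ) (x : ℝ) : ℝ :=
  sSup ((fun q : ℚ => (f q : ℝ)) '' {q | (q : ℝ) ≤ x})

variable (f g : ℚ ≃o ℚ)

theorem le_extendReal {x : ℝ} {q : ℚ} (hq : (q : ℝ) ≤ x) : (f q : ℝ) ≤ extendReal f x := by
  refine le_csSup ?_ ⟨q, hq, rfl⟩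
  obtain ⟨p, hp⟩ := exists_rat_gt x
  refine ⟨f p, ?_⟩
  rintro _ ⟨r, hr, rfl⟩
  exact Rat.cast_le.2 (f.monotone (by exact_mod_cast hr.trans hp.le))

theorem extendReal_le {x : ℝ} {q : ℚ} (hq : x ≤ q) : extendReal f x ≤ f q := by
  obtain ⟨p, hp⟩ := exists_rat_lt x
  refine csSup_le ⟨f p, p, hp.le, rfl⟩ ?_
  rintro _ ⟨r, hr, rfl⟩
  exact Rat.cast_le.2 (f.monotone (by exact_mod_cast hr.trans hq))

@[simp]
theorem extendReal_ratCast (q : ℚ) : extendReal f q = f q :=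
  (extendReal_le f le_rfl).antisymm (le_extendReal f le_rfl)

theorem extendReal_strictMono : StrictMono (extendReal f) := by
  intro x y hxy
  obtain ⟨p, hxp, hpy⟩ := exists_rat_btwn hxy
  obtain ⟨q, hpq, hqy⟩ := exists_rat_btwn hpy
  calc extendReal f x ≤ f p := extendReal_le f hxp.le
    _ < f q := by exact_mod_cast f.strictMono (by exact_mod_cast hpq)
    _ ≤ extendReal f y := le_extendReal f hqy.le

/-- Its range contains `ℚ`, so a monotone extension cannot jump. -/
theorem continuous_extendReal : Continuous (extendReal f) := by
  refine (extendReal_strictMono f).monotone.continuous_of_denseRange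
    (Rat.denseRange_cast.mono ?_)
  rintro _ ⟨q, rfl⟩
  exact ⟨f.symm q, by simp⟩

theorem Real.ext_of_continuous_of_ratCast {F G : ℝ → ℝ} (hF : Continuous F) (hG : Continuous G)
    (h : ∀ q : ℚ, F q = G q) : F = G :=
  hF.ext_on Rat.denseRange_cast hG (by rintro _ ⟨q, rfl⟩; exact h q)

theorem extendReal_mul : extendReal (f * g) = extendReal f ∘ extendReal g :=
  Real.ext_of_continuous_of_ratCast (continuous_extendReal _)
    ((continuous_extendReal f).comp (continuous_extendReal g)) fun q => by simp

theorem extendReal_one : extendReal 1 = id :=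
  Real.ext_of_continuous_of_ratCast (continuous_extendReal _) continuous_id fun q => by simp

theorem extendReal_inv_extendReal (x : ℝ) : extendReal f⁻¹ (extendReal f x) = x := by
  rw [← comp_apply (f := extendReal f⁻¹), ← extendReal_mul, inv_mul_cancel, extendReal_one, id]

noncomputable def extendRealHom : (ℚ ≃o ℚ) →* (ℝ ≃o ℝ) where
  toFun f :=
    { toFun := extendReal f
      invFun := extendReal f⁻¹
      left_inv := extendReal_inv_extendReal f
      right_inv x := by simpa using extendReal_inv_extendReal f⁻¹ x
      map_rel_iff' := (extendReal_strictMono f).le_iff_le }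
  map_one' := by ext x; exact congrFun extendReal_one x
  map_mul' f g := by ext x; exact congrFun (extendReal_mul f g) x

@[simp]
theorem extendRealHom_apply (x : ℝ) : extendRealHom f x = extendReal f x := rfl

theorem extendRealHom_injective : Injective extendRealHom := by
  refine (injective_iff_map_eq_one _).2 fun f hf => ?_
  ext q
  simpa using congrArg (fun F : ℝ ≃o ℝ => F q) hf

end RealExtension

section IccExtension

variable {α : Type*} [LinearOrder α] {a b : α}

def extendIcc (f : Ioo a b ≃o Ioo a b) (x : Icc a b) : Icc a b :=
  if hx : (x : α) ∈ Ioo a b then ⟨f ⟨x, hx⟩, Ioo_subset_Icc_self (f ⟨x, hx⟩).2⟩ else x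

theorem coe_extendIcc_of_mem (f : Ioo a b ≃o Ioo a b) {x : Icc a b} (hx : (x : α) ∈ Ioo a b) :
    (extendIcc f x : α) = f ⟨x, hx⟩ := by
  rw [extendIcc, dif_pos hx]

theorem extendIcc_of_notMem (f : Ioo a b ≃o Ioo a b) {x : Icc a b} (hx : (x : α) ∉ Ioo a b) :
    extendIcc f x = x :=
  dif_neg hx

theorem extendIcc_mul (f g : Ioo a b ≃o Ioo a b) (x : Icc a b) :
    extendIcc (f * g) x = extendIcc f (extendIcc g x) := by
  by_cases hx : (x : α) ∈ Ioo a b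
  · have hgx : (extendIcc g x : α) ∈ Ioo a b := coe_extendIcc_of_mem g hx ▸ (g _).2
    ext
    rw [coe_extendIcc_of_mem _ hx, coe_extendIcc_of_mem _ hgx]
    simp only [coe_extendIcc_of_mem g hx, RelIso.mul_apply]
  · simp only [extendIcc_of_notMem _ hx]

theorem extendIcc_one (x : Icc a b) : extendIcc 1 x = x := by
  by_cases hx : (x : α) ∈ Ioo a b
  · ext
    rw [coe_extendIcc_of_mem _ hx]
    rfl
  · exact extendIcc_of_notMem _ hx

theorem extendIcc_strictMono (f : Ioo a b ≃o Ioo a b) : StrictMono (extendIcc f) := by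
  intro x y hxy
  rw [← Subtype.coe_lt_coe] at hxy ⊢
  by_cases hx : (x : α) ∈ Ioo a b <;> by_cases hy : (y : α) ∈ Ioo a b
  · rw [coe_extendIcc_of_mem f hx, coe_extendIcc_of_mem f hy]
    exact f.strictMono (Subtype.mk_lt_mk.2 hxy)
  · have hby : b ≤ y := by
      simpa [hx.1.trans hxy] using hy
    rw [coe_extendIcc_of_mem f hx, extendIcc_of_notMem f hy]
    exact (f _).2.2.trans_le hby
  · have hxa : (x : α) ≤ a := by
      simpa [hxy.trans hy.2] using hx
    rw [extendIcc_of_notMem f hx, coe_extendIcc_of_mem f hy]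
    exact hxa.trans_lt (f _).2.1
  · rwa [extendIcc_of_notMem f hx, extendIcc_of_notMem f hy]

def extendIccHom : (Ioo a b ≃o Ioo a b) →* Equiv.Perm (Icc a b) :=
  MonoidHom.toHomPerm
    { toFun := extendIcc
      map_one' := funext extendIcc_one
      map_mul' f g := funext (extendIcc_mul f g) }

@[simp]
theorem extendIccHom_apply (f : Ioo a b ≃o Ioo a b) (x : Icc a b) :
    extendIccHom f x = extendIcc f x :=
  rfl

theorem extendIccHom_injective : Injective (extendIccHom : (Ioo a b ≃o Ioo a b) →* _) := by
  refine (injective_iff_map_eq_one _).2 fun f hf => ?_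
  ext x
  have hx : ((⟨x, Ioo_subset_Icc_self x.2⟩ : Icc a b) : α) ∈ Ioo a b := x.2
  simpa [coe_extendIcc_of_mem f hx] using
    congrArg (fun e : Equiv.Perm (Icc a b) => (e ⟨x, Ioo_subset_Icc_self x.2⟩ : α)) hf

end IccExtension

section HomeoI

local instance : Fact ((-1 : ℝ) ≤ 1) := ⟨by norm_num⟩

theorem mem_homeoI_iff_strictMono (f : Equiv.Perm (Icc (-1 : ℝ) 1)) :
    f ∈ Stmt.HomeoI ↔ StrictMono f := by
  constructor
  · rintro ⟨hf, -, hbot, -⟩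
    exact hf.strictMono_of_inj_boundedOrder (hbot.trans_le bot_le) f.injective
  · intro hf
    let e := hf.orderIsoOfSurjective f f.surjective
    have he : ⇑e.symm = ⇑f.symm := funext fun x =>
      f.injective ((e.apply_symm_apply x).trans (f.apply_symm_apply x).symm)
    exact ⟨e.continuous, he ▸ e.symm.continuous, e.map_bot, e.map_top⟩

noncomputable def realOrderIsoToHomeoI : (ℝ ≃o ℝ) →* Stmt.HomeoI :=
  (extendIccHom.comp (orderIsoIooNegOneOne ℝ).autCongr.toMonoidHom).codRestrict _ fun _ =>
    (mem_homeoI_iff_strictMono _).2 (extendIcc_strictMono _)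

theorem realOrderIsoToHomeoI_injective : Injective realOrderIsoToHomeoI :=
  fun _ _ hfg => (orderIsoIooNegOneOne ℝ).autCongr.injective <|
    extendIccHom_injective (congrArg Subtype.val hfg)

theorem leftOrderable_homeoI : LeftOrderable Stmt.HomeoI := by
  obtain ⟨u, hu⟩ := TopologicalSpace.exists_dense_seq (Icc (-1 : ℝ) 1)
  refine .of_mulAction (fun f => ((mem_homeoI_iff_strictMono f).1 f.2)) u fun f g hfg => ?_
  have hcont : ∀ h : Stmt.HomeoI, Continuous (h : Equiv.Perm (Icc (-1 : ℝ) 1)) := fun h => h.2.1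
  refine Subtype.ext <| Equiv.coe_fn_injective <| (hcont f).ext_on hu (hcont g) ?_
  rintro _ ⟨n, rfl⟩
  exact hfg n

end HomeoI

theorem LeftOrderable.exists_injective_hom_realOrderIso {G : Type*} [Group G] [Countable G]
    (hG : LeftOrderable G) : ∃ ρ : G →* (ℝ ≃o ℝ), Injective ρ := by
  obtain ⟨_, _⟩ := hG.exists_linearOrder
  have := mulLeftMono_of_mulLeftStrictMono G
  have : Nonempty (G ×ₗ ℚ) := ⟨toLex (1, 0)⟩
  have : Countable (G ×ₗ ℚ) := inferInstanceAs (Countable (G × ℚ))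
  obtain ⟨e⟩ := Order.iso_of_countable_dense (G ×ₗ ℚ) ℚ
  exact ⟨extendRealHom.comp (e.autCongr.toMonoidHom.comp (lexMulLeftHom G ℚ)),
    extendRealHom_injective.comp (e.autCongr.injective.comp (lexMulLeftHom_injective G ℚ))⟩

/-- A countable group is left-orderable if and only if it is isomorphic to a subgroup of
the group of homeomorphisms of `[-1,1]` fixing the endpoints. -/
theorem leftOrderable_iff_subgroup_homeoI (G : Type*) [Group G] [Countable G] :
    LeftOrderable G ↔ ∃ H : Subgroup Stmt.HomeoI, Nonempty (G ≃* H) := by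
  constructor
  · intro hG
    obtain ⟨ρ, hρ⟩ := hG.exists_injective_hom_realOrderIso
    exact ⟨_, ⟨MonoidHom.ofInjective (f := realOrderIsoToHomeoI.comp ρ)
      (realOrderIsoToHomeoI_injective.comp hρ)⟩⟩
  · rintro ⟨H, ⟨φ⟩⟩
    exact leftOrderable_homeoI.of_injective_s3 (H.subtype.comp φ.toMonoidHom)
      (H.subtype_injective.comp φ.injective)
end

section
/- Let E be a finite-dimensional real normed vector space and let S be a set of maps from E to E, each of which is continuously differentiable (C^1). Then for every natural number m, the set of points p ∈ E such that f(p) = p for every f ∈ S and the linear subspace {v ∈ E : Df_p(v) = v for all f ∈ S} has dimension at least m, is a closed subset of E. (Upper semi-continuity of the fixed rank.) -/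
/-!
At `p` the subspace is the intersection of the kernels of `Df_p - id`, `f ∈ S`. By the
descending chain condition on subspaces of `E`, finitely many `f` already cut it out, so
`m ≤ dim` is the intersection over finite `T ⊆ S` of the same condition for `T`. For finite `T`
the subspace is the kernel of one operator `E →L (T → E)` depending continuously on `p`, and by
rank–nullity `dim ker < m` is a lower bound on its rank, an open condition because linear
independence is. The fixed-point condition is closed since each `f` is continuous.
-/

open Module

theorem exists_finset_biInf_eq_iInf {α ι : Type*} [CompleteLattice α] [WellFoundedLT α]
    (f : ι → α) : ∃ T : Finset ι, ⨅ i ∈ T, f i = ⨅ i, f i := by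
  classical
  obtain ⟨_, ⟨T, rfl⟩, hT⟩ :=
    wellFounded_lt.has_min (Set.range fun T : Finset ι => ⨅ i ∈ T, f i) ⟨_, ∅, rfl⟩
  refine ⟨T, le_antisymm (le_iInf fun j => ?_) (le_iInf₂ fun i _ => iInf_le f i)⟩
  have hinsert : ⨅ i ∈ insert j T, f i = ⨅ i ∈ T, f i :=
    eq_of_le_of_not_lt (biInf_mono fun _ => Finset.mem_insert_of_mem) (hT _ ⟨insert j T, rfl⟩)
  exact hinsert ▸ biInf_le f (Finset.mem_insert_self j T)

section

variable {𝕜 E F X : Type*} [NontriviallyNormedField 𝕜] [CompleteSpace 𝕜]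
  [NormedAddCommGroup E] [NormedSpace 𝕜 E] [FiniteDimensional 𝕜 E]
  [NormedAddCommGroup F] [NormedSpace 𝕜 F] [TopologicalSpace X]

theorem isClosed_setOfPred_le_finrank_ker {B : X → E →L[𝕜] F} (hB : Continuous B) (m : ℕ) :
    IsClosed {x | m ≤ finrank 𝕜 (LinearMap.ker (B x : E →ₗ[𝕜] F))} := by
  have hcompl : {x | m ≤ finrank 𝕜 (LinearMap.ker (B x : E →ₗ[𝕜] F))}ᶜ =
      ⋃ r ∈ {r : ℕ | finrank 𝕜 E < r + m}, B ⁻¹' {f | ↑r ≤ (f : E →ₗ[𝕜] F).rank} := by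
    ext x
    have := LinearMap.finrank_range_add_finrank_ker (B x : E →ₗ[𝕜] F)
    simp only [Set.mem_compl_iff, Set.mem_ofPred_eq, not_le, Set.mem_iUnion, Set.mem_preimage,
      exists_prop, LinearMap.rank, ← finrank_eq_rank, Nat.cast_le]
    constructor
    · exact fun h => ⟨_, by omega, le_rfl⟩
    · rintro ⟨r, hr, hle⟩
      omega
  rw [← isOpen_compl_iff, hcompl]
  exact isOpen_biUnion fun r _ => (isOpen_setOfPred_nat_le_rank r).preimage hB

theorem isClosed_setOfPred_le_finrank_iInf_ker_of_fintype {ι : Type*} [Fintype ι]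
    {B : ι → X → E →L[𝕜] F} (hB : ∀ i, Continuous (B i)) (m : ℕ) :
    IsClosed {x | m ≤ finrank 𝕜 ↥(⨅ i, LinearMap.ker (B i x : E →ₗ[𝕜] F))} := by
  have hpi : Continuous fun x => ContinuousLinearMap.pi fun i => B i x :=
    (ContinuousLinearMap.piEquivL 𝕜 E fun _ : ι => F).continuous.comp (continuous_pi hB)
  convert isClosed_setOfPred_le_finrank_ker hpi m using 4 with x
  exact (LinearEquiv.ofEq _ _ (LinearMap.ker_pi fun i => (B i x : E →ₗ[𝕜] F))).finrank_eq.symm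

theorem isClosed_setOfPred_le_finrank_iInf_ker {ι : Type*} {B : ι → X → E →L[𝕜] F}
    (hB : ∀ i, Continuous (B i)) (m : ℕ) :
    IsClosed {x | m ≤ finrank 𝕜 ↥(⨅ i, LinearMap.ker (B i x : E →ₗ[𝕜] F))} := by
  have hfinite : {x | m ≤ finrank 𝕜 ↥(⨅ i, LinearMap.ker (B i x : E →ₗ[𝕜] F))} =
      ⋂ T : Finset ι, {x | m ≤ finrank 𝕜 ↥(⨅ i : T, LinearMap.ker (B i x : E →ₗ[𝕜] F))} := by
    ext x
    simp only [Set.mem_ofPred_eq, Set.mem_iInter]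
    refine ⟨fun h T => h.trans (Submodule.finrank_mono (iInf_mono' fun i => ⟨i, le_rfl⟩)),
      fun h => ?_⟩
    obtain ⟨T, hT⟩ := exists_finset_biInf_eq_iInf fun i => LinearMap.ker (B i x : E →ₗ[𝕜] F)
    rw [← hT, iInf_subtype']
    exact h T
  rw [hfinite]
  exact isClosed_iInter fun T =>
    isClosed_setOfPred_le_finrank_iInf_ker_of_fintype (ι := T) (fun i => hB i) m

end

/-- Upper semi-continuity of the fixed rank: for a set `S` of `C¹` self-maps of a
finite-dimensional real normed space `E` and any `m`, the set of points `p` fixed by every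
`f ∈ S` at which the subspace `{v | Df_p v = v for all f ∈ S}` has dimension at least `m`
is closed. -/
theorem fixedRank_isClosed (E : Type*) [NormedAddCommGroup E] [NormedSpace ℝ E]
    [FiniteDimensional ℝ E] (S : Set (E → E)) (hS : ∀ f ∈ S, ContDiff ℝ 1 f) (m : ℕ) :
    IsClosed {p : E | (∀ f ∈ S, f p = p) ∧
      m ≤ Module.finrank ℝ
        ↥(⨅ f ∈ S, LinearMap.ker ((fderiv ℝ f p).toLinearMap - LinearMap.id))} := by
  have hfixed : IsClosed {p : E | ∀ f ∈ S, f p = p} := by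
    simp only [Set.ofPred_forall]
    exact isClosed_biInter fun f hf => isClosed_eq (hS f hf).continuous continuous_id
  have hrank : IsClosed {p : E | m ≤ finrank ℝ
      ↥(⨅ f ∈ S, LinearMap.ker ((fderiv ℝ f p).toLinearMap - LinearMap.id))} := by
    convert isClosed_setOfPred_le_finrank_iInf_ker
      (B := fun (f : S) p => fderiv ℝ f p - ContinuousLinearMap.id ℝ E)
      (fun f => ((hS f f.2).continuous_fderiv one_ne_zero).sub continuous_const) m using 4 with p
    exact (LinearEquiv.ofEq _ _ (iInf_subtype'' S _)).finrank_eq.symm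
  exact hfixed.inter hrank
end

section
/- If every finitely generated subgroup of a group G admits a left-invariant circular order, then G admits a left-invariant circular order. -/
/-- A left-invariant circular order on a group `G`: values `±1` on pairwise distinct triples,
`0` on degenerate triples, satisfying the cocycle condition and left-invariance. -/
def IsLeftCircularOrder {G : Type*} [Group G] (e : G → G → G → ℤ) : Prop :=
  (∀ a b c : G, a ≠ b → b ≠ c → a ≠ c → e a b c = 1 ∨ e a b c = -1) ∧
  (∀ a b c : G, a = b ∨ b = c ∨ a = c → e a b c = 0) ∧
  (∀ g₀ g₁ g₂ g₃ : G, e g₁ g₂ g₃ - e g₀ g₂ g₃ + e g₀ g₁ g₃ - e g₀ g₁ g₂ = 0) ∧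
  (∀ g a b c : G, a ≠ b → b ≠ c → a ≠ c → e (g * a) (g * b) (g * c) = e a b c)

/-- A group is circularly orderable if it admits a left-invariant circular order. -/
def CircularlyOrderable (G : Type*) [Group G] : Prop :=
  ∃ e : G → G → G → ℤ, IsLeftCircularOrder e

/-- If every finitely generated subgroup of `G` is circularly orderable, then so is `G`. -/
theorem circularlyOrderable_of_fg_subgroups (G : Type*) [Group G]
    (h : ∀ H : Subgroup G, H.FG → CircularlyOrderable H) : CircularlyOrderable G := by
  classical
  set HS : Finset G → Subgroup G := fun S => Subgroup.closure (S : Set G) with hHS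
  have hfg : ∀ S, (HS S).FG := fun S =>
    (Subgroup.fg_iff _).2 ⟨S, rfl, S.finite_toSet⟩
  choose eS heS using fun S => h (HS S) (hfg S)
  let f : Finset G → G → G → G → ℤ := fun S a b c =>
    if h : a ∈ HS S ∧ b ∈ HS S ∧ c ∈ HS S then eS S ⟨a, h.1⟩ ⟨b, h.2.1⟩ ⟨c, h.2.2⟩ else 0
  have hfeq : ∀ S a b c (ha : a ∈ HS S) (hb : b ∈ HS S) (hc : c ∈ HS S),
      f S a b c = eS S ⟨a, ha⟩ ⟨b, hb⟩ ⟨c, hc⟩ := by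
    intro S a b c ha hb hc
    simp only [f]
    rw [dif_pos ⟨ha, hb, hc⟩]
  have hfrange : ∀ S a b c, f S a b c = 1 ∨ f S a b c = -1 ∨ f S a b c = 0 := by
    intro S a b c
    simp only [f]
    split
    · rename_i h'
      by_cases hab : a = b
      · exact Or.inr (Or.inr ((heS S).2.1 _ _ _ (Or.inl (Subtype.ext hab))))
      by_cases hbc : b = c
      · exact Or.inr (Or.inr ((heS S).2.1 _ _ _ (Or.inr (Or.inl (Subtype.ext hbc)))))
      by_cases hac : a = c
      · exact Or.inr (Or.inr ((heS S).2.1 _ _ _ (Or.inr (Or.inr (Subtype.ext hac)))))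
      rcases (heS S).1 ⟨a, h'.1⟩ ⟨b, h'.2.1⟩ ⟨c, h'.2.2⟩ (by intro heq; exact hab (Subtype.ext_iff.1 heq)) (by intro heq; exact hbc (Subtype.ext_iff.1 heq))
        (by intro heq; exact hac (Subtype.ext_iff.1 heq)) with h1 | h1
      · exact Or.inl h1
      · exact Or.inr (Or.inl h1)
    · exact Or.inr (Or.inr rfl)
  haveI : Nonempty (Finset G) := ⟨∅⟩
  let U : Ultrafilter (Finset G) := Ultrafilter.of Filter.atTop
  have hU : ∀ g : G, {S : Finset G | g ∈ HS S} ∈ U := by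
    intro g
    have hmem : {S : Finset G | g ∈ HS S} ∈ (Filter.atTop : Filter (Finset G)) := by
      apply Filter.mem_of_superset (Filter.Ici_mem_atTop {g})
      intro S hS
      exact Subgroup.subset_closure (by exact_mod_cast hS (Finset.mem_singleton_self g))
    exact Ultrafilter.of_le Filter.atTop hmem
  let e : G → G → G → ℤ := fun a b c =>
    if {S | f S a b c = 1} ∈ U then 1 else if {S | f S a b c = -1} ∈ U then -1 else 0
  have hlim : ∀ a b c, {S | f S a b c = e a b c} ∈ U := by
    intro a b c
    simp only [e]
    split
    · assumption
    · split
      · assumption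
      · rename_i h1 h2
        have h1' := Ultrafilter.compl_mem_iff_notMem.2 h1
        have h2' := Ultrafilter.compl_mem_iff_notMem.2 h2
        filter_upwards [h1', h2'] with S hs1 hs2
        rcases hfrange S a b c with hx | hx | hx
        · exact absurd hx hs1
        · exact absurd hx hs2
        · exact hx
  refine ⟨e, ?_, ?_, ?_, ?_⟩
  · intro a b c hab hbc hac
    obtain ⟨S, h1, ha, hb, hc⟩ := Filter.nonempty_of_mem
      ((U.1.inter_mem (hlim a b c) ((U.1.inter_mem (hU a)
        ((U.1.inter_mem (hU b) (hU c)))))))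
    rw [← h1, hfeq S a b c ha hb hc]
    exact (heS S).1 ⟨a, ha⟩ ⟨b, hb⟩ ⟨c, hc⟩ (by intro heq; exact hab (Subtype.ext_iff.1 heq)) (by intro heq; exact hbc (Subtype.ext_iff.1 heq))
      (by intro heq; exact hac (Subtype.ext_iff.1 heq))
  · intro a b c hdeg
    obtain ⟨S, h1⟩ := Filter.nonempty_of_mem (hlim a b c)
    rw [← h1]
    simp only [f]
    split
    · rename_i h'
      apply (heS S).2.1
      rcases hdeg with rfl | rfl | rfl
      · exact Or.inl (Subtype.ext rfl)
      · exact Or.inr (Or.inl (Subtype.ext rfl))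
      · exact Or.inr (Or.inr (Subtype.ext rfl))
    · rfl
  · intro g₀ g₁ g₂ g₃
    obtain ⟨S, hl0, hl1, hl2, hl3, h0, h1, h2, h3⟩ := Filter.nonempty_of_mem
      (U.1.inter_mem (hlim g₁ g₂ g₃) (U.1.inter_mem (hlim g₀ g₂ g₃)
        (U.1.inter_mem (hlim g₀ g₁ g₃) (U.1.inter_mem (hlim g₀ g₁ g₂)
          (U.1.inter_mem (hU g₀) (U.1.inter_mem (hU g₁)
            (U.1.inter_mem (hU g₂) (hU g₃))))))))
    rw [← hl0, ← hl1, ← hl2, ← hl3,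
      hfeq S g₁ g₂ g₃ h1 h2 h3, hfeq S g₀ g₂ g₃ h0 h2 h3,
      hfeq S g₀ g₁ g₃ h0 h1 h3, hfeq S g₀ g₁ g₂ h0 h1 h2]
    exact (heS S).2.2.1 _ _ _ _
  · intro g a b c hab hbc hac
    obtain ⟨S, hl0, hl1, hg, ha, hb, hc⟩ := Filter.nonempty_of_mem
      (U.1.inter_mem (hlim (g * a) (g * b) (g * c)) (U.1.inter_mem (hlim a b c)
        (U.1.inter_mem (hU g) (U.1.inter_mem (hU a)
          (U.1.inter_mem (hU b) (hU c))))))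
    rw [← hl0, ← hl1,
      hfeq S (g * a) (g * b) (g * c) (mul_mem hg ha) (mul_mem hg hb) (mul_mem hg hc),
      hfeq S a b c ha hb hc]
    have key := (heS S).2.2.2 ⟨g, hg⟩ ⟨a, ha⟩ ⟨b, hb⟩ ⟨c, hc⟩
      (by intro heq; exact hab (Subtype.ext_iff.1 heq)) (by intro heq; exact hbc (Subtype.ext_iff.1 heq))
      (by intro heq; exact hac (Subtype.ext_iff.1 heq))
    exact key
end

section
/- If G is a group with a normal subgroup K such that the quotient group G/K is circularly orderable and K is left-orderable, then G is circularly orderable. -/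
/-!
Pull the circular order `e` of `G ⧸ K` back to `G` and break ties inside each coset with the left
order of `K`: to `e(ā, b̄, c̄)` add the coboundary `σ(a, b) + σ(b, c) + σ(c, a)` of the sign `σ`
of the induced order on cosets. Being a coboundary of a left-invariant antisymmetric function, it
preserves the cocycle identity and left invariance; it vanishes when `ā, b̄, c̄` are pairwise
distinct, and otherwise supplies the value `±1` that `e` cannot.
-/

open scoped Classical in
noncomputable def orderSign {α : Type*} (s : α → α → Prop) (x y : α) : ℤ :=
  if s x y then 1 else if s y x then -1 else 0

section OrderSign

variable {α : Type*} {s : α → α → Prop} {x y z : α}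

theorem orderSign_of_rel (h : s x y) : orderSign s x y = 1 := by
  simp [orderSign, h]

theorem orderSign_of_rel_swap [Std.Asymm s] (h : s y x) : orderSign s x y = -1 := by
  simp [orderSign, h, asymm h]

theorem orderSign_of_not_rel (h : ¬s x y ∧ ¬s y x) : orderSign s x y = 0 := by
  simp [orderSign, h.1, h.2]

theorem orderSign_swap [Std.Asymm s] (x y : α) : orderSign s y x = -orderSign s x y := by
  by_cases hxy : s x y
  · rw [orderSign_of_rel hxy, orderSign_of_rel_swap hxy]
  by_cases hyx : s y x
  · rw [orderSign_of_rel hyx, orderSign_of_rel_swap hyx, neg_neg]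
  · rw [orderSign_of_not_rel ⟨hxy, hyx⟩, orderSign_of_not_rel ⟨hyx, hxy⟩, neg_zero]

theorem orderSign_eq_one_or_neg_one [Std.Asymm s] (h : s x y ∨ s y x) :
    orderSign s x y = 1 ∨ orderSign s x y = -1 :=
  h.imp orderSign_of_rel orderSign_of_rel_swap

/-- The signs of a cyclically ordered triple cannot all agree, since `s` has no cycles. -/
theorem orderSign_cycle_eq_one_or_neg_one [IsStrictOrder α s]
    (hxy : s x y ∨ s y x) (hyz : s y z ∨ s z y) (hzx : s z x ∨ s x z) :
    orderSign s x y + orderSign s y z + orderSign s z x = 1 ∨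
      orderSign s x y + orderSign s y z + orderSign s z x = -1 := by
  rcases hxy with h₁ | h₁ <;> rcases hyz with h₂ | h₂ <;> rcases hzx with h₃ | h₃
  · exact (irrefl x (_root_.trans (_root_.trans h₁ h₂) h₃)).elim
  all_goals first
    | exact (irrefl x (_root_.trans (_root_.trans h₃ h₂) h₁)).elim
    | simp only [orderSign_of_rel, orderSign_of_rel_swap, h₁, h₂, h₃]; norm_num

theorem orderSign_mul_left {G : Type*} [Group G] {s : G → G → Prop}
    (hs : ∀ g x y, s x y → s (g * x) (g * y)) (g x y : G) :
    orderSign s (g * x) (g * y) = orderSign s x y := by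
  have key : ∀ x y, s (g * x) (g * y) ↔ s x y := by
    refine fun x y => ⟨fun h => ?_, hs g x y⟩
    simpa only [inv_mul_cancel_left] using hs g⁻¹ (g * x) (g * y) h
  rw [orderSign, orderSign, propext (key x y), propext (key y x)]

end OrderSign

theorem IsLeftCircularOrder.mul_left {G : Type*} [Group G] {e : G → G → G → ℤ}
    (he : IsLeftCircularOrder e) (g a b c : G) : e (g * a) (g * b) (g * c) = e a b c := by
  by_cases h : a = b ∨ b = c ∨ a = c
  · rw [he.2.1 a b c h, he.2.1 _ _ _ (by simpa using h)]
  · push Not at h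
    exact he.2.2.2 g a b c h.1 h.2.1 h.2.2

section Lex

variable {G Q : Type*} [Group G] [Group Q]

/-- The lexicographic circular order: the pullback of `e` along `π`, corrected by the
coboundary of the sign of `s`. -/
noncomputable def lexCircular (π : G →* Q) (e : Q → Q → Q → ℤ) (s : G → G → Prop)
    (a b c : G) : ℤ :=
  e (π a) (π b) (π c) + orderSign s a b + orderSign s b c + orderSign s c a

variable {π : G →* Q} {e : Q → Q → Q → ℤ} {s : G → G → Prop}

theorem lexCircular_eq_one_or_neg_one (he : IsLeftCircularOrder e) [IsStrictOrder G s]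
    (hs : ∀ x y, s x y ∨ s y x ↔ π x = π y ∧ x ≠ y)
    {a b c : G} (hab : a ≠ b) (hbc : b ≠ c) (hac : a ≠ c) :
    lexCircular π e s a b c = 1 ∨ lexCircular π e s a b c = -1 := by
  have sign_zero {x y : G} (h : π x ≠ π y) : orderSign s x y = 0 :=
    orderSign_of_not_rel (not_or.1 fun h' => h ((hs x y).1 h').1)
  have sign_unit {x y : G} (h : π x = π y) (hxy : x ≠ y) :
      orderSign s x y = 1 ∨ orderSign s x y = -1 :=
    orderSign_eq_one_or_neg_one ((hs x y).2 ⟨h, hxy⟩)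
  unfold lexCircular
  by_cases hab' : π a = π b <;> by_cases hbc' : π b = π c
  · rw [he.2.1 _ _ _ (Or.inl hab'), zero_add]
    exact orderSign_cycle_eq_one_or_neg_one ((hs a b).2 ⟨hab', hab⟩) ((hs b c).2 ⟨hbc', hbc⟩)
      ((hs c a).2 ⟨(hab'.trans hbc').symm, hac.symm⟩)
  · rw [he.2.1 _ _ _ (Or.inl hab'), sign_zero hbc',
      sign_zero fun h => hbc' (hab'.symm.trans h.symm)]
    simpa using sign_unit hab' hab
  · rw [he.2.1 _ _ _ (Or.inr (Or.inl hbc')), sign_zero hab',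
      sign_zero fun h => hab' (h.symm.trans hbc'.symm)]
    simpa using sign_unit hbc' hbc
  by_cases hca' : π c = π a
  · rw [he.2.1 _ _ _ (Or.inr (Or.inr hca'.symm)), sign_zero hab', sign_zero hbc']
    simpa using sign_unit hca' hac.symm
  · rw [sign_zero hab', sign_zero hbc', sign_zero hca']
    simpa using he.1 _ _ _ hab' hbc' (Ne.symm hca')

theorem lexCircular_of_degenerate (he : IsLeftCircularOrder e) [Std.Asymm s] {a b c : G}
    (h : a = b ∨ b = c ∨ a = c) : lexCircular π e s a b c = 0 := by
  have h₀ := he.2.1 (π a) (π b) (π c) (by rcases h with rfl | rfl | rfl <;> simp)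
  unfold lexCircular
  rcases h with rfl | rfl | rfl
  · linarith [orderSign_swap (s := s) a a, orderSign_swap (s := s) a c]
  · linarith [orderSign_swap (s := s) b b, orderSign_swap (s := s) a b]
  · linarith [orderSign_swap (s := s) a a, orderSign_swap (s := s) a b]

theorem lexCircular_cocycle (he : IsLeftCircularOrder e) [Std.Asymm s] (g₀ g₁ g₂ g₃ : G) :
    lexCircular π e s g₁ g₂ g₃ - lexCircular π e s g₀ g₂ g₃ + lexCircular π e s g₀ g₁ g₃ -
      lexCircular π e s g₀ g₁ g₂ = 0 := by
  unfold lexCircular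
  linarith [he.2.2.1 (π g₀) (π g₁) (π g₂) (π g₃), orderSign_swap (s := s) g₁ g₃,
    orderSign_swap (s := s) g₀ g₂]

theorem lexCircular_mul_left (he : IsLeftCircularOrder e)
    (hs : ∀ g x y, s x y → s (g * x) (g * y)) (g a b c : G) :
    lexCircular π e s (g * a) (g * b) (g * c) = lexCircular π e s a b c := by
  simp only [lexCircular, map_mul, he.mul_left, orderSign_mul_left hs]

theorem IsLeftCircularOrder.lexCircular (he : IsLeftCircularOrder e) [IsStrictOrder G s]
    (hs_mul : ∀ g x y, s x y → s (g * x) (g * y))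
    (hs_comparable : ∀ x y, s x y ∨ s y x ↔ π x = π y ∧ x ≠ y) :
    IsLeftCircularOrder (lexCircular π e s) :=
  ⟨fun _ _ _ => lexCircular_eq_one_or_neg_one he hs_comparable,
    fun _ _ _ => lexCircular_of_degenerate he, lexCircular_cocycle he,
    fun g a b c _ _ _ => lexCircular_mul_left he hs_mul g a b c⟩

end Lex

namespace Subgroup

variable {G : Type*} [Group G] (K : Subgroup G) (r : K → K → Prop)

def cosetLT (x y : G) : Prop :=
  ∃ k : K, r 1 k ∧ x * k = y

theorem cosetLT_mul_left (g x y : G) : K.cosetLT r (g * x) (g * y) ↔ K.cosetLT r x y := by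
  simp only [cosetLT, mul_assoc, mul_right_inj]

theorem isStrictOrder_cosetLT [IsStrictOrder K r] (hr : ∀ f g h : K, r g h → r (f * g) (f * h)) :
    IsStrictOrder G (K.cosetLT r) where
  irrefl x := by
    rintro ⟨k, hk, hxk⟩
    obtain rfl : k = 1 := Subtype.ext (by simpa using hxk)
    exact irrefl _ hk
  trans x y z := by
    rintro ⟨k, hk, rfl⟩ ⟨l, hl, rfl⟩
    refine ⟨k * l, _root_.trans hk ?_, by simp [mul_assoc]⟩
    simpa using hr k 1 l hl

theorem cosetLT_or_cosetLT_iff [IsStrictTotalOrder K r]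
    (hr : ∀ f g h : K, r g h → r (f * g) (f * h)) (x y : G) :
    K.cosetLT r x y ∨ K.cosetLT r y x ↔ (x : G ⧸ K) = y ∧ x ≠ y := by
  have := K.isStrictOrder_cosetLT r hr
  constructor
  · refine fun h => ⟨?_, ?_⟩
    · rcases h with ⟨k, -, rfl⟩ | ⟨k, -, rfl⟩
      · exact QuotientGroup.eq.2 (by simp)
      · exact (QuotientGroup.eq.2 (by simp)).symm
    · rintro rfl
      exact irrefl x (h.elim id id)
  · rintro ⟨hxy, hne⟩
    set k : K := ⟨x⁻¹ * y, QuotientGroup.eq.1 hxy⟩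
    have hk : x * k = y := by simp [k]
    rcases trichotomous (r := r) 1 k with h | h | h
    · exact Or.inl ⟨k, h, hk⟩
    · exact (hne (by simpa [← h] using hk)).elim
    · exact Or.inr ⟨k⁻¹, by simpa using hr k⁻¹ k 1 h, by simp [← hk]⟩

end Subgroup

/-- If `K` is a normal subgroup of `G` with `G/K` circularly orderable and `K` left-orderable,
then `G` is circularly orderable. -/
theorem circularlyOrderable_of_extension (G : Type*) [Group G] (K : Subgroup G) [K.Normal]
    (hQ : CircularlyOrderable (G ⧸ K)) (hK : LeftOrderable K) : CircularlyOrderable G := by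
  obtain ⟨e, he⟩ := hQ
  obtain ⟨r, hr, hr_mul⟩ := hK
  have := K.isStrictOrder_cosetLT r hr_mul
  exact ⟨_, he.lexCircular (π := QuotientGroup.mk' K)
    (fun g x y => (K.cosetLT_mul_left r g x y).2) (K.cosetLT_or_cosetLT_iff r hr_mul)⟩
end

section
/- The group GL^+(2,R) of invertible 2×2 real matrices with positive determinant is circularly orderable, i.e., it admits a left-invariant circular order. -/
/-!
`GL⁺(2, ℝ)` acts on the circle of rays from the origin and preserves their cyclic order: the cyclic
order of three rays is read off from the signs of their pairwise cross products, which left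
multiplication by `g` scales by `det g > 0`. The stabiliser of the ray `ℝ₊ e₁` consists of the
matrices `!![t, s; 0, u]` with `t, u > 0`, and is left-ordered lexicographically in `(t, u, s)`.
Ordering `g` first by the argument of its first column and then by its position in its coset of the
stabiliser embeds `GL⁺(2, ℝ)` into a linear order so that left multiplication preserves the induced
cyclic order `sbtw`; the sign of `sbtw` on a linear order is a cocycle.
-/

attribute [local instance] LT.toSBtw

open Real
open scoped MatrixGroups

section CyclicOrder

variable {α β : Type*} [LinearOrder α] [LinearOrder β]

theorem ne_of_sbtw {a b c : α} (h : sbtw a b c) : a ≠ b ∧ b ≠ c ∧ a ≠ c := by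
  simp only [sbtw_iff] at h
  grind

theorem sbtw_or_sbtw_of_ne {a b c : α} (hab : a ≠ b) (hbc : b ≠ c) (hac : a ≠ c) :
    sbtw a b c ∨ sbtw c b a := by
  simp only [sbtw_iff]
  grind

open Classical in
noncomputable def cyclicSign (a b c : α) : ℤ :=
  if sbtw a b c then 1 else if sbtw c b a then -1 else 0

theorem cyclicSign_cocycle (a b c d : α) :
    cyclicSign b c d - cyclicSign a c d + cyclicSign a b d - cyclicSign a b c = 0 := by
  simp only [cyclicSign, sbtw_iff]
  split_ifs <;> grind

theorem cyclicSign_eq_one_or_eq_neg_one {a b c : α} (hab : a ≠ b) (hbc : b ≠ c) (hac : a ≠ c) :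
    cyclicSign a b c = 1 ∨ cyclicSign a b c = -1 := by
  unfold cyclicSign
  split_ifs with h₁ h₂
  exacts [.inl rfl, .inr rfl, (h₂ ((sbtw_or_sbtw_of_ne hab hbc hac).resolve_left h₁)).elim]

theorem cyclicSign_eq_zero {a b c : α} (h : a = b ∨ b = c ∨ a = c) : cyclicSign a b c = 0 := by
  simp only [cyclicSign, sbtw_iff]
  grind

theorem isLeftCircularOrder_cyclicSign_comp {G : Type*} [Group G] {f : G → α}
    (hf : Function.Injective f)
    (hf_sbtw : ∀ g a b c, sbtw (f (g * a)) (f (g * b)) (f (g * c)) ↔ sbtw (f a) (f b) (f c)) :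
    IsLeftCircularOrder fun a b c => cyclicSign (f a) (f b) (f c) := by
  refine ⟨fun a b c hab hbc hac => ?_, fun a b c h => ?_, fun _ _ _ _ => cyclicSign_cocycle _ _ _ _,
    fun g a b c _ _ _ => ?_⟩
  · exact cyclicSign_eq_one_or_eq_neg_one (hf.ne hab) (hf.ne hbc) (hf.ne hac)
  · exact cyclicSign_eq_zero (by rcases h with h | h | h <;> simp [h])
  · beta_reduce
    rw [cyclicSign, cyclicSign, hf_sbtw, hf_sbtw]

theorem sbtw_toLex_iff {a₁ a₂ a₃ : α} {b₁ b₂ b₃ : β} :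
    sbtw (toLex (a₁, b₁)) (toLex (a₂, b₂)) (toLex (a₃, b₃)) ↔
      sbtw a₁ a₂ a₃ ∨ (a₁ = a₂ ∧ a₂ ≠ a₃ ∧ b₁ < b₂) ∨ (a₂ = a₃ ∧ a₃ ≠ a₁ ∧ b₂ < b₃) ∨
        (a₃ = a₁ ∧ a₁ ≠ a₂ ∧ b₃ < b₁) ∨ (a₁ = a₂ ∧ a₂ = a₃ ∧ sbtw b₁ b₂ b₃) := by
  simp only [sbtw_iff, Prod.Lex.toLex_lt_toLex]
  grind

theorem sbtw_toLex_mul_iff {G : Type*} [Group G] {p : G → α} {q : G → β}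
    (hp : ∀ g a b, p (g * a) = p (g * b) ↔ p a = p b)
    (hp_sbtw : ∀ g a b c, sbtw (p (g * a)) (p (g * b)) (p (g * c)) ↔ sbtw (p a) (p b) (p c))
    (hq : ∀ g a b, p a = p b → (q (g * a) < q (g * b) ↔ q a < q b)) (g a b c : G) :
    sbtw (toLex (p (g * a), q (g * a))) (toLex (p (g * b), q (g * b)))
        (toLex (p (g * c), q (g * c))) ↔
      sbtw (toLex (p a, q a)) (toLex (p b, q b)) (toLex (p c, q c)) := by
  simp only [sbtw_toLex_iff, ne_eq, hp, hp_sbtw]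
  refine or_congr .rfl (or_congr ?_ (or_congr ?_ (or_congr ?_ ?_)))
  · exact and_congr_right fun h => and_congr_right fun _ => hq g a b h
  · exact and_congr_right fun h => and_congr_right fun _ => hq g b c h
  · exact and_congr_right fun h => and_congr_right fun _ => hq g c a h
  · refine and_congr_right fun h₁ => and_congr_right fun h₂ => ?_
    simp only [sbtw_iff, hq g a b h₁, hq g b c h₂, hq g c a (h₁.trans h₂).symm]

theorem CircularlyOrderable.of_toLex {G : Type*} [Group G] (p : G → α) (q : G → β)
    (hpq : Function.Injective fun g => toLex (p g, q g))
    (hp : ∀ g a b, p (g * a) = p (g * b) ↔ p a = p b)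
    (hp_sbtw : ∀ g a b c, sbtw (p (g * a)) (p (g * b)) (p (g * c)) ↔ sbtw (p a) (p b) (p c))
    (hq : ∀ g a b, p a = p b → (q (g * a) < q (g * b) ↔ q a < q b)) :
    CircularlyOrderable G :=
  ⟨_, isLeftCircularOrder_cyclicSign_comp hpq (sbtw_toLex_mul_iff hp hp_sbtw hq)⟩

end CyclicOrder

theorem SignType.neg_one_le_cast (s : SignType) : -1 ≤ (s : ℤ) := by
  cases s <;> decide

noncomputable def sinOrientation (θ₁ θ₂ θ₃ : ℝ) : ℤ :=
  SignType.sign (sin (θ₂ - θ₁)) + SignType.sign (sin (θ₃ - θ₂)) + SignType.sign (sin (θ₁ - θ₃))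

theorem sinOrientation_rotate (θ₁ θ₂ θ₃ : ℝ) :
    sinOrientation θ₂ θ₃ θ₁ = sinOrientation θ₁ θ₂ θ₃ := by
  unfold sinOrientation
  ring

theorem sinOrientation_swap (θ₁ θ₂ θ₃ : ℝ) :
    sinOrientation θ₃ θ₂ θ₁ = -sinOrientation θ₁ θ₂ θ₃ := by
  simp only [sinOrientation, ← neg_sub θ₂ θ₁, ← neg_sub θ₃ θ₂, ← neg_sub θ₁ θ₃, sin_neg,
    Left.sign_neg, SignType.coe_neg]
  ring

theorem sinOrientation_pos {θ₁ θ₂ θ₃ : ℝ} (h₁ : -π < θ₁) (h₁₂ : θ₁ < θ₂) (h₂₃ : θ₂ < θ₃)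
    (h₃ : θ₃ ≤ π) : 0 < sinOrientation θ₁ θ₂ θ₃ := by
  have sign_sin {x : ℝ} (h0 : 0 < x) (hπ : x < π) : (SignType.sign (sin x) : ℤ) = 1 := by
    rw [sign_pos (sin_pos_of_pos_of_lt_pi h0 hπ), SignType.coe_one]
  have lb (x : ℝ) := SignType.neg_one_le_cast (SignType.sign (sin x))
  unfold sinOrientation
  by_cases hπ : θ₃ - θ₁ ≤ π
  · rw [sign_sin (x := θ₂ - θ₁) (by linarith) (by linarith),
      sign_sin (x := θ₃ - θ₂) (by linarith) (by linarith)]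
    linarith [lb (θ₁ - θ₃)]
  · -- Now `sin (θ₁ - θ₃) > 0`, and at most one of the gaps `θ₂ - θ₁`, `θ₃ - θ₂` reaches `π`.
    rw [← sin_add_two_pi (θ₁ - θ₃), sign_sin (x := θ₁ - θ₃ + 2 * π) (by linarith) (by linarith)]
    rcases lt_or_ge (θ₂ - θ₁) π with h | h
    · rw [sign_sin (x := θ₂ - θ₁) (by linarith) h]
      linarith [lb (θ₃ - θ₂)]
    · rw [sign_sin (x := θ₃ - θ₂) (by linarith) (by linarith)]
      linarith [lb (θ₂ - θ₁)]

theorem sbtw_iff_sinOrientation_pos {θ₁ θ₂ θ₃ : ℝ} (h₁ : θ₁ ∈ Set.Ioc (-π) π)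
    (h₂ : θ₂ ∈ Set.Ioc (-π) π) (h₃ : θ₃ ∈ Set.Ioc (-π) π) (h₁₂ : θ₁ ≠ θ₂) (h₂₃ : θ₂ ≠ θ₃)
    (h₁₃ : θ₁ ≠ θ₃) : sbtw θ₁ θ₂ θ₃ ↔ 0 < sinOrientation θ₁ θ₂ θ₃ := by
  have pos_of_sbtw {a b c : ℝ} (ha : a ∈ Set.Ioc (-π) π) (hb : b ∈ Set.Ioc (-π) π)
      (hc : c ∈ Set.Ioc (-π) π) (h : sbtw a b c) : 0 < sinOrientation a b c := by
    rcases h with ⟨hab, hbc⟩ | ⟨hbc, hca⟩ | ⟨hca, hab⟩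
    · exact sinOrientation_pos ha.1 hab hbc hc.2
    · rw [← sinOrientation_rotate]
      exact sinOrientation_pos hb.1 hbc hca ha.2
    · rw [← sinOrientation_rotate, ← sinOrientation_rotate]
      exact sinOrientation_pos hc.1 hca hab hb.2
  refine ⟨pos_of_sbtw h₁ h₂ h₃, fun h =>
    (sbtw_or_sbtw_of_ne h₁₂ h₂₃ h₁₃).resolve_right fun h' => ?_⟩
  have := pos_of_sbtw h₃ h₂ h₁ h'
  rw [sinOrientation_swap] at this
  omega

def cross (z w : ℂ) : ℝ := z.re * w.im - z.im * w.re

theorem cross_eq_mul_sin {z w : ℂ} (hz : z ≠ 0) (hw : w ≠ 0) :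
    cross z w = ‖z‖ * ‖w‖ * sin (w.arg - z.arg) := by
  rw [sin_sub, Complex.sin_arg, Complex.sin_arg, Complex.cos_arg hz, Complex.cos_arg hw]
  field_simp
  unfold cross
  ring

theorem sign_cross {z w : ℂ} (hz : z ≠ 0) (hw : w ≠ 0) :
    SignType.sign (cross z w) = SignType.sign (sin (w.arg - z.arg)) := by
  rw [cross_eq_mul_sin hz hw, sign_mul, sign_pos (by positivity), one_mul]

theorem sbtw_arg_iff {z₁ z₂ z₃ : ℂ} (h₁ : z₁ ≠ 0) (h₂ : z₂ ≠ 0) (h₃ : z₃ ≠ 0)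
    (h₁₂ : z₁.arg ≠ z₂.arg) (h₂₃ : z₂.arg ≠ z₃.arg) (h₁₃ : z₁.arg ≠ z₃.arg) :
    sbtw z₁.arg z₂.arg z₃.arg ↔
      0 < (SignType.sign (cross z₁ z₂) : ℤ) + SignType.sign (cross z₂ z₃) +
        SignType.sign (cross z₃ z₁) := by
  rw [sbtw_iff_sinOrientation_pos (Complex.arg_mem_Ioc z₁) (Complex.arg_mem_Ioc z₂)
    (Complex.arg_mem_Ioc z₃) h₁₂ h₂₃ h₁₃, sinOrientation, sign_cross h₁ h₂, sign_cross h₂ h₃,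
    sign_cross h₃ h₁]

section Matrices

open Matrix

def firstCol (A : Matrix (Fin 2) (Fin 2) ℝ) : ℂ := ⟨A 0 0, A 1 0⟩

theorem firstCol_ne_zero {A : Matrix (Fin 2) (Fin 2) ℝ} (hA : A.det ≠ 0) : firstCol A ≠ 0 := by
  intro h
  simp only [firstCol, Complex.ext_iff, Complex.zero_re, Complex.zero_im] at h
  simp [det_fin_two, h] at hA

theorem cross_firstCol_mul (G A B : Matrix (Fin 2) (Fin 2) ℝ) :
    cross (firstCol (G * A)) (firstCol (G * B)) = G.det * cross (firstCol A) (firstCol B) := by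
  simp only [cross, firstCol, mul_apply, Fin.sum_univ_two, det_fin_two]
  ring

def FixesFirstRay (H : Matrix (Fin 2) (Fin 2) ℝ) : Prop := H 1 0 = 0 ∧ 0 < H 0 0

theorem fixesFirstRay_one : FixesFirstRay 1 := by
  simp [FixesFirstRay]

theorem arg_firstCol_mul_eq_iff {A H : Matrix (Fin 2) (Fin 2) ℝ} (hA : A.det ≠ 0)
    (hAH : (A * H).det ≠ 0) : (firstCol (A * H)).arg = (firstCol A).arg ↔ FixesFirstRay H := by
  constructor
  · intro h
    rw [eq_comm, Complex.arg_eq_arg_iff (firstCol_ne_zero hA) (firstCol_ne_zero hAH),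
      ← Complex.ofReal_div] at h
    have hr : 0 < ‖firstCol (A * H)‖ / ‖firstCol A‖ :=
      div_pos (norm_pos_iff.2 (firstCol_ne_zero hAH)) (norm_pos_iff.2 (firstCol_ne_zero hA))
    generalize ‖firstCol (A * H)‖ / ‖firstCol A‖ = r at h hr
    simp only [firstCol, Complex.ext_iff, Complex.re_ofReal_mul, Complex.im_ofReal_mul, mul_apply,
      Fin.sum_univ_two] at h
    have hv : A *ᵥ ![H 0 0 - r, H 1 0] = 0 := by
      ext i
      fin_cases i <;> simp [mulVec, dotProduct, Fin.sum_univ_two] <;> linarith [h.1, h.2]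
    have h₀ := congrFun (eq_zero_of_mulVec_eq_zero hA hv) 0
    have h₁ := congrFun (eq_zero_of_mulVec_eq_zero hA hv) 1
    simp only [Fin.isValue, Matrix.cons_val_zero, Matrix.cons_val_one, Pi.zero_apply] at h₀ h₁
    exact ⟨h₁, by linarith⟩
  · rintro ⟨h₁₀, h₀₀⟩
    have : firstCol (A * H) = (H 0 0 : ℂ) * firstCol A := by
      simp [firstCol, Complex.ext_iff, mul_apply, Fin.sum_univ_two, h₁₀, mul_comm]
    rw [this, Complex.arg_real_mul _ h₀₀]

def upperKey (H : Matrix (Fin 2) (Fin 2) ℝ) : ℝ ×ₗ ℝ ×ₗ ℝ := toLex (H 0 0, toLex (H 1 1, H 0 1))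

theorem eq_of_upperKey_eq {H H' : Matrix (Fin 2) (Fin 2) ℝ} (hH : H 1 0 = 0) (hH' : H' 1 0 = 0)
    (h : upperKey H = upperKey H') : H = H' := by
  simp only [upperKey, toLex_inj, Prod.mk.injEq] at h
  ext i j
  fin_cases i <;> fin_cases j <;> simp [h, hH, hH']

def cosetKey (A : Matrix (Fin 2) (Fin 2) ℝ) : ℝ ×ₗ ℝ ×ₗ ℝ :=
  toLex (Complex.normSq (firstCol A), toLex (A.det, A 0 0 * A 0 1 + A 1 0 * A 1 1))

theorem cosetKey_mul {A H : Matrix (Fin 2) (Fin 2) ℝ} (hH : H 1 0 = 0) :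
    cosetKey (A * H) = toLex (H 0 0 ^ 2 * Complex.normSq (firstCol A),
      toLex (H 0 0 * H 1 1 * A.det,
        H 0 0 * (H 0 1 * Complex.normSq (firstCol A) + H 1 1 * (A 0 0 * A 0 1 + A 1 0 * A 1 1)))) := by
  simp only [cosetKey, firstCol, Complex.normSq_mk, det_mul, det_fin_two H, mul_apply,
    Fin.sum_univ_two, hH, toLex_inj, Prod.mk.injEq]
  exact ⟨by ring, by ring, by ring⟩

theorem cosetKey_mul_lt_mul {A H H' : Matrix (Fin 2) (Fin 2) ℝ} (hA : 0 < A.det)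
    (hH : FixesFirstRay H) (hH' : FixesFirstRay H') (h : upperKey H < upperKey H') :
    cosetKey (A * H) < cosetKey (A * H') := by
  have hN : 0 < Complex.normSq (firstCol A) := Complex.normSq_pos.2 (firstCol_ne_zero hA.ne')
  have ht := hH.2
  have ht' := hH'.2
  rw [cosetKey_mul hH.1, cosetKey_mul hH'.1]
  simp only [upperKey, Prod.Lex.toLex_lt_toLex] at h ⊢
  rcases h with h | ⟨e₁, h | ⟨e₂, h⟩⟩
  · exact .inl (by gcongr)
  · rw [e₁]
    exact .inr ⟨rfl, .inl (by gcongr)⟩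
  · rw [e₁, e₂]
    exact .inr ⟨rfl, .inr ⟨rfl, by gcongr⟩⟩

theorem cosetKey_mul_lt_mul_iff {A H H' : Matrix (Fin 2) (Fin 2) ℝ} (hA : 0 < A.det)
    (hH : FixesFirstRay H) (hH' : FixesFirstRay H') :
    cosetKey (A * H) < cosetKey (A * H') ↔ upperKey H < upperKey H' := by
  refine ⟨fun h => ?_, cosetKey_mul_lt_mul hA hH hH'⟩
  rcases lt_trichotomy (upperKey H) (upperKey H') with hlt | heq | hgt
  · exact hlt
  · rw [eq_of_upperKey_eq hH.1 hH'.1 heq] at h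
    exact absurd h (lt_irrefl _)
  · exact absurd h (cosetKey_mul_lt_mul hA hH' hH hgt).asymm

theorem eq_of_cosetKey_mul_eq {A H H' : Matrix (Fin 2) (Fin 2) ℝ} (hA : 0 < A.det)
    (hH : FixesFirstRay H) (hH' : FixesFirstRay H') (h : cosetKey (A * H) = cosetKey (A * H')) :
    H = H' := by
  refine eq_of_upperKey_eq hH.1 hH'.1 (le_antisymm ?_ ?_) <;> refine not_lt.1 fun hlt => ?_
  · exact (cosetKey_mul_lt_mul hA hH' hH hlt).ne h.symm
  · exact (cosetKey_mul_lt_mul hA hH hH' hlt).ne h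

end Matrices

local notation:1024 "↑ₘ" g:1024 => (((g : GL(2, ℝ)⁺) : GL (Fin 2) ℝ) : Matrix (Fin 2) (Fin 2) ℝ)

noncomputable def rayArg (g : GL(2, ℝ)⁺) : ℝ := (firstCol ↑ₘg).arg

theorem rayArg_mul_eq_iff (a h : GL(2, ℝ)⁺) : rayArg (a * h) = rayArg a ↔ FixesFirstRay ↑ₘh := by
  simpa [rayArg] using arg_firstCol_mul_eq_iff (Matrix.GLPos.det_ne_zero a)
    (by simpa using Matrix.GLPos.det_ne_zero (a * h))

theorem rayArg_eq_iff (a b : GL(2, ℝ)⁺) : rayArg b = rayArg a ↔ FixesFirstRay ↑ₘ(a⁻¹ * b) := by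
  rw [← rayArg_mul_eq_iff, mul_inv_cancel_left]

theorem rayArg_mul_eq_mul_iff (g a b : GL(2, ℝ)⁺) :
    rayArg (g * a) = rayArg (g * b) ↔ rayArg a = rayArg b := by
  rw [eq_comm, rayArg_eq_iff, eq_comm, rayArg_eq_iff, mul_inv_rev, mul_assoc, inv_mul_cancel_left]

theorem sbtw_rayArg_iff {a b c : GL(2, ℝ)⁺} (hab : rayArg a ≠ rayArg b)
    (hbc : rayArg b ≠ rayArg c) (hac : rayArg a ≠ rayArg c) :
    sbtw (rayArg a) (rayArg b) (rayArg c) ↔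
      0 < (SignType.sign (cross (firstCol ↑ₘa) (firstCol ↑ₘb)) : ℤ) +
        SignType.sign (cross (firstCol ↑ₘb) (firstCol ↑ₘc)) +
          SignType.sign (cross (firstCol ↑ₘc) (firstCol ↑ₘa)) :=
  sbtw_arg_iff (firstCol_ne_zero (Matrix.GLPos.det_ne_zero a))
    (firstCol_ne_zero (Matrix.GLPos.det_ne_zero b)) (firstCol_ne_zero (Matrix.GLPos.det_ne_zero c))
    hab hbc hac

theorem sbtw_rayArg_mul_iff (g a b c : GL(2, ℝ)⁺) :
    sbtw (rayArg (g * a)) (rayArg (g * b)) (rayArg (g * c)) ↔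
      sbtw (rayArg a) (rayArg b) (rayArg c) := by
  by_cases hd : rayArg a ≠ rayArg b ∧ rayArg b ≠ rayArg c ∧ rayArg a ≠ rayArg c
  · obtain ⟨hab, hbc, hac⟩ := hd
    rw [sbtw_rayArg_iff hab hbc hac, sbtw_rayArg_iff (by rwa [ne_eq, rayArg_mul_eq_mul_iff])
      (by rwa [ne_eq, rayArg_mul_eq_mul_iff]) (by rwa [ne_eq, rayArg_mul_eq_mul_iff])]
    have hg : SignType.sign (↑ₘg).det = 1 := sign_pos g.prop
    simp only [Subgroup.coe_mul, Units.val_mul, cross_firstCol_mul, sign_mul, hg, one_mul]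
  · have hd' : ¬(rayArg (g * a) ≠ rayArg (g * b) ∧ rayArg (g * b) ≠ rayArg (g * c) ∧
        rayArg (g * a) ≠ rayArg (g * c)) := by
      simpa only [ne_eq, rayArg_mul_eq_mul_iff] using hd
    exact iff_of_false (fun h => hd' (ne_of_sbtw h)) (fun h => hd (ne_of_sbtw h))

theorem cosetKey_mul_lt_mul_iff_of_rayArg_eq {a b : GL(2, ℝ)⁺} (hab : rayArg a = rayArg b)
    (g : GL(2, ℝ)⁺) : cosetKey ↑ₘ(g * a) < cosetKey ↑ₘ(g * b) ↔ cosetKey ↑ₘa < cosetKey ↑ₘb := by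
  obtain ⟨h, rfl⟩ : ∃ h, b = a * h := ⟨a⁻¹ * b, (mul_inv_cancel_left a b).symm⟩
  have hh := (rayArg_mul_eq_iff a h).1 hab.symm
  have key (x : GL(2, ℝ)⁺) : cosetKey ↑ₘx < cosetKey ↑ₘ(x * h) ↔ upperKey 1 < upperKey ↑ₘh := by
    simpa using cosetKey_mul_lt_mul_iff x.prop fixesFirstRay_one hh
  rw [← mul_assoc, key, key]

theorem injective_rayArg_cosetKey :
    Function.Injective fun g : GL(2, ℝ)⁺ => toLex (rayArg g, cosetKey ↑ₘg) := by
  intro a b hab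
  simp only [toLex_inj, Prod.mk.injEq] at hab
  obtain ⟨h, rfl⟩ : ∃ h, b = a * h := ⟨a⁻¹ * b, (mul_inv_cancel_left a b).symm⟩
  have hh := (rayArg_mul_eq_iff a h).1 hab.1.symm
  have h₁ : 1 = ↑ₘh := eq_of_cosetKey_mul_eq a.prop fixesFirstRay_one hh (by simpa using hab.2)
  rw [show h = 1 from Subtype.ext (Units.ext h₁.symm), mul_one]

/-- The group `GL⁺(2, ℝ)` of 2×2 real matrices with positive determinant is circularly
orderable. -/
theorem glPos_two_circularlyOrderable :
    CircularlyOrderable (Matrix.GLPos (Fin 2) ℝ) :=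
  CircularlyOrderable.of_toLex rayArg (fun g => cosetKey ↑ₘg) injective_rayArg_cosetKey
    rayArg_mul_eq_mul_iff sbtw_rayArg_mul_iff
    fun g _ _ h => cosetKey_mul_lt_mul_iff_of_rayArg_eq h g
end

section
/- For every n ≥ 1, the group Homeo(I^n, ∂I^n) is not bi-orderable. -/
open Set

namespace Stmt

/-- The `n`-cube `[-1,1]^n`. -/
abbrev Cube (n : ℕ) : Type := Fin n → (Set.Icc (-1 : ℝ) 1)

/-- The boundary `∂Iⁿ`: points having some coordinate equal to `1` or `-1`. -/
def cubeBoundary (n : ℕ) : Set (Cube n) :=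
  {p | ∃ i : Fin n, (p i : ℝ) = 1 ∨ (p i : ℝ) = -1}

/-- The group of homeomorphisms of the `n`-cube fixing the boundary pointwise,
realized as a subgroup of the group of bijections of the cube. -/
def HomeoCube (n : ℕ) : Subgroup (Equiv.Perm (Cube n)) where
  carrier := {f | Continuous f ∧ Continuous f.symm ∧ ∀ p ∈ cubeBoundary n, f p = p}
  one_mem' := ⟨continuous_id, continuous_id, fun _ _ => rfl⟩
  mul_mem' := by
    rintro a b ⟨ha1, ha2, ha3⟩ ⟨hb1, hb2, hb3⟩
    refine ⟨ha1.comp hb1, by exact hb2.comp ha2, fun p hp => ?_⟩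
    show a (b p) = p
    rw [hb3 p hp, ha3 p hp]
  inv_mem' := by
    rintro a ⟨ha1, ha2, ha3⟩
    refine ⟨ha2, by exact ha1, fun p hp => ?_⟩
    show a.symm p = p
    rw [Equiv.symm_apply_eq, ha3 p hp]

/-- A group `G` is bi-orderable if there is a strict total order `<` on `G` such that
`g < h` implies both `f*g < f*h` and `g*f < h*f` for all `f, g, h`. -/
def BiOrderable (G : Type*) [Group G] : Prop :=
  ∃ r : G → G → Prop, IsStrictTotalOrder G r ∧
    ∀ f g h : G, r g h → r (f * g) (f * h) ∧ r (g * f) (h * f)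

/-!
Let `a` be the translation `x ↦ x + 1` and `z` the homeomorphism of `ℝ` that squares the
fractional part on `[k, k + 1)` for even `k` and takes its square root for odd `k`; then
`a z a⁻¹ = z⁻¹`. In a bi-ordered group conjugation preserves the sign of an element and inversion
reverses it, so this relation forces `z = 1`.

Homeomorphisms `f` of `ℝ` with bounded displacement `|f x - x| ≤ C` embed into `Homeo(Iⁿ, ∂Iⁿ)`:
identify `(-1, 1)` with `ℝ` through `x ↦ x / (1 + |x|)` and let `f`, conjugated by the dilation
by `λ(p) = ∏_{j ≠ i} (1 - p_j²)`, act on the `i`-th coordinate of `p`. This moves `p` by at most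
`2 C λ(p) (1 - |p_i|)`, which vanishes on `∂Iⁿ`, so the map extends continuously by the identity.
-/

theorem BiOrderable.eq_one_of_mul_mul_inv_eq_inv {G : Type*} [Group G] (hG : BiOrderable G)
    {a b : G} (hab : a * b * a⁻¹ = b⁻¹) : b = 1 := by
  obtain ⟨r, hr, hmul⟩ := hG
  have conj {g h : G} (hgh : r g h) : r (a * g * a⁻¹) (a * h * a⁻¹) :=
    (hmul a⁻¹ _ _ (hmul a g h hgh).1).2
  have inv {g h : G} (hgh : r g h) : r h⁻¹ g⁻¹ := by
    simpa using (hmul h⁻¹ _ _ (hmul g⁻¹ g h hgh).1).2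
  rcases trichotomous_of r b 1 with hb | hb | hb
  · exact (asymm_of r (by simpa [hab] using conj hb) (by simpa using inv hb)).elim
  · exact hb
  · exact (asymm_of r (by simpa [hab] using conj hb) (by simpa using inv hb)).elim

theorem fract_mem_Ico (x : ℝ) : Int.fract x ∈ Ico 0 1 :=
  ⟨Int.fract_nonneg x, Int.fract_lt_one x⟩

noncomputable def floorwise (φ : ℤ → ℝ → ℝ) (x : ℝ) : ℝ := ⌊x⌋ + φ ⌊x⌋ (Int.fract x)

section floorwise

variable {φ ψ : ℤ → ℝ → ℝ}

theorem floorwise_mem_Ico (hφ : ∀ k, MapsTo (φ k) (Ico 0 1) (Ico 0 1)) (x : ℝ) :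
    floorwise φ x ∈ Ico (⌊x⌋ : ℝ) (⌊x⌋ + 1) := by
  obtain ⟨h0, h1⟩ := hφ ⌊x⌋ (fract_mem_Ico x)
  unfold floorwise
  constructor <;> linarith

theorem floor_floorwise (hφ : ∀ k, MapsTo (φ k) (Ico 0 1) (Ico 0 1)) (x : ℝ) :
    ⌊floorwise φ x⌋ = ⌊x⌋ :=
  Int.floor_eq_iff.mpr (floorwise_mem_Ico hφ x)

theorem fract_floorwise (hφ : ∀ k, MapsTo (φ k) (Ico 0 1) (Ico 0 1)) (x : ℝ) :
    Int.fract (floorwise φ x) = φ ⌊x⌋ (Int.fract x) := by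
  rw [← Int.self_sub_floor, floor_floorwise hφ, floorwise, add_sub_cancel_left]

theorem floorwise_floorwise_of_leftInvOn (hφ : ∀ k, MapsTo (φ k) (Ico 0 1) (Ico 0 1))
    (hψφ : ∀ k, LeftInvOn (ψ k) (φ k) (Ico 0 1)) (x : ℝ) :
    floorwise ψ (floorwise φ x) = x := by
  rw [floorwise, floor_floorwise hφ, fract_floorwise hφ,
    hψφ _ (fract_mem_Ico x), Int.floor_add_fract]

theorem floorwise_sub_intCast (m : ℤ) (x : ℝ) :
    floorwise φ (x - m) = floorwise (fun k => φ (k - m)) x - m := by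
  simp only [floorwise, Int.floor_sub_intCast, Int.fract_sub_intCast, Int.cast_sub]
  ring

theorem abs_floorwise_sub_le (hφ : ∀ k, MapsTo (φ k) (Ico 0 1) (Ico 0 1)) (x : ℝ) :
    |floorwise φ x - x| ≤ 1 := by
  have hφx := floorwise_mem_Ico hφ x
  rw [abs_le]
  constructor <;> linarith [hφx.1, hφx.2, Int.floor_le x, Int.lt_floor_add_one x]

theorem monotone_floorwise (hφ : ∀ k, MapsTo (φ k) (Ico 0 1) (Ico 0 1))
    (hmono : ∀ k, MonotoneOn (φ k) (Ico 0 1)) : Monotone (floorwise φ) := by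
  intro x y hxy
  rcases (Int.floor_mono hxy).eq_or_lt with heq | hlt
  · have hfract : Int.fract x ≤ Int.fract y := by
      rw [← Int.self_sub_floor, ← Int.self_sub_floor, heq]; linarith
    rw [floorwise, floorwise, heq]
    gcongr
    exact hmono _ (fract_mem_Ico x) (fract_mem_Ico y) hfract
  · have hx := (floorwise_mem_Ico hφ x).2
    have hy := (floorwise_mem_Ico hφ y).1
    have : (⌊x⌋ : ℝ) + 1 ≤ ⌊y⌋ := by exact_mod_cast hlt
    linarith

end floorwise

theorem mapsTo_sq_Ico : MapsTo (· ^ 2 : ℝ → ℝ) (Ico 0 1) (Ico 0 1) :=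
  fun _ ⟨h0, h1⟩ => ⟨by positivity, by nlinarith⟩

theorem mapsTo_sqrt_Ico : MapsTo Real.sqrt (Ico 0 1) (Ico 0 1) :=
  fun _ ⟨h0, h1⟩ => ⟨Real.sqrt_nonneg _, by simpa using Real.sqrt_lt_sqrt h0 h1⟩

noncomputable def sqOrSqrt (k : ℤ) : ℝ → ℝ := if Even k then (· ^ 2) else Real.sqrt

noncomputable def sqrtOrSq (k : ℤ) : ℝ → ℝ := if Even k then Real.sqrt else (· ^ 2)

theorem sqOrSqrt_sub_one (k : ℤ) : sqOrSqrt (k - 1) = sqrtOrSq k := by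
  by_cases hk : Even k <;> simp [sqOrSqrt, sqrtOrSq, hk]

theorem mapsTo_sqOrSqrt (k : ℤ) : MapsTo (sqOrSqrt k) (Ico 0 1) (Ico 0 1) := by
  unfold sqOrSqrt; split_ifs; exacts [mapsTo_sq_Ico, mapsTo_sqrt_Ico]

theorem mapsTo_sqrtOrSq (k : ℤ) : MapsTo (sqrtOrSq k) (Ico 0 1) (Ico 0 1) := by
  unfold sqrtOrSq; split_ifs; exacts [mapsTo_sqrt_Ico, mapsTo_sq_Ico]

theorem monotoneOn_sqOrSqrt (k : ℤ) : MonotoneOn (sqOrSqrt k) (Ico 0 1) := by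
  unfold sqOrSqrt; split_ifs
  exacts [fun a ha _ _ hab => pow_le_pow_left₀ ha.1 hab 2, Real.sqrt_monotone.monotoneOn _]

theorem monotoneOn_sqrtOrSq (k : ℤ) : MonotoneOn (sqrtOrSq k) (Ico 0 1) := by
  unfold sqrtOrSq; split_ifs
  exacts [Real.sqrt_monotone.monotoneOn _, fun a ha _ _ hab => pow_le_pow_left₀ ha.1 hab 2]

theorem leftInvOn_sqrtOrSq_sqOrSqrt (k : ℤ) : LeftInvOn (sqrtOrSq k) (sqOrSqrt k) (Ico 0 1) := by
  unfold sqOrSqrt sqrtOrSq; split_ifs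
  exacts [fun t ht => Real.sqrt_sq ht.1, fun t ht => Real.sq_sqrt ht.1]

theorem leftInvOn_sqOrSqrt_sqrtOrSq (k : ℤ) : LeftInvOn (sqOrSqrt k) (sqrtOrSq k) (Ico 0 1) := by
  unfold sqOrSqrt sqrtOrSq; split_ifs
  exacts [fun t ht => Real.sq_sqrt ht.1, fun t ht => Real.sqrt_sq ht.1]

noncomputable def zigzag : ℝ ≃ₜ ℝ :=
  OrderIso.toHomeomorph <| Equiv.toOrderIso
    ⟨floorwise sqOrSqrt, floorwise sqrtOrSq,
      floorwise_floorwise_of_leftInvOn mapsTo_sqOrSqrt leftInvOn_sqrtOrSq_sqOrSqrt,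
      floorwise_floorwise_of_leftInvOn mapsTo_sqrtOrSq leftInvOn_sqOrSqrt_sqrtOrSq⟩
    (monotone_floorwise mapsTo_sqOrSqrt monotoneOn_sqOrSqrt)
    (monotone_floorwise mapsTo_sqrtOrSq monotoneOn_sqrtOrSq)

theorem addRight_one_mul_zigzag_mul_inv :
    Homeomorph.addRight 1 * zigzag * (Homeomorph.addRight 1)⁻¹ = zigzag⁻¹ := by
  ext x
  have h := floorwise_sub_intCast (φ := sqOrSqrt) 1 x
  simp only [Int.cast_one, sqOrSqrt_sub_one] at h
  change floorwise sqOrSqrt (x + -1) + 1 = floorwise sqrtOrSq x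
  rw [← sub_eq_add_neg, h, sub_add_cancel]

theorem zigzag_ne_one : zigzag ≠ 1 := by
  intro h
  have h' := congr($h (1 / 2))
  change floorwise sqOrSqrt (1 / 2) = 1 / 2 at h'
  norm_num [floorwise, ← Int.self_sub_floor, sqOrSqrt] at h'

def boundedDisplacement : Subgroup (ℝ ≃ₜ ℝ) where
  carrier := {f | ∃ C, ∀ x, |f x - x| ≤ C}
  one_mem' := ⟨0, fun x => by simp⟩
  mul_mem' := by
    rintro f g ⟨C, hf⟩ ⟨D, hg⟩
    refine ⟨C + D, fun x => ?_⟩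
    calc |f (g x) - x| ≤ |f (g x) - g x| + |g x - x| := abs_sub_le _ _ _
      _ ≤ C + D := add_le_add (hf _) (hg _)
  inv_mem' := by
    rintro f ⟨C, hf⟩
    exact ⟨C, fun x => by simpa [abs_sub_comm] using hf (f.symm x)⟩

theorem addRight_mem_boundedDisplacement (a : ℝ) :
    Homeomorph.addRight a ∈ boundedDisplacement :=
  ⟨|a|, fun x => by simp⟩

theorem zigzag_mem_boundedDisplacement : zigzag ∈ boundedDisplacement :=
  ⟨1, abs_floorwise_sub_le mapsTo_sqOrSqrt⟩

noncomputable def squash (x : ℝ) : ℝ := x / (1 + |x|)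

noncomputable def unsquash (y : ℝ) : ℝ := y / (1 - |y|)

theorem abs_squash (x : ℝ) : |squash x| = |x| / (1 + |x|) := by
  rw [squash, abs_div, abs_of_pos (by positivity : (0 : ℝ) < 1 + |x|)]

theorem one_sub_abs_squash (x : ℝ) : 1 - |squash x| = 1 / (1 + |x|) := by
  rw [abs_squash]; field_simp; ring

theorem abs_squash_lt_one (x : ℝ) : |squash x| < 1 := by
  linarith [one_sub_abs_squash x, show 0 < 1 / (1 + |x|) by positivity]

theorem unsquash_squash (x : ℝ) : unsquash (squash x) = x := by
  rw [unsquash, one_sub_abs_squash, squash]; field_simp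

theorem squash_unsquash {y : ℝ} (hy : |y| < 1) : squash (unsquash y) = y := by
  have hy' : 0 < 1 - |y| := by linarith
  rw [squash, unsquash, abs_div, abs_of_pos hy']
  field_simp
  ring

theorem squash_injective : Function.Injective squash :=
  Function.LeftInverse.injective unsquash_squash

theorem continuous_squash : Continuous squash :=
  continuous_id.div (by fun_prop) fun x => by positivity

theorem continuousAt_unsquash {y : ℝ} (hy : |y| < 1) : ContinuousAt unsquash y :=
  continuousAt_id.div (by fun_prop) (by linarith)

theorem abs_squash_sub_squash_le (w x : ℝ) :
    |squash w - squash x| ≤ 2 * |w - x| * (1 - |squash x|) := by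
  have hw : 0 < 1 + |w| := by positivity
  have hx : 0 < 1 + |x| := by positivity
  -- The numerator is `w - x + (w * |x| - x * |w|)`, and the second term vanishes unless `w` and
  -- `x` have opposite signs, in which case `|w| + |x| = |w - x|`.
  have key : |w * (1 + |x|) - (1 + |w|) * x| ≤ 2 * |w - x| * (1 + |w|) := by
    rcases le_total 0 w with hw0 | hw0 <;> rcases le_total 0 x with hx0 | hx0 <;>
      simp only [abs_of_nonneg, abs_of_nonpos, hw0, hx0] <;>
      rw [abs_le] <;> constructor <;> cases abs_cases (w - x) <;> nlinarith
  rw [one_sub_abs_squash, squash, squash, div_sub_div _ _ hw.ne' hx.ne', abs_div,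
    abs_of_pos (mul_pos hw hx), div_le_iff₀ (mul_pos hw hx)]
  calc _ ≤ 2 * |w - x| * (1 + |w|) := key
    _ = _ := by field_simp

/-- `f` conjugated by `x ↦ squash (l * x)`, a bijection `ℝ → (-1, 1)` when `0 < l`, and extended
by the identity. -/
noncomputable def scaledConj (f : ℝ → ℝ) (l y : ℝ) : ℝ :=
  if 0 < l ∧ |y| < 1 then squash (l * f (unsquash y / l)) else y

section scaledConj

variable {f g : ℝ → ℝ} {l y : ℝ}

theorem scaledConj_of_not (h : ¬(0 < l ∧ |y| < 1)) : scaledConj f l y = y := if_neg h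

theorem scaledConj_squash (hl : 0 < l) (x : ℝ) :
    scaledConj f l (squash (l * x)) = squash (l * f x) := by
  rw [scaledConj, if_pos ⟨hl, abs_squash_lt_one _⟩, unsquash_squash, mul_div_cancel_left₀ _ hl.ne']

theorem scaledConj_scaledConj : scaledConj f l (scaledConj g l y) = scaledConj (f ∘ g) l y := by
  by_cases h : 0 < l ∧ |y| < 1
  · have hg : scaledConj g l y = squash (l * g (unsquash y / l)) := if_pos h
    rw [hg, scaledConj_squash h.1]
    exact (if_pos h).symm
  · rw [scaledConj_of_not h, scaledConj_of_not h, scaledConj_of_not h]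

theorem scaledConj_id : scaledConj id l y = y := by
  by_cases h : 0 < l ∧ |y| < 1
  · rw [scaledConj, if_pos h, id, mul_div_cancel₀ _ h.1.ne', squash_unsquash h.2]
  · exact scaledConj_of_not h

theorem abs_scaledConj_le_one (hy : |y| ≤ 1) : |scaledConj f l y| ≤ 1 := by
  unfold scaledConj; split_ifs
  exacts [(abs_squash_lt_one _).le, hy]

theorem abs_scaledConj_sub_le {C : ℝ} (hf : ∀ x, |f x - x| ≤ C) (hl : 0 ≤ l) (hy : |y| ≤ 1) :
    |scaledConj f l y - y| ≤ 2 * C * l * (1 - |y|) := by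
  by_cases h : 0 < l ∧ |y| < 1
  · have hdisp : |l * f (unsquash y / l) - unsquash y| ≤ l * C := by
      have e : l * f (unsquash y / l) - unsquash y = l * (f (unsquash y / l) - unsquash y / l) := by
        rw [mul_sub, mul_div_cancel₀ _ h.1.ne']
      rw [e, abs_mul, abs_of_pos h.1]
      exact mul_le_mul_of_nonneg_left (hf _) h.1.le
    calc |scaledConj f l y - y|
        = |squash (l * f (unsquash y / l)) - squash (unsquash y)| := by
          rw [scaledConj, if_pos h, squash_unsquash h.2]
      _ ≤ 2 * |l * f (unsquash y / l) - unsquash y| * (1 - |squash (unsquash y)|) :=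
          abs_squash_sub_squash_le _ _
      _ ≤ 2 * (l * C) * (1 - |y|) := by
          rw [squash_unsquash h.2]; gcongr
      _ = 2 * C * l * (1 - |y|) := by ring
  · rw [scaledConj_of_not h, sub_self, abs_zero]
    have hC : 0 ≤ C := (abs_nonneg _).trans (hf 0)
    have : 0 ≤ 1 - |y| := by linarith
    positivity

end scaledConj

open Topology in
theorem _root_.Continuous.scaledConj {X : Type*} [TopologicalSpace X] {f : ℝ → ℝ} {C : ℝ}
    {L Y : X → ℝ} (hf : Continuous f) (hC : ∀ x, |f x - x| ≤ C) (hL : Continuous L)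
    (hY : Continuous Y) (hL0 : ∀ p, 0 ≤ L p) (hY1 : ∀ p, |Y p| ≤ 1) :
    Continuous fun p => scaledConj f (L p) (Y p) := by
  refine continuous_iff_continuousAt.mpr fun p => ?_
  by_cases h : 0 < L p ∧ |Y p| < 1
  · have hopen : IsOpen {q | 0 < L q ∧ |Y q| < 1} :=
      (isOpen_lt continuous_const hL).inter (isOpen_lt hY.abs continuous_const)
    refine ContinuousAt.congr_of_eventuallyEq ?_
      (Filter.eventually_of_mem (hopen.mem_nhds h) fun q hq => if_pos hq)
    refine continuous_squash.continuousAt.comp (hL.continuousAt.mul (hf.continuousAt.comp ?_))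
    exact ((continuousAt_unsquash h.2).comp hY.continuousAt).div hL.continuousAt h.1.ne'
  · have hM : Continuous fun q => 2 * C * L q * (1 - |Y q|) := by fun_prop
    have hMp : 2 * C * L p * (1 - |Y p|) = 0 := by
      rcases not_and_or.mp h with hp | hp
      · simp [le_antisymm (not_lt.mp hp) (hL0 p)]
      · simp [le_antisymm (hY1 p) (not_lt.mp hp)]
    have hbound q := abs_le.mp (abs_scaledConj_sub_le hC (hL0 q) (hY1 q))
    have hlower : Filter.Tendsto (fun q => Y q - 2 * C * L q * (1 - |Y q|)) (𝓝 p) (𝓝 (Y p)) := by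
      simpa [hMp] using (hY.tendsto p).sub (hM.tendsto p)
    have hupper : Filter.Tendsto (fun q => Y q + 2 * C * L q * (1 - |Y q|)) (𝓝 p) (𝓝 (Y p)) := by
      simpa [hMp] using (hY.tendsto p).add (hM.tendsto p)
    rw [ContinuousAt, scaledConj_of_not h]
    exact tendsto_of_tendsto_of_tendsto_of_le_of_le hlower hupper
      (fun q => by linarith [hbound q]) (fun q => by linarith [hbound q])

section cube

variable {n : ℕ}

theorem abs_cube_coord_le_one (p : Cube n) (i : Fin n) : |(p i : ℝ)| ≤ 1 := abs_le.mpr (p i).2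

noncomputable def faceWeight (i : Fin n) (p : Cube n) : ℝ :=
  ∏ j ∈ Finset.univ.erase i, (1 - (p j : ℝ) ^ 2)

theorem faceWeight_nonneg (i : Fin n) (p : Cube n) : 0 ≤ faceWeight i p :=
  Finset.prod_nonneg fun j _ =>
    sub_nonneg.mpr ((sq_le_one_iff_abs_le_one _).mpr (abs_cube_coord_le_one p j))

theorem continuous_faceWeight (i : Fin n) : Continuous (faceWeight i) := by
  unfold faceWeight; fun_prop

theorem faceWeight_update (i : Fin n) (p : Cube n) (y : Icc (-1 : ℝ) 1) :
    faceWeight i (Function.update p i y) = faceWeight i p :=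
  Finset.prod_congr rfl fun _ hj => by rw [Function.update_of_ne (Finset.ne_of_mem_erase hj)]

theorem faceWeight_eq_zero {i j : Fin n} (hji : j ≠ i) {p : Cube n}
    (hp : (p j : ℝ) = 1 ∨ (p j : ℝ) = -1) : faceWeight i p = 0 :=
  Finset.prod_eq_zero (Finset.mem_erase.mpr ⟨hji, Finset.mem_univ j⟩)
    (by rcases hp with h | h <;> simp [h])

noncomputable def cubeMap (f : ℝ → ℝ) (i : Fin n) (p : Cube n) : Cube n :=
  Function.update p i
    ⟨scaledConj f (faceWeight i p) (p i),
      abs_le.mp (abs_scaledConj_le_one (abs_cube_coord_le_one p i))⟩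

section

variable {f g : ℝ → ℝ} {i : Fin n}

theorem cubeMap_cubeMap (p : Cube n) : cubeMap f i (cubeMap g i p) = cubeMap (f ∘ g) i p := by
  ext j
  rcases eq_or_ne j i with rfl | hj
  · simp [cubeMap, faceWeight_update, scaledConj_scaledConj]
  · simp [cubeMap, hj]

theorem cubeMap_id (p : Cube n) : cubeMap id i p = p := by
  simp [cubeMap, scaledConj_id]

theorem cubeMap_of_mem_cubeBoundary {p : Cube n} (hp : p ∈ cubeBoundary n) :
    cubeMap f i p = p := by
  obtain ⟨j, hj⟩ := hp
  have hfix : scaledConj f (faceWeight i p) (p i) = p i := by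
    refine scaledConj_of_not fun ⟨hl, hy⟩ => ?_
    rcases eq_or_ne j i with rfl | hji
    · rcases hj with h | h <;> simp [h] at hy
    · exact hl.ne' (faceWeight_eq_zero hji hj)
  simp [cubeMap, hfix]

theorem continuous_cubeMap {C : ℝ} (hf : Continuous f) (hC : ∀ x, |f x - x| ≤ C) (i : Fin n) :
    Continuous (cubeMap f i) :=
  continuous_id.update i <| Continuous.subtype_mk
    (hf.scaledConj hC (continuous_faceWeight i) (continuous_subtype_val.comp (continuous_apply i))
      (faceWeight_nonneg i) fun p => abs_cube_coord_le_one p i) _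

/-- On the axis through the centre in direction `i` the weight is `1`, so there `cubeMap f i` is
`f` conjugated by `squash`. -/
theorem eq_of_cubeMap_eq_self (h : ∀ p, cubeMap f i p = p) (x : ℝ) : f x = x := by
  let p : Cube n := Function.update (fun _ => ⟨0, by norm_num⟩) i
    ⟨squash x, abs_le.mp (abs_squash_lt_one x).le⟩
  have hp : faceWeight i p = 1 := by simp only [p, faceWeight_update]; simp [faceWeight]
  have hx := congr_arg (fun q => (q i : ℝ)) (h p)
  simp only [cubeMap, hp, Function.update_self, p] at hx
  rw [← one_mul x, scaledConj_squash one_pos] at hx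
  simpa using squash_injective hx

end

theorem continuous_cubeMap_of_mem {f : ℝ ≃ₜ ℝ} (hf : f ∈ boundedDisplacement) (i : Fin n) :
    Continuous (cubeMap f i) :=
  let ⟨_, hC⟩ := hf
  continuous_cubeMap f.continuous hC i

noncomputable def toHomeoCube (i : Fin n) : boundedDisplacement →* HomeoCube n where
  toFun f :=
    ⟨{ toFun := cubeMap (f : ℝ ≃ₜ ℝ) i
       invFun := cubeMap (f : ℝ ≃ₜ ℝ).symm i
       left_inv := fun p => by rw [cubeMap_cubeMap, Homeomorph.symm_comp_self, cubeMap_id]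
       right_inv := fun p => by rw [cubeMap_cubeMap, Homeomorph.self_comp_symm, cubeMap_id] },
      continuous_cubeMap_of_mem f.2 i, continuous_cubeMap_of_mem (inv_mem f.2) i,
      fun _ => cubeMap_of_mem_cubeBoundary⟩
  map_one' := Subtype.ext <| Equiv.ext fun _ => cubeMap_id _
  map_mul' f g := Subtype.ext <| Equiv.ext fun p =>
    (cubeMap_cubeMap (f := (f : ℝ ≃ₜ ℝ)) (g := (g : ℝ ≃ₜ ℝ)) p).symm

theorem toHomeoCube_injective (i : Fin n) : Function.Injective (toHomeoCube i) :=
  (injective_iff_map_eq_one _).mpr fun _ hf => Subtype.ext <| Homeomorph.ext <|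
    eq_of_cubeMap_eq_self (DFunLike.congr_fun (congr_arg Subtype.val hf))

end cube

/-- For every `n ≥ 1`, the group `Homeo(Iⁿ, ∂Iⁿ)` is not bi-orderable. -/
theorem homeoCube_not_biOrderable (n : ℕ) (hn : 1 ≤ n) :
    ¬ BiOrderable (Stmt.HomeoCube n) := by
  intro hbi
  let φ := toHomeoCube (⟨0, hn⟩ : Fin n)
  let a : boundedDisplacement := ⟨_, addRight_mem_boundedDisplacement 1⟩
  let b : boundedDisplacement := ⟨_, zigzag_mem_boundedDisplacement⟩
  have hab : a * b * a⁻¹ = b⁻¹ := Subtype.ext addRight_one_mul_zigzag_mul_inv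
  have hb : φ b = φ 1 := by
    rw [map_one]
    exact hbi.eq_one_of_mul_mul_inv_eq_inv
      (by simpa only [map_mul, map_inv] using congr_arg φ hab)
  exact zigzag_ne_one (congr_arg Subtype.val (toHomeoCube_injective _ hb))

end Stmt
end

section
/- If f and g are elements of Diff^2(I, ∂I) satisfying g∘f∘g^{-1} = f^{-1}, then f is the identity; that is, no nontrivial element of Diff^2(I, ∂I) is conjugate to its own inverse. -/
open Set

namespace Stmt

/-- Membership in `Diff²(I, ∂I)`: a homeomorphism `f` of `I = [-1,1]` onto itself fixing the
endpoints `-1` and `1` such that both `f` and `f⁻¹` are `C²` on `I` (one-sidedly at the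
endpoints). -/
def IsDiff2 (f : Equiv.Perm (Set.Icc (-1 : ℝ) 1)) : Prop :=
  Continuous f ∧ Continuous f.symm ∧
  f ⟨-1, negOne_mem_I⟩ = ⟨-1, negOne_mem_I⟩ ∧ f ⟨1, one_mem_I⟩ = ⟨1, one_mem_I⟩ ∧
  (∃ F : ℝ → ℝ, ContDiffOn ℝ 2 F (Set.Icc (-1 : ℝ) 1) ∧
    ∀ t : (Set.Icc (-1 : ℝ) 1), F t = ((f t : ℝ))) ∧
  (∃ G : ℝ → ℝ, ContDiffOn ℝ 2 G (Set.Icc (-1 : ℝ) 1) ∧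
    ∀ t : (Set.Icc (-1 : ℝ) 1), G t = ((f.symm t : ℝ)))

end Stmt

/-!
Since `g f g⁻¹ = f⁻¹`, the square `g²` commutes with `f`, and `g` sends the points that `f` moves
up to points that `f` moves down. If `f` moves some point up, it moves up every point of a
component `(a, b)` of the complement of its fixed points. Then `g (a, b)` is disjoint from
`(a, b)`, so `h = g²` or `h = g⁻²` pushes `[a, b]` past itself: `b ≤ h a`.

This contradicts Kopell's lemma. The intervals `hⁿ [a, b]` are disjoint and accumulate at a point
`p`; since every `fᵏ` fixes their endpoints, `(fᵏ)' p = 1`. As `h` is `C²`, `log h'` is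
Lipschitz, and the `hʲ [a, b]` have total length at most `2`, so the distortion of `hⁿ` on
`[a, b]` is bounded by a constant `C` independent of `n`. Conjugating `fᵏ` by `hⁿ` and letting
`n → ∞` gives `(fᵏ)' ≥ 1 / C` on `(a, b)` for every `k`, so the orbit `fᵏ x` grows linearly and
cannot stay in `(a, b)`.
-/

open Filter Topology Function Real

theorem MonotoneOn.iterate {α : Type*} [Preorder α] {f : α → α} {s : Set α}
    (hf : MonotoneOn f s) (hs : MapsTo f s s) : ∀ n : ℕ, MonotoneOn f^[n] s
  | 0 => monotoneOn_id
  | n + 1 => by rw [iterate_succ]; exact (hf.iterate hs n).comp hf hs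

theorem StrictMonoOn.iterate {α : Type*} [Preorder α] {f : α → α} {s : Set α}
    (hf : StrictMonoOn f s) (hs : MapsTo f s s) : ∀ n : ℕ, StrictMonoOn f^[n] s
  | 0 => strictMonoOn_id
  | n + 1 => by rw [iterate_succ]; exact (hf.iterate hs n).comp hf hs

theorem iterate_le_iterate_succ_of_le_apply {α : Type*} [Preorder α] {H : α → α} {s : Set α}
    {a b : α} (hH : MonotoneOn H s) (hs : MapsTo H s s) (ha : a ∈ s) (hb : b ∈ s)
    (hba : b ≤ H a) (n : ℕ) : H^[n] b ≤ H^[n + 1] a := by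
  rw [iterate_succ_apply]
  exact hH.iterate hs n hb (hs ha) hba

theorem exists_tendsto_of_le_of_le_succ {A B : ℕ → ℝ} (hAB : ∀ n, A n ≤ B n)
    (hBA : ∀ n, B n ≤ A (n + 1)) (hA : BddAbove (range A)) :
    ∃ p, Tendsto A atTop (𝓝 p) ∧ Tendsto B atTop (𝓝 p) := by
  have hAp := tendsto_atTop_ciSup (monotone_nat_of_le_succ fun n => (hAB n).trans (hBA n)) hA
  exact ⟨_, hAp, tendsto_of_tendsto_of_tendsto_of_le_of_le hAp
    (hAp.comp (tendsto_add_atTop_nat 1)) hAB hBA⟩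

theorem exists_fixedPoints_lt_apply_on_Ioo {F : ℝ → ℝ} {c d t : ℝ}
    (hF : ContinuousOn F (Icc c d)) (hFc : F c = c) (hFd : F d = d) (ht : t ∈ Icc c d)
    (htF : t < F t) :
    ∃ a b, c ≤ a ∧ b ≤ d ∧ t ∈ Ioo a b ∧ F a = a ∧ F b = b ∧ ∀ x ∈ Ioo a b, x < F x := by
  have hcompact : ∀ {u v}, c ≤ u → v ≤ d → IsCompact {x ∈ Icc u v | F x = x} := fun hu hv =>
    isCompact_Icc.of_isClosed_subset
      (isClosed_Icc.isClosed_eq (hF.mono (Icc_subset_Icc hu hv)) continuousOn_id) fun x hx => hx.1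
  obtain ⟨a, ⟨haI, hFa⟩, ha⟩ := (hcompact le_rfl ht.2).exists_isGreatest ⟨c, ⟨le_rfl, ht.1⟩, hFc⟩
  obtain ⟨b, ⟨hbI, hFb⟩, hb⟩ := (hcompact ht.1 le_rfl).exists_isLeast ⟨d, ⟨ht.2, le_rfl⟩, hFd⟩
  have hat : a < t := haI.2.lt_of_ne (by rintro rfl; exact htF.ne' hFa)
  have htb : t < b := hbI.1.lt_of_ne' (by rintro rfl; exact htF.ne' hFb)
  have hnofix : ∀ x ∈ Ioo a b, F x ≠ x := fun x hx hFx => by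
    rcases le_total x t with hxt | htx
    · exact (ha ⟨⟨haI.1.trans hx.1.le, hxt⟩, hFx⟩).not_gt hx.1
    · exact (hb ⟨⟨htx, hx.2.le.trans hbI.2⟩, hFx⟩).not_gt hx.2
  refine ⟨a, b, haI.1, hbI.2, ⟨hat, htb⟩, hFa, hFb, fun x hx => ?_⟩
  by_contra! hxF
  obtain ⟨z, hz, hFz⟩ := isPreconnected_Ioo.intermediate_value hx ⟨hat, htb⟩
    ((hF.sub continuousOn_id).mono (Ioo_subset_Icc_self.trans (Icc_subset_Icc haI.1 hbI.2)))
    ⟨sub_nonpos.2 hxF, (sub_pos.2 htF).le⟩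
  exact hnofix z hz (sub_eq_zero.1 hFz)

theorem ContDiffOn.iterate {𝕜 E : Type*} [NontriviallyNormedField 𝕜] [NormedAddCommGroup E]
    [NormedSpace 𝕜 E] {n : WithTop ℕ∞} {f : E → E} {s : Set E} (hf : ContDiffOn 𝕜 n f s)
    (hs : MapsTo f s s) : ∀ k : ℕ, ContDiffOn 𝕜 n f^[k] s
  | 0 => contDiffOn_id
  | k + 1 => by rw [iterate_succ]; exact (hf.iterate hs k).comp hf hs

theorem derivWithin_iterate {𝕜 : Type*} [NontriviallyNormedField 𝕜] {f : 𝕜 → 𝕜} {s : Set 𝕜}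
    {x : 𝕜} (hf : DifferentiableOn 𝕜 f s) (hs : MapsTo f s s) (hu : UniqueDiffOn 𝕜 s)
    (hx : x ∈ s) (n : ℕ) :
    derivWithin f^[n] s x = ∏ j ∈ Finset.range n, derivWithin f s (f^[j] x) := by
  induction n with
  | zero => simp [derivWithin_id _ _ (hu x hx)]
  | succ n ih =>
    rw [iterate_succ', derivWithin_comp x (hf _ (hs.iterate n hx)) (hf.iterate hs n x hx)
      (hs.iterate n), ih, Finset.prod_range_succ, mul_comm]

theorem derivWithin_iterate_pos {H : ℝ → ℝ} {s : Set ℝ} (hH : DifferentiableOn ℝ H s)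
    (hs : MapsTo H s s) (hu : UniqueDiffOn ℝ s) (hH' : ∀ y ∈ s, 0 < derivWithin H s y) {x : ℝ}
    (hx : x ∈ s) (n : ℕ) : 0 < derivWithin H^[n] s x := by
  rw [derivWithin_iterate hH hs hu hx]
  exact Finset.prod_pos fun j _ => hH' _ (hs.iterate j hx)

theorem strictMonoOn_Icc_of_derivWithin_pos {f : ℝ → ℝ} {c d : ℝ}
    (hf : DifferentiableOn ℝ f (Icc c d)) (hf' : ∀ x ∈ Icc c d, 0 < derivWithin f (Icc c d) x) :
    StrictMonoOn f (Icc c d) :=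
  strictMonoOn_of_hasDerivWithinAt_pos (convex_Icc c d) hf.continuousOn
    (fun x hx => by
      rw [interior_Icc] at hx ⊢
      exact (hf x (Ioo_subset_Icc_self hx)).hasDerivWithinAt.mono Ioo_subset_Icc_self)
    fun x hx => hf' x (interior_subset hx)

theorem derivWithin_eq_one_of_tendsto_fixedPoints {φ : ℝ → ℝ} {c d p : ℝ} {A B : ℕ → ℝ}
    (hφ : ContDiffOn ℝ 1 φ (Icc c d)) (hcA : ∀ n, c ≤ A n) (hAB : ∀ n, A n < B n)
    (hBd : ∀ n, B n ≤ d) (hφA : ∀ n, φ (A n) = A n) (hφB : ∀ n, φ (B n) = B n)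
    (hA : Tendsto A atTop (𝓝 p)) (hB : Tendsto B atTop (𝓝 p)) :
    derivWithin φ (Icc c d) p = 1 := by
  have hcd : c < d := (hcA 0).trans_lt ((hAB 0).trans_le (hBd 0))
  have hp : p ∈ Icc c d := isClosed_Icc.mem_of_tendsto hA
    (.of_forall fun n => ⟨hcA n, (hAB n).le.trans (hBd n)⟩)
  have hslope : ∀ n, ∃ ξ ∈ Ioo (A n) (B n), derivWithin φ (Icc c d) ξ = 1 := by
    intro n
    have hsub : Icc (A n) (B n) ⊆ Icc c d := Icc_subset_Icc (hcA n) (hBd n)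
    obtain ⟨ξ, hξ, hslope⟩ := exists_deriv_eq_slope φ (hAB n) (hφ.continuousOn.mono hsub)
      ((hφ.differentiableOn one_ne_zero).mono (Ioo_subset_Icc_self.trans hsub))
    refine ⟨ξ, hξ, ?_⟩
    rw [derivWithin_of_mem_nhds (Icc_mem_nhds ((hcA n).trans_lt hξ.1) (hξ.2.trans_le (hBd n))),
      hslope, hφA, hφB, div_self (sub_ne_zero.2 (hAB n).ne')]
  choose ξ hξ hξ1 using hslope
  have hξp : Tendsto ξ atTop (𝓝[Icc c d] p) := tendsto_nhdsWithin_iff.2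
    ⟨tendsto_of_tendsto_of_tendsto_of_le_of_le hA hB (fun n => (hξ n).1.le) fun n => (hξ n).2.le,
      .of_forall fun n => ⟨(hcA n).trans (hξ n).1.le, (hξ n).2.le.trans (hBd n)⟩⟩
  have hlim := (hφ.continuousOn_derivWithin (uniqueDiffOn_Icc hcd) le_rfl p hp).tendsto.comp hξp
  simp only [comp_def, hξ1] at hlim
  exact tendsto_nhds_unique hlim tendsto_const_nhds

theorem exists_derivWithin_le_exp_mul_abs_sub {H : ℝ → ℝ} {c d : ℝ} (hcd : c < d)
    (hH : ContDiffOn ℝ 2 H (Icc c d)) (hH' : ∀ x ∈ Icc c d, 0 < derivWithin H (Icc c d) x) :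
    ∃ K : ℝ, 0 ≤ K ∧ ∀ u ∈ Icc c d, ∀ v ∈ Icc c d,
      derivWithin H (Icc c d) u ≤ exp (K * |u - v|) * derivWithin H (Icc c d) v := by
  have hlog : ContDiffOn ℝ 1 (fun x => log (derivWithin H (Icc c d) x)) (Icc c d) :=
    (hH.derivWithin (uniqueDiffOn_Icc hcd) (by norm_num)).log fun x hx => (hH' x hx).ne'
  obtain ⟨K, hK⟩ := hlog.exists_lipschitzOnWith one_ne_zero (convex_Icc c d) isCompact_Icc
  refine ⟨K, K.2, fun u hu v hv => ?_⟩
  have hlip := hK.dist_le_mul u hu v hv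
  rw [Real.dist_eq, Real.dist_eq] at hlip
  calc derivWithin H (Icc c d) u = exp (log (derivWithin H (Icc c d) u)) :=
        (exp_log (hH' u hu)).symm
    _ ≤ exp (K * |u - v| + log (derivWithin H (Icc c d) v)) :=
        exp_le_exp.2 (by linarith [le_abs_self (log (derivWithin H (Icc c d) u) -
          log (derivWithin H (Icc c d) v))])
    _ = exp (K * |u - v|) * derivWithin H (Icc c d) v := by rw [exp_add, exp_log (hH' v hv)]

theorem exists_derivWithin_iterate_le_exp_mul_sum {H : ℝ → ℝ} {c d : ℝ} (hcd : c < d)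
    (hH : ContDiffOn ℝ 2 H (Icc c d)) (hmaps : MapsTo H (Icc c d) (Icc c d))
    (hH' : ∀ x ∈ Icc c d, 0 < derivWithin H (Icc c d) x) :
    ∃ K : ℝ, 0 ≤ K ∧ ∀ n : ℕ, ∀ u ∈ Icc c d, ∀ v ∈ Icc c d,
      derivWithin H^[n] (Icc c d) u ≤
        exp (K * ∑ j ∈ Finset.range n, |H^[j] u - H^[j] v|) * derivWithin H^[n] (Icc c d) v := by
  obtain ⟨K, hK0, hK⟩ := exists_derivWithin_le_exp_mul_abs_sub hcd hH hH'
  refine ⟨K, hK0, fun n u hu v hv => ?_⟩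
  have hdiff := hH.differentiableOn two_ne_zero
  rw [derivWithin_iterate hdiff hmaps (uniqueDiffOn_Icc hcd) hu,
    derivWithin_iterate hdiff hmaps (uniqueDiffOn_Icc hcd) hv, Finset.mul_sum, exp_sum,
    ← Finset.prod_mul_distrib]
  exact Finset.prod_le_prod (fun j _ => (hH' _ (hmaps.iterate j hu)).le)
    fun j _ => hK _ (hmaps.iterate j hu) _ (hmaps.iterate j hv)

theorem exists_derivWithin_iterate_le_mul_of_le_apply {H : ℝ → ℝ} {c d a b : ℝ} (hcd : c < d)
    (hH : ContDiffOn ℝ 2 H (Icc c d)) (hmaps : MapsTo H (Icc c d) (Icc c d))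
    (hH' : ∀ x ∈ Icc c d, 0 < derivWithin H (Icc c d) x) (ha : a ∈ Icc c d) (hb : b ∈ Icc c d)
    (hba : b ≤ H a) :
    ∃ C > 0, ∀ n : ℕ, ∀ u ∈ Icc a b, ∀ v ∈ Icc a b,
      derivWithin H^[n] (Icc c d) u ≤ C * derivWithin H^[n] (Icc c d) v := by
  obtain ⟨K, hK0, hK⟩ := exists_derivWithin_iterate_le_exp_mul_sum hcd hH hmaps hH'
  have hmono :=
    (strictMonoOn_Icc_of_derivWithin_pos (hH.differentiableOn two_ne_zero) hH').monotoneOn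
  have hsub : Icc a b ⊆ Icc c d := Icc_subset_Icc ha.1 hb.2
  refine ⟨exp (K * (d - c)), exp_pos _, fun n u hu v hv => (hK n u (hsub hu) v (hsub hv)).trans ?_⟩
  have hmem : ∀ j, ∀ y ∈ Icc a b, H^[j] y ∈ Icc (H^[j] a) (H^[j + 1] a) := fun j y hy =>
    ⟨(hmono.iterate hmaps j) ha (hsub hy) hy.1, ((hmono.iterate hmaps j) (hsub hy) hb hy.2).trans
      (iterate_le_iterate_succ_of_le_apply hmono hmaps ha hb hba j)⟩
  have hsum : ∑ j ∈ Finset.range n, |H^[j] u - H^[j] v| ≤ d - c :=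
    calc ∑ j ∈ Finset.range n, |H^[j] u - H^[j] v|
        ≤ ∑ j ∈ Finset.range n, (H^[j + 1] a - H^[j] a) := Finset.sum_le_sum fun j _ =>
          abs_sub_le_of_le_of_le (hmem j u hu).1 (hmem j u hu).2 (hmem j v hv).1 (hmem j v hv).2
      _ = H^[n] a - a := Finset.sum_range_sub (fun j => H^[j] a) n
      _ ≤ d - c := by linarith [(hmaps.iterate n ha).2, ha.1]
  gcongr
  exact (hmono.iterate hmaps n).derivWithin_nonneg

theorem derivWithin_le_mul_of_commute {φ H : ℝ → ℝ} {s : Set ℝ} {x p C : ℝ}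
    (hs : UniqueDiffOn ℝ s) (hx : x ∈ s) (hp : p ∈ s) (hφ : ContDiffOn ℝ 1 φ s)
    (hφs : MapsTo φ s s) (hφmono : MonotoneOn φ s) (hH : DifferentiableOn ℝ H s)
    (hHs : MapsTo H s s) (hH' : ∀ y ∈ s, 0 < derivWithin H s y) (hcomm : Function.Commute φ H)
    (hdist : ∀ n, derivWithin H^[n] s (φ x) ≤ C * derivWithin H^[n] s x)
    (hlim : Tendsto (fun n => H^[n] x) atTop (𝓝 p)) :
    derivWithin φ s p ≤ C * derivWithin φ s x := by
  have hdφ := hφ.differentiableOn one_ne_zero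
  have hbound : ∀ n, derivWithin φ s (H^[n] x) ≤ C * derivWithin φ s x := by
    intro n
    have hchain : derivWithin φ s (H^[n] x) * derivWithin H^[n] s x =
        derivWithin H^[n] s (φ x) * derivWithin φ s x := by
      rw [← derivWithin_comp x (hdφ _ (hHs.iterate n hx)) (hH.iterate hHs n x hx) (hHs.iterate n),
        ← derivWithin_comp x (hH.iterate hHs n _ (hφs hx)) (hdφ x hx) hφs,
        (hcomm.iterate_right n).comp_eq]
    refine le_of_mul_le_mul_right ?_ (derivWithin_iterate_pos hH hHs hs hH' hx n)
    calc derivWithin φ s (H^[n] x) * derivWithin H^[n] s x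
        = derivWithin H^[n] s (φ x) * derivWithin φ s x := hchain
      _ ≤ C * derivWithin H^[n] s x * derivWithin φ s x :=
        mul_le_mul_of_nonneg_right (hdist n) hφmono.derivWithin_nonneg
      _ = C * derivWithin φ s x * derivWithin H^[n] s x := by ring
  have hlim' : Tendsto (fun n => H^[n] x) atTop (𝓝[s] p) :=
    tendsto_nhdsWithin_iff.2 ⟨hlim, .of_forall fun n => hHs.iterate n hx⟩
  exact le_of_tendsto ((hφ.continuousOn_derivWithin hs le_rfl p hp).tendsto.comp hlim')
    (.of_forall hbound)

theorem not_bddAbove_iterate_of_le_deriv {F : ℝ → ℝ} {x δ : ℝ} (hδ : 0 < δ) (hx : x < F x)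
    (hcont : ∀ k, ContinuousOn F^[k] (Icc x (F x)))
    (hdiff : ∀ k, DifferentiableOn ℝ F^[k] (Ioo x (F x)))
    (hderiv : ∀ k, ∀ y ∈ Ioo x (F x), δ ≤ deriv F^[k] y) :
    ¬ BddAbove (range fun k => F^[k] x) := by
  set ε := δ * (F x - x)
  have hε : 0 < ε := mul_pos hδ (sub_pos.2 hx)
  have hstep : ∀ k, ε ≤ F^[k + 1] x - F^[k] x := fun k => by
    rw [iterate_succ_apply]
    exact (convex_Icc x (F x)).mul_sub_le_image_sub_of_le_deriv (hcont k)
      (by rw [interior_Icc]; exact hdiff k) (by rw [interior_Icc]; exact hderiv k)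
      x (left_mem_Icc.2 hx.le) (F x) (right_mem_Icc.2 hx.le) hx.le
  have hgrow : ∀ k : ℕ, x + k * ε ≤ F^[k] x := by
    intro k
    induction k with
    | zero => simp
    | succ k ih => push_cast; linarith [hstep k]
  rintro ⟨M, hM⟩
  obtain ⟨k, hk⟩ := exists_nat_gt ((M - x) / ε)
  rw [div_lt_iff₀ hε] at hk
  linarith [hgrow k, hM ⟨k, rfl⟩]

theorem exists_one_le_mul_derivWithin_iterate_of_commute {F H : ℝ → ℝ} {c d a b : ℝ}
    (hF : ContDiffOn ℝ 1 F (Icc c d)) (hFmaps : MapsTo F (Icc c d) (Icc c d))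
    (hFmono : MonotoneOn F (Icc c d)) (hH : ContDiffOn ℝ 2 H (Icc c d))
    (hHmaps : MapsTo H (Icc c d) (Icc c d)) (hH' : ∀ y ∈ Icc c d, 0 < derivWithin H (Icc c d) y)
    (hcomm : Function.Commute F H) (hca : c ≤ a) (hab : a < b) (hbd : b ≤ d) (hFa : F a = a)
    (hFb : F b = b) (hba : b ≤ H a) :
    ∃ C > 0, ∀ k, ∀ y ∈ Ioo a b, 1 ≤ C * derivWithin F^[k] (Icc c d) y := by
  have hcd : c < d := hca.trans_lt (hab.trans_le hbd)
  have ha : a ∈ Icc c d := ⟨hca, hab.le.trans hbd⟩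
  have hb : b ∈ Icc c d := ⟨hca.trans hab.le, hbd⟩
  have hsub : Icc a b ⊆ Icc c d := Icc_subset_Icc hca hbd
  have hHd := hH.differentiableOn two_ne_zero
  have hHmono := strictMonoOn_Icc_of_derivWithin_pos hHd hH'
  have hAB : ∀ n, H^[n] a < H^[n] b := fun n => hHmono.iterate hHmaps n ha hb hab
  obtain ⟨p, hap, hbp⟩ := exists_tendsto_of_le_of_le_succ (fun n => (hAB n).le)
    (iterate_le_iterate_succ_of_le_apply hHmono.monotoneOn hHmaps ha hb hba)
    ⟨d, forall_mem_range.2 fun n => (hHmaps.iterate n ha).2⟩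
  have hfix : ∀ k n y, F y = y → F^[k] (H^[n] y) = H^[n] y := fun k n y hy =>
    iterate_fixed (by rw [(hcomm.iterate_right n).eq, hy]) k
  have hFp : ∀ k, derivWithin F^[k] (Icc c d) p = 1 := fun k =>
    derivWithin_eq_one_of_tendsto_fixedPoints (hF.iterate hFmaps k)
      (fun n => (hHmaps.iterate n ha).1) hAB (fun n => (hHmaps.iterate n hb).2)
      (fun n => hfix k n a hFa) (fun n => hfix k n b hFb) hap hbp
  obtain ⟨C, hC0, hC⟩ :=
    exists_derivWithin_iterate_le_mul_of_le_apply hcd hH hHmaps hH' ha hb hba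
  have hFab : MapsTo F (Icc a b) (Icc a b) := by
    simpa only [hFa, hFb] using (hFmono.mono hsub).mapsTo_Icc
  refine ⟨C, hC0, fun k y hy => hFp k ▸ ?_⟩
  have hyI := Ioo_subset_Icc_self hy
  exact derivWithin_le_mul_of_commute (uniqueDiffOn_Icc hcd) (hsub hyI)
    (isClosed_Icc.mem_of_tendsto hap (.of_forall fun n => hHmaps.iterate n ha))
    (hF.iterate hFmaps k) (hFmaps.iterate k) (hFmono.iterate hFmaps k) hHd hHmaps hH'
    (hcomm.iterate_left k) (fun n => hC n _ (hFab.iterate k hyI) y hyI)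
    (tendsto_of_tendsto_of_tendsto_of_le_of_le hap hbp
      (fun n => (hHmono.iterate hHmaps n ha (hsub hyI) hy.1).le)
      fun n => (hHmono.iterate hHmaps n (hsub hyI) hb hy.2).le)

-- Kopell's lemma, for a wandering interval `[a, b]` of `H` bounded by fixed points of `F`.
theorem apply_le_self_of_commute_of_le_apply {F H : ℝ → ℝ} {c d a b x : ℝ}
    (hF : ContDiffOn ℝ 1 F (Icc c d)) (hFmaps : MapsTo F (Icc c d) (Icc c d))
    (hFmono : MonotoneOn F (Icc c d)) (hH : ContDiffOn ℝ 2 H (Icc c d))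
    (hHmaps : MapsTo H (Icc c d) (Icc c d)) (hH' : ∀ y ∈ Icc c d, 0 < derivWithin H (Icc c d) y)
    (hcomm : Function.Commute F H) (hca : c ≤ a) (hbd : b ≤ d) (hFa : F a = a) (hFb : F b = b)
    (hba : b ≤ H a) (hx : x ∈ Ioo a b) : F x ≤ x := by
  by_contra! hxF
  have hsub : Icc a b ⊆ Icc c d := Icc_subset_Icc hca hbd
  obtain ⟨C, hC0, hC⟩ := exists_one_le_mul_derivWithin_iterate_of_commute hF hFmaps hFmono hH
    hHmaps hH' hcomm hca (hx.1.trans hx.2) hbd hFa hFb hba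
  have hFab : MapsTo F (Icc a b) (Icc a b) := by
    simpa only [hFa, hFb] using (hFmono.mono hsub).mapsTo_Icc
  have hIcc : Icc x (F x) ⊆ Icc a b := Icc_subset_Icc hx.1.le (hFab (Ioo_subset_Icc_self hx)).2
  refine not_bddAbove_iterate_of_le_deriv (inv_pos.2 hC0) hxF
    (fun k => (hF.iterate hFmaps k).continuousOn.mono (hIcc.trans hsub))
    (fun k => ((hF.iterate hFmaps k).differentiableOn one_ne_zero).mono
      (Ioo_subset_Icc_self.trans (hIcc.trans hsub)))
    (fun k y hy => ?_) ⟨b, forall_mem_range.2 fun k => (hFab.iterate k (Ioo_subset_Icc_self hx)).2⟩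
  have hy : y ∈ Ioo a b := Ioo_subset_Ioo hx.1.le (hFab (Ioo_subset_Icc_self hx)).2 hy
  rw [← derivWithin_of_mem_nhds (Icc_mem_nhds (hca.trans_lt hy.1) (hy.2.trans_le hbd))]
  exact (inv_le_iff_one_le_mul₀' hC0).2 (hC k y hy)

local notation "𝕀" => Icc (-1 : ℝ) 1

namespace Stmt

-- Extending through the retraction `projIcc` (rather than by an arbitrary `C²` extension) makes
-- `extend` multiplicative on all of `ℝ`, see `extend_mul`.
noncomputable def extend (f : Equiv.Perm 𝕀) : ℝ → ℝ := IccExtend (by norm_num) fun t => (f t : ℝ)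

variable {f g f' : Equiv.Perm 𝕀}

theorem extend_coe (f : Equiv.Perm 𝕀) (t : 𝕀) : extend f t = f t := IccExtend_val _ _ t

theorem extend_of_mem (f : Equiv.Perm 𝕀) {x : ℝ} (hx : x ∈ 𝕀) : extend f x = f ⟨x, hx⟩ :=
  IccExtend_of_mem _ _ hx

theorem mapsTo_extend (f : Equiv.Perm 𝕀) : MapsTo (extend f) 𝕀 𝕀 := fun _ _ => (f _).2

theorem extend_mul (f g : Equiv.Perm 𝕀) : extend (f * g) = extend f ∘ extend g := by
  ext x
  simp [extend, IccExtend]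

theorem extend_inv_extend (f : Equiv.Perm 𝕀) {x : ℝ} (hx : x ∈ 𝕀) :
    extend f⁻¹ (extend f x) = x := by
  rw [← comp_apply (f := extend f⁻¹), ← extend_mul, inv_mul_cancel, extend_of_mem _ hx]
  rfl

theorem extend_extend_inv (f : Equiv.Perm 𝕀) {x : ℝ} (hx : x ∈ 𝕀) :
    extend f (extend f⁻¹ x) = x := by
  simpa using extend_inv_extend f⁻¹ hx

theorem _root_.SemiconjBy.semiconj_extend (h : SemiconjBy g f f') :
    Function.Semiconj (extend g) (extend f) (extend f') :=
  semiconj_iff_comp_eq.2 (by rw [← extend_mul, ← extend_mul, h.eq])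

namespace IsDiff2

theorem contDiffOn_extend (hf : IsDiff2 f) : ContDiffOn ℝ 2 (extend f) 𝕀 :=
  let ⟨_, hF, hFf⟩ := hf.2.2.2.2.1
  hF.congr fun x hx => by rw [extend_of_mem f hx, hFf ⟨x, hx⟩]

theorem extend_neg_one (hf : IsDiff2 f) : extend f (-1) = -1 := by
  rw [extend_of_mem f negOne_mem_I, hf.2.2.1]

theorem extend_one (hf : IsDiff2 f) : extend f 1 = 1 := by
  rw [extend_of_mem f one_mem_I, hf.2.2.2.1]

theorem inv (hf : IsDiff2 f) : IsDiff2 f⁻¹ :=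
  let ⟨hc, hc', h₁, h₂, hF, hF'⟩ := hf
  ⟨hc', hc, Equiv.Perm.inv_eq_iff_eq.2 h₁.symm, Equiv.Perm.inv_eq_iff_eq.2 h₂.symm, hF', hF⟩

theorem mul (hf : IsDiff2 f) (hg : IsDiff2 g) : IsDiff2 (f * g) := by
  refine ⟨hf.1.comp hg.1, hg.2.1.comp hf.2.1, by simp [hf.2.2.1, hg.2.2.1],
    by simp [hf.2.2.2.1, hg.2.2.2.1], ⟨extend (f * g), ?_, extend_coe _⟩,
    ⟨extend (g⁻¹ * f⁻¹), ?_, fun t => extend_coe _ t⟩⟩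
  · rw [extend_mul]
    exact hf.contDiffOn_extend.comp hg.contDiffOn_extend (mapsTo_extend g)
  · rw [extend_mul]
    exact hg.inv.contDiffOn_extend.comp hf.inv.contDiffOn_extend (mapsTo_extend f⁻¹)

theorem strictMonoOn_extend (hf : IsDiff2 f) : StrictMonoOn (extend f) 𝕀 :=
  ContinuousOn.strictMonoOn_of_injOn_Icc (by norm_num)
    (by rw [hf.extend_neg_one, hf.extend_one]; norm_num) hf.contDiffOn_extend.continuousOn
    (LeftInvOn.injOn fun _ hx => extend_inv_extend f hx)

theorem derivWithin_extend_pos (hf : IsDiff2 f) {x : ℝ} (hx : x ∈ 𝕀) :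
    0 < derivWithin (extend f) 𝕀 x := by
  have hinv : EqOn (extend f⁻¹ ∘ extend f) id 𝕀 := fun _ hy => extend_inv_extend f hy
  have hchain : derivWithin (extend f⁻¹) 𝕀 (extend f x) * derivWithin (extend f) 𝕀 x = 1 := by
    rw [← derivWithin_comp x (hf.inv.contDiffOn_extend.differentiableOn two_ne_zero _
        (mapsTo_extend f hx)) (hf.contDiffOn_extend.differentiableOn two_ne_zero x hx)
        (mapsTo_extend f), derivWithin_congr hinv (hinv hx),
      derivWithin_id x _ (uniqueDiffOn_Icc (by norm_num) x hx)]
  refine hf.strictMonoOn_extend.monotoneOn.derivWithin_nonneg.lt_of_ne fun h => ?_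
  rw [← h, mul_zero] at hchain
  exact zero_ne_one hchain

end IsDiff2

theorem extend_apply_extend_lt (hf : IsDiff2 f) (hg : IsDiff2 g) (h : SemiconjBy g f f⁻¹)
    {x : ℝ} (hx : x ∈ 𝕀) (hxF : x < extend f x) :
    extend f (extend g x) < extend g x := by
  have hG : extend g x < extend f⁻¹ (extend g x) :=
    h.semiconj_extend x ▸ hg.strictMonoOn_extend hx (mapsTo_extend f hx) hxF
  simpa [extend_extend_inv f (mapsTo_extend g hx)] using
    hf.strictMonoOn_extend (mapsTo_extend g hx) (mapsTo_extend _ (mapsTo_extend g hx)) hG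

theorem le_extend_or_le_extend_inv (hf : IsDiff2 f) (hg : IsDiff2 g) (h : SemiconjBy g f f⁻¹)
    {a b : ℝ} (ha : -1 ≤ a) (hb : b ≤ 1) (hab : a < b) (hup : ∀ x ∈ Ioo a b, x < extend f x) :
    b ≤ extend g a ∨ b ≤ extend g⁻¹ a := by
  by_contra! hcon
  obtain ⟨hGa, hGia⟩ := hcon
  have haI : a ∈ 𝕀 := ⟨ha, hab.le.trans hb⟩
  have hbI : b ∈ 𝕀 := ⟨ha.trans hab.le, hb⟩
  have hG := hg.strictMonoOn_extend
  have hGi := hg.inv.strictMonoOn_extend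
  have haGb : a < extend g b := by
    simpa [extend_extend_inv g haI] using hG (mapsTo_extend _ haI) hbI hGia
  obtain ⟨z, hz₁, hz₂⟩ : ∃ z, max a (extend g a) < z ∧ z < min b (extend g b) :=
    exists_between (by simp only [max_lt_iff, lt_min_iff]; exact ⟨⟨hab, hGa⟩, haGb, hG haI hbI hab⟩)
  rw [max_lt_iff] at hz₁
  rw [lt_min_iff] at hz₂
  have hzI : z ∈ 𝕀 := ⟨ha.trans hz₁.1.le, hz₂.1.le.trans hb⟩
  have hw : extend g⁻¹ z ∈ Ioo a b := by
    constructor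
    · simpa [extend_inv_extend g haI] using hGi (mapsTo_extend g haI) hzI hz₁.2
    · simpa [extend_inv_extend g hbI] using hGi hzI (mapsTo_extend g hbI) hz₂.2
  have hdown := extend_apply_extend_lt hf hg h (mapsTo_extend _ hzI) (hup _ hw)
  rw [extend_extend_inv g hzI] at hdown
  exact (hup z ⟨hz₁.1, hz₂.1⟩).not_gt hdown

theorem extend_apply_le_of_le_extend (hf : IsDiff2 f) (hg : IsDiff2 g) (h : SemiconjBy g f f⁻¹)
    {a b x : ℝ} (ha : -1 ≤ a) (hb : b ≤ 1) (hFa : extend f a = a) (hFb : extend f b = b)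
    (hba : b ≤ extend g a) (hx : x ∈ Ioo a b) : extend f x ≤ x := by
  have haI : a ∈ 𝕀 := ⟨ha, (hx.1.trans hx.2).le.trans hb⟩
  have hGa : extend g a < extend g (extend g a) :=
    hg.strictMonoOn_extend haI (mapsTo_extend g haI) ((hx.1.trans hx.2).trans_le hba)
  have hcomm : SemiconjBy (g * g) f f :=
    (by simpa using h.inv_right : SemiconjBy g f⁻¹ f).mul_left h
  exact apply_le_self_of_commute_of_le_apply (hf.contDiffOn_extend.of_le one_le_two)
    (mapsTo_extend f) hf.strictMonoOn_extend.monotoneOn (hg.mul hg).contDiffOn_extend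
    (mapsTo_extend _) (fun y hy => (hg.mul hg).derivWithin_extend_pos hy)
    (Function.Commute.symm hcomm.semiconj_extend) ha hb hFa hFb
    (by rw [extend_mul]; exact hba.trans hGa.le) hx

theorem apply_le_of_semiconjBy_inv (hf : IsDiff2 f) (hg : IsDiff2 g) (h : SemiconjBy g f f⁻¹)
    (t : 𝕀) : (f t : ℝ) ≤ t := by
  by_contra! ht
  rw [← extend_coe] at ht
  obtain ⟨a, b, ha, hb, htab, hFa, hFb, hup⟩ := exists_fixedPoints_lt_apply_on_Ioo
    hf.contDiffOn_extend.continuousOn hf.extend_neg_one hf.extend_one t.2 ht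
  rcases le_extend_or_le_extend_inv hf hg h ha hb (htab.1.trans htab.2) hup with hba | hba
  · exact (extend_apply_le_of_le_extend hf hg h ha hb hFa hFb hba htab).not_gt ht
  · exact (extend_apply_le_of_le_extend hf hg.inv (by simpa using h.inv_symm_left.inv_right)
      ha hb hFa hFb hba htab).not_gt ht

end Stmt

/-- (Kopell) If `f, g ∈ Diff²(I, ∂I)` satisfy `g ∘ f ∘ g⁻¹ = f⁻¹`, then `f` is the identity:
no nontrivial element of `Diff²(I, ∂I)` is conjugate to its own inverse. -/
theorem diff2_not_conjugate_to_inverse (f g : Equiv.Perm (Set.Icc (-1 : ℝ) 1))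
    (hf : Stmt.IsDiff2 f) (hg : Stmt.IsDiff2 g) (h : g * f * g⁻¹ = f⁻¹) : f = 1 := by
  have hs : SemiconjBy g f f⁻¹ := mul_inv_eq_iff_eq_mul.1 h
  ext t
  refine le_antisymm (Stmt.apply_le_of_semiconjBy_inv hf hg hs t) ?_
  simpa using Stmt.apply_le_of_semiconjBy_inv hf.inv hg (by simpa using hs.inv_right) (f t)
end

section
/- The group Diff^ω(I, ∂I) of real-analytic diffeomorphisms of the interval fixing the endpoints is bi-orderable. -/
open Set

namespace Stmt

/-- Membership in `Diff^ω(I, ∂I)`: a homeomorphism `f` of `I = [-1,1]` onto itself fixing the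
endpoints `-1` and `1` such that both `f` and `f⁻¹` are real-analytic at every point of `I`
(one-sidedly at the endpoints). -/
def IsDiffOmega (f : Equiv.Perm (Set.Icc (-1 : ℝ) 1)) : Prop :=
  Continuous f ∧ Continuous f.symm ∧
  f ⟨-1, negOne_mem_I⟩ = ⟨-1, negOne_mem_I⟩ ∧ f ⟨1, one_mem_I⟩ = ⟨1, one_mem_I⟩ ∧
  (∃ F : ℝ → ℝ, AnalyticOn ℝ F (Set.Icc (-1 : ℝ) 1) ∧
    ∀ t : (Set.Icc (-1 : ℝ) 1), F t = ((f t : ℝ))) ∧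
  (∃ G : ℝ → ℝ, AnalyticOn ℝ G (Set.Icc (-1 : ℝ) 1) ∧
    ∀ t : (Set.Icc (-1 : ℝ) 1), G t = ((f.symm t : ℝ)))

lemma analytic_part_mul {f g : Equiv.Perm (Set.Icc (-1 : ℝ) 1)}
    (hf : ∃ F : ℝ → ℝ, AnalyticOn ℝ F (Set.Icc (-1 : ℝ) 1) ∧
      ∀ t : (Set.Icc (-1 : ℝ) 1), F t = ((f t : ℝ)))
    (hg : ∃ G : ℝ → ℝ, AnalyticOn ℝ G (Set.Icc (-1 : ℝ) 1) ∧
      ∀ t : (Set.Icc (-1 : ℝ) 1), G t = ((g t : ℝ))) :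
    ∃ F : ℝ → ℝ, AnalyticOn ℝ F (Set.Icc (-1 : ℝ) 1) ∧
      ∀ t : (Set.Icc (-1 : ℝ) 1), F t = (((f * g) t : ℝ)) := by
  obtain ⟨F, hF, hFf⟩ := hf
  obtain ⟨G, hG, hGg⟩ := hg
  have hmaps : Set.MapsTo G (Set.Icc (-1 : ℝ) 1) (Set.Icc (-1 : ℝ) 1) := by
    intro x hx
    have h := hGg ⟨x, hx⟩
    simp only [Subtype.coe_mk] at h
    rw [h]
    exact (g ⟨x, hx⟩).2
  refine ⟨F ∘ G, hF.comp hG hmaps, fun t => ?_⟩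
  show F (G ↑t) = _
  rw [hGg t, hFf (g t)]
  rfl

/-- The group `Diff^ω(I, ∂I)` of real-analytic diffeomorphisms of `I = [-1,1]` fixing the
endpoints, as a subgroup of the group of bijections of `I`. -/
def DiffOmegaGroup : Subgroup (Equiv.Perm (Set.Icc (-1 : ℝ) 1)) where
  carrier := {f | IsDiffOmega f}
  one_mem' := by
    refine ⟨continuous_id, continuous_id, rfl, rfl, ⟨id, analyticOn_id, fun t => rfl⟩,
      ⟨id, analyticOn_id, fun t => rfl⟩⟩
  mul_mem' := by
    rintro f g ⟨hfc1, hfc2, hfe1, hfe2, hf1, hf2⟩ ⟨hgc1, hgc2, hge1, hge2, hg1, hg2⟩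
    refine ⟨hfc1.comp hgc1, by exact hgc2.comp hfc2, ?_, ?_,
      analytic_part_mul hf1 hg1, ?_⟩
    · show f (g _) = _
      rw [hge1, hfe1]
    · show f (g _) = _
      rw [hge2, hfe2]
    · have : (f * g).symm = g⁻¹ * f⁻¹ := rfl
      rw [this]
      exact analytic_part_mul hg2 hf2
  inv_mem' := by
    rintro f ⟨hc1, hc2, he1, he2, hF, hG⟩
    refine ⟨hc2, by exact hc1, ?_, ?_, hG, by exact hF⟩
    · show f.symm _ = _
      rw [Equiv.symm_apply_eq, he1]
    · show f.symm _ = _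
      rw [Equiv.symm_apply_eq, he2]

/-!
Order `Diff^ω(I, ∂I)` by germs at the left endpoint: `f < g` when `f t < g t` for all `t > -1`
close enough to `-1`. This is left-invariant because every element is increasing, and
right-invariant because every element fixes `-1` and hence maps right neighbourhoods of `-1` into
right neighbourhoods of `-1`. Totality is where analyticity enters: the difference of two elements
is analytic on `I`, so it either vanishes identically or is `(t + 1) ^ n * u t` near `-1` with
`u (-1) ≠ 0`, and then has constant sign on a right neighbourhood of `-1`.
-/

end Stmt

open Filter Topology

theorem AnalyticAt.eventually_pos_or_neg_nhdsGT {h : ℝ → ℝ} {a : ℝ} (hh : AnalyticAt ℝ h a)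
    (h₀ : ¬∀ᶠ t in 𝓝 a, h t = 0) :
    (∀ᶠ t in 𝓝[>] a, 0 < h t) ∨ ∀ᶠ t in 𝓝[>] a, h t < 0 := by
  obtain ⟨n, g, hg, hga, hfac⟩ := hh.exists_eventuallyEq_pow_smul_nonzero_iff.2 h₀
  have hfac' : ∀ᶠ t in 𝓝[>] a, 0 < (t - a) ^ n ∧ h t = (t - a) ^ n * g t :=
    (eventually_nhdsWithin_of_forall fun t (ht : a < t) => pow_pos (sub_pos.2 ht) n).and
      (eventually_nhdsWithin_of_eventually_nhds hfac)
  rcases hga.lt_or_gt with hneg | hpos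
  · refine Or.inr ?_
    filter_upwards [hfac', eventually_nhdsWithin_of_eventually_nhds
      (hg.continuousAt.eventually_lt continuousAt_const hneg)] with t ⟨ht, hft⟩ hgt
    exact hft ▸ mul_neg_of_pos_of_neg ht hgt
  · refine Or.inl ?_
    filter_upwards [hfac', eventually_nhdsWithin_of_eventually_nhds
      (continuousAt_const.eventually_lt hg.continuousAt hpos)] with t ⟨ht, hft⟩ hgt
    exact hft ▸ mul_pos ht hgt

theorem AnalyticOn.eqOn_zero_of_eventually_nhdsGT {E : Type*} [NormedAddCommGroup E]
    [NormedSpace ℝ E] {D : ℝ → E} {a b : ℝ} (hab : a < b) (hD : AnalyticOn ℝ D (Icc a b))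
    (h₀ : ∀ᶠ t in 𝓝[>] a, D t = 0) : EqOn D 0 (Icc a b) := by
  obtain ⟨c, hac, hc⟩ := mem_nhdsGT_iff_exists_Ioo_subset.1 (h₀.and (Ioo_mem_nhdsGT hab))
  have hmid : (a + c) / 2 ∈ Ioo a c := ⟨by linarith [mem_Ioi.1 hac], by linarith [mem_Ioi.1 hac]⟩
  have hDIoo : AnalyticOnNhd ℝ D (Ioo a b) :=
    isOpen_Ioo.analyticOn_iff_analyticOnNhd.1 (hD.mono Ioo_subset_Icc_self)
  have hzero : EqOn D 0 (Ioo a b) :=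
    hDIoo.eqOn_zero_of_preconnected_of_eventuallyEq_zero isPreconnected_Ioo (hc hmid).2
      (mem_of_superset (isOpen_Ioo.mem_nhds hmid) fun t ht => (hc ht).1)
  exact hzero.of_subset_closure hD.continuousOn continuousOn_const Ioo_subset_Icc_self
    (closure_Ioo hab.ne).ge

theorem AnalyticOn.eqOn_zero_or_eventually_pos_or_neg_nhdsGT {D : ℝ → ℝ} {a b : ℝ}
    (hab : a < b) (hD : AnalyticOn ℝ D (Icc a b)) :
    EqOn D 0 (Icc a b) ∨ (∀ᶠ t in 𝓝[>] a, 0 < D t) ∨ ∀ᶠ t in 𝓝[>] a, D t < 0 := by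
  obtain ⟨h, hDh, hh⟩ := analyticWithinAt_iff_exists_analyticAt.1 (hD a (left_mem_Icc.2 hab.le))
  have hDh' : D =ᶠ[𝓝[>] a] h := hDh.filter_mono <| nhdsWithin_le_of_mem <|
    mem_of_superset (Icc_mem_nhdsGT hab) (subset_insert a _)
  by_cases h₀ : ∀ᶠ t in 𝓝 a, h t = 0
  · exact Or.inl <| hD.eqOn_zero_of_eventually_nhdsGT hab <|
      hDh'.trans (eventually_nhdsWithin_of_eventually_nhds h₀)
  · refine Or.inr ((hh.eventually_pos_or_neg_nhdsGT h₀).imp ?_ ?_) <;>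
      exact fun hsign => hsign.congr (hDh'.mono fun t ht => by rw [ht])

namespace Stmt

theorem biOrderable_of_eventually_lt_or_gt {α : Type*} [LinearOrder α]
    (H : Subgroup (Equiv.Perm α)) (l : Filter α) [l.NeBot]
    (hmono : ∀ f ∈ H, StrictMono f) (htendsto : ∀ f ∈ H, Tendsto f l l)
    (hsep : ∀ f ∈ H, ∀ g ∈ H, f ≠ g → (∀ᶠ x in l, f x < g x) ∨ ∀ᶠ x in l, g x < f x) :
    BiOrderable H := by
  refine ⟨fun f g => ∀ᶠ x in l, (f : Equiv.Perm α) x < (g : Equiv.Perm α) x, ?_, ?_⟩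
  · refine { trichotomous := ?_, irrefl := ?_, trans := ?_ }
    · intro f g hfg hgf
      by_contra hne
      exact (hsep f f.2 g g.2 (Subtype.coe_ne_coe.2 hne)).elim hfg hgf
    · exact fun f hf => hf.exists.elim fun x hx => hx.false
    · intro f g h hfg hgh
      filter_upwards [hfg, hgh] with x hx₁ hx₂ using hx₁.trans hx₂
  · intro f g h hgh
    exact ⟨hgh.mono fun x hx => hmono f f.2 hx, htendsto f f.2 hgh⟩

instance : (𝓝[>] (⟨-1, negOne_mem_I⟩ : Icc (-1 : ℝ) 1)).NeBot :=
  nhdsGT_neBot_of_exists_gt ⟨⟨1, one_mem_I⟩, by norm_num⟩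

theorem IsDiffOmega.strictMono {f : Equiv.Perm (Icc (-1 : ℝ) 1)} (hf : IsDiffOmega f) :
    StrictMono f := by
  obtain ⟨hc, -, hfneg, -⟩ := hf
  have : Fact ((-1 : ℝ) ≤ 1) := ⟨by norm_num⟩
  exact hc.strictMono_of_inj_boundedOrder (hfneg.trans_le bot_le) f.injective

theorem IsDiffOmega.tendsto_nhdsGT {f : Equiv.Perm (Icc (-1 : ℝ) 1)} (hf : IsDiffOmega f) :
    Tendsto f (𝓝[>] ⟨-1, negOne_mem_I⟩) (𝓝[>] ⟨-1, negOne_mem_I⟩) := by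
  have hfix : f ⟨-1, negOne_mem_I⟩ = ⟨-1, negOne_mem_I⟩ := hf.2.2.1
  refine tendsto_nhdsWithin_iff.2 ⟨(hf.1.tendsto' _ _ hfix).mono_left nhdsWithin_le_nhds, ?_⟩
  filter_upwards [self_mem_nhdsWithin] with x hx
  simpa only [mem_Ioi, hfix] using hf.strictMono hx

theorem IsDiffOmega.eventually_lt_or_gt {f g : Equiv.Perm (Icc (-1 : ℝ) 1)}
    (hf : IsDiffOmega f) (hg : IsDiffOmega g) (hne : f ≠ g) :
    (∀ᶠ x in 𝓝[>] ⟨-1, negOne_mem_I⟩, f x < g x) ∨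
      ∀ᶠ x in 𝓝[>] ⟨-1, negOne_mem_I⟩, g x < f x := by
  obtain ⟨F, hF, hFf⟩ := hf.2.2.2.2.1
  obtain ⟨G, hG, hGg⟩ := hg.2.2.2.2.1
  have hval : Tendsto Subtype.val (𝓝[>] (⟨-1, negOne_mem_I⟩ : Icc (-1 : ℝ) 1)) (𝓝[>] (-1)) :=
    continuous_subtype_val.continuousWithinAt.tendsto_nhdsWithin fun _ hx => hx
  rcases (hF.sub hG).eqOn_zero_or_eventually_pos_or_neg_nhdsGT (by norm_num) with
    hzero | hpos | hneg
  · refine absurd (Equiv.ext fun x => Subtype.ext ?_) hne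
    simpa [← hFf, ← hGg, sub_eq_zero] using hzero x.2
  · refine Or.inr ((hval.eventually hpos).mono fun x hx => ?_)
    simpa [← Subtype.coe_lt_coe, ← hFf, ← hGg] using hx
  · refine Or.inl ((hval.eventually hneg).mono fun x hx => ?_)
    simpa [← Subtype.coe_lt_coe, ← hFf, ← hGg] using hx

/-- The group `Diff^ω(I, ∂I)` is bi-orderable. -/
theorem diffOmega_biOrderable : BiOrderable DiffOmegaGroup :=
  biOrderable_of_eventually_lt_or_gt DiffOmegaGroup (𝓝[>] ⟨-1, negOne_mem_I⟩)
    (fun _ => IsDiffOmega.strictMono) (fun _ => IsDiffOmega.tendsto_nhdsGT)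
    fun _ hf _ hg => IsDiffOmega.eventually_lt_or_gt hf hg
end Stmt
end

section
/- Let g ∈ PL(I, ∂I) with g ≠ id. Then for every positive integer n, the n-fold composition g^n has at least n − 1 breakpoints; equivalently, Δ(g^n) ≥ n. -/
/-!
Extend `g` by the identity to a homeomorphism `f` of `ℝ` and let
`φ t = log f'(t⁺) - log f'(t⁻)` be the jump of its logarithmic slope. By the chain rule the
jump of `fⁿ` at `t` is `∑_{j<n} φ (f^j t)`, and an interior point is a breakpoint exactly when
its jump is nonzero.

Since `g ≠ 1` there is an interval `(c, d)` bounded by fixed points on which `f x - x` has a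
constant sign; then `f'(c⁺)` and `f'(d⁻)` lie strictly on opposite sides of `1`, and telescoping
gives `∑_{t ∈ (c,d)} φ t = log f'(d⁻) - log f'(c⁺) ≠ 0`. Grouping the finitely many breakpoints
in `(c, d)` into `f`-orbits, some orbit `i ↦ f^i z` carries a nonzero total jump; it is
injective, since a periodic point of an increasing map is fixed. For each residue `r` mod `n`
the windows `{qn + r, …, qn + r + n - 1}` partition `ℤ`, so one of them has a nonzero sum; the
`n` window starts are distinct breakpoints of `gⁿ`.
-/

open Set

namespace Stmt

/-- A bijection of `I = [-1,1]` is piecewise affine if there are finitely many points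
`-1 = x₀ < x₁ < ⋯ < x_k = 1` such that it is affine on each `[x_{i-1}, x_i]`. -/
def IsPL (f : Equiv.Perm (Set.Icc (-1 : ℝ) 1)) : Prop :=
  ∃ (k : ℕ) (x : Fin (k + 1) → ℝ), StrictMono x ∧ x 0 = -1 ∧ x (Fin.last k) = 1 ∧
    ∀ i : Fin k, ∃ a b : ℝ, ∀ t : (Set.Icc (-1 : ℝ) 1),
      x i.castSucc ≤ (t : ℝ) → (t : ℝ) ≤ x i.succ → ((f t : ℝ)) = a * (t : ℝ) + b

/-- Membership in `PL(I, ∂I)`: a homeomorphism of `I = [-1,1]` onto itself fixing the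
endpoints `-1` and `1` which is piecewise affine. -/
def IsPLHomeo (f : Equiv.Perm (Set.Icc (-1 : ℝ) 1)) : Prop :=
  Continuous f ∧ Continuous f.symm ∧
    f ⟨-1, negOne_mem_I⟩ = ⟨-1, negOne_mem_I⟩ ∧ f ⟨1, one_mem_I⟩ = ⟨1, one_mem_I⟩ ∧ IsPL f

/-- The breakpoints of `f`: points of `(-1,1)` at which `f` is not locally affine. -/
def breakpoints (f : Equiv.Perm (Set.Icc (-1 : ℝ) 1)) : Set ℝ :=
  {t | t ∈ Set.Ioo (-1 : ℝ) 1 ∧ ¬ ∃ (a b ε : ℝ), 0 < ε ∧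
    ∀ s : (Set.Icc (-1 : ℝ) 1), |(s : ℝ) - t| < ε → ((f s : ℝ)) = a * (s : ℝ) + b}

/-- `Δ(f)` is the number of breakpoints of `f` plus one. -/
noncomputable def Δ (f : Equiv.Perm (Set.Icc (-1 : ℝ) 1)) : ℕ :=
  (breakpoints f).ncard + 1

end Stmt

open Filter Topology Function

noncomputable def rightSlope (f : ℝ → ℝ) (t : ℝ) : ℝ := derivWithin f (Ici t) t

noncomputable def leftSlope (f : ℝ → ℝ) (t : ℝ) : ℝ := derivWithin f (Iic t) t

noncomputable def logSlopeJump (f : ℝ → ℝ) (t : ℝ) : ℝ :=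
  Real.log (rightSlope f t) - Real.log (leftSlope f t)

def HasAffineGerms (f : ℝ → ℝ) : Prop :=
  ∀ t, (∃ a b, f =ᶠ[𝓝[≥] t] fun x => a * x + b) ∧ ∃ a b, f =ᶠ[𝓝[≤] t] fun x => a * x + b

section AffineGerms

variable {f g : ℝ → ℝ} {a b a' b' t : ℝ}

theorem derivWithin_eq_of_eventuallyEq_affine {s : Set ℝ} (hs : UniqueDiffWithinAt ℝ s t)
    (ht : t ∈ s) (h : f =ᶠ[𝓝[s] t] fun x => a * x + b) : derivWithin f s t = a := by
  have : HasDerivWithinAt (fun x => a * x + b) a s t := by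
    simpa using (((hasDerivAt_id t).const_mul a).add_const b).hasDerivWithinAt
  exact (this.congr_of_eventuallyEq h (h.eq_of_nhdsWithin ht)).derivWithin hs

theorem rightSlope_eq_of_eventuallyEq (h : f =ᶠ[𝓝[≥] t] fun x => a * x + b) :
    rightSlope f t = a :=
  derivWithin_eq_of_eventuallyEq_affine (uniqueDiffWithinAt_Ici t) self_mem_Ici h

theorem leftSlope_eq_of_eventuallyEq (h : f =ᶠ[𝓝[≤] t] fun x => a * x + b) :
    leftSlope f t = a :=
  derivWithin_eq_of_eventuallyEq_affine (uniqueDiffWithinAt_Iic t) self_mem_Iic h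

theorem Filter.EventuallyEq.affine_comp {l l' : Filter ℝ} (h : f =ᶠ[l] fun x => a * x + b)
    (hf : Tendsto f l l') (hg : g =ᶠ[l'] fun x => a' * x + b') :
    g ∘ f =ᶠ[l] fun x => (a' * a) * x + (a' * b + b') := by
  filter_upwards [h, hf.eventually hg] with x hx hgx
  rw [comp_apply, hgx, hx]
  ring

theorem exists_eventuallyEq_affine_iterate {L : ℝ → Filter ℝ} {σ : ℝ → ℝ}
    (hL : ∀ t, Tendsto f (L t) (L (f t))) (h : ∀ t, ∃ b, f =ᶠ[L t] fun x => σ t * x + b)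
    (n : ℕ) (t : ℝ) :
    ∃ b, f^[n] =ᶠ[L t] fun x => (∏ j ∈ Finset.range n, σ (f^[j] t)) * x + b := by
  induction n generalizing t with
  | zero => exact ⟨0, Eventually.of_forall fun x => by simp⟩
  | succ n ih =>
    obtain ⟨b, hb⟩ := h t
    obtain ⟨b', hb'⟩ := ih (f t)
    rw [iterate_succ, Finset.prod_range_succ']
    simp only [iterate_succ_apply, iterate_zero_apply]
    exact ⟨_, hb.affine_comp (hL t) hb'⟩

theorem Filter.EventuallyEq.eventually_eventuallyEq_nhds {s U : Set ℝ} (h : f =ᶠ[𝓝[s] t] g)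
    (hU : IsOpen U) (hUs : U ⊆ s) : ∀ᶠ y in 𝓝[U] t, f =ᶠ[𝓝 y] g := by
  filter_upwards [eventually_eventually_nhdsWithin.2 (h.filter_mono (nhdsWithin_mono _ hUs)),
    self_mem_nhdsWithin] with y hy hyU
  rwa [hU.nhdsWithin_eq hyU] at hy

theorem slopes_eq_of_eventuallyEq (h : f =ᶠ[𝓝 t] fun x => a * x + b) :
    rightSlope f t = a ∧ leftSlope f t = a :=
  ⟨rightSlope_eq_of_eventuallyEq (h.filter_mono nhdsWithin_le_nhds),
    leftSlope_eq_of_eventuallyEq (h.filter_mono nhdsWithin_le_nhds)⟩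

end AffineGerms

namespace HasAffineGerms

variable {f : ℝ → ℝ} (hf : HasAffineGerms f)
include hf

theorem exists_eventuallyEq_rightSlope (t : ℝ) :
    ∃ b, f =ᶠ[𝓝[≥] t] fun x => rightSlope f t * x + b := by
  obtain ⟨a, b, h⟩ := (hf t).1
  exact ⟨b, by rwa [rightSlope_eq_of_eventuallyEq h]⟩

theorem exists_eventuallyEq_leftSlope (t : ℝ) :
    ∃ b, f =ᶠ[𝓝[≤] t] fun x => leftSlope f t * x + b := by
  obtain ⟨a, b, h⟩ := (hf t).2
  exact ⟨b, by rwa [leftSlope_eq_of_eventuallyEq h]⟩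

theorem continuous : Continuous f := by
  refine continuous_iff_continuousAt.2 fun t => continuousAt_iff_continuous_left_right.2 ?_
  obtain ⟨⟨a, b, hr⟩, a', b', hl⟩ := hf t
  have hA : ∀ a b : ℝ, Continuous fun x : ℝ => a * x + b := fun a b => by fun_prop
  exact ⟨(hA a' b').continuousWithinAt.congr_of_eventuallyEq hl (hl.eq_of_nhdsWithin self_mem_Iic),
    (hA a b).continuousWithinAt.congr_of_eventuallyEq hr (hr.eq_of_nhdsWithin self_mem_Ici)⟩

theorem eventually_rightSlope_eq (t : ℝ) : ∀ᶠ s in 𝓝[>] t, rightSlope f s = rightSlope f t := by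
  obtain ⟨b, hb⟩ := hf.exists_eventuallyEq_rightSlope t
  filter_upwards [hb.eventually_eventuallyEq_nhds isOpen_Ioi Ioi_subset_Ici_self] with s hs
  exact (slopes_eq_of_eventuallyEq hs).1

theorem eventually_rightSlope_eq_leftSlope (t : ℝ) :
    ∀ᶠ s in 𝓝[<] t, rightSlope f s = leftSlope f t := by
  obtain ⟨b, hb⟩ := hf.exists_eventuallyEq_leftSlope t
  filter_upwards [hb.eventually_eventuallyEq_nhds isOpen_Iio Iio_subset_Iic_self] with s hs
  exact (slopes_eq_of_eventuallyEq hs).1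

variable (hmono : StrictMono f)
include hmono

theorem rightSlope_pos (t : ℝ) : 0 < rightSlope f t := by
  obtain ⟨b, hb⟩ := hf.exists_eventuallyEq_rightSlope t
  obtain ⟨x, hx, htx⟩ :=
    ((hb.filter_mono (nhdsWithin_mono _ Ioi_subset_Ici_self)).and self_mem_nhdsWithin).exists
  have := hmono (show t < x from htx)
  rw [hx, hb.eq_of_nhdsWithin self_mem_Ici] at this
  nlinarith [show t < x from htx]

theorem leftSlope_pos (t : ℝ) : 0 < leftSlope f t := by
  obtain ⟨b, hb⟩ := hf.exists_eventuallyEq_leftSlope t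
  obtain ⟨x, hx, hxt⟩ :=
    ((hb.filter_mono (nhdsWithin_mono _ Iio_subset_Iic_self)).and self_mem_nhdsWithin).exists
  have := hmono (show x < t from hxt)
  rw [hx, hb.eq_of_nhdsWithin self_mem_Iic] at this
  nlinarith [show x < t from hxt]

theorem exists_eventuallyEq_affine_iff (t : ℝ) :
    (∃ a b, f =ᶠ[𝓝 t] fun x => a * x + b) ↔ logSlopeJump f t = 0 := by
  constructor
  · rintro ⟨a, b, h⟩
    rw [logSlopeJump, (slopes_eq_of_eventuallyEq h).1, (slopes_eq_of_eventuallyEq h).2, sub_self]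
  · intro h
    have hslope : rightSlope f t = leftSlope f t :=
      Real.log_injOn_pos (hf.rightSlope_pos hmono t) (hf.leftSlope_pos hmono t) (sub_eq_zero.1 h)
    obtain ⟨b, hb⟩ := hf.exists_eventuallyEq_rightSlope t
    obtain ⟨b', hb'⟩ := hf.exists_eventuallyEq_leftSlope t
    have hbb : b' = b := by
      have := (hb.eq_of_nhdsWithin self_mem_Ici).symm.trans (hb'.eq_of_nhdsWithin self_mem_Iic)
      rw [hslope] at this
      linarith
    rw [← hslope, hbb] at hb'
    exact ⟨_, b, by rw [← nhdsLE_sup_nhdsGE]; exact eventually_sup.2 ⟨hb', hb⟩⟩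

theorem tendsto_nhdsGE (t : ℝ) : Tendsto f (𝓝[≥] t) (𝓝[≥] (f t)) :=
  hf.continuous.continuousWithinAt.tendsto_nhdsWithin fun _ hx => hmono.monotone hx

theorem tendsto_nhdsLE (t : ℝ) : Tendsto f (𝓝[≤] t) (𝓝[≤] (f t)) :=
  hf.continuous.continuousWithinAt.tendsto_nhdsWithin fun _ hx => hmono.monotone hx

theorem iterate (n : ℕ) : HasAffineGerms f^[n] := fun t =>
  ⟨let ⟨b, hb⟩ := exists_eventuallyEq_affine_iterate (hf.tendsto_nhdsGE hmono)
      hf.exists_eventuallyEq_rightSlope n t; ⟨_, b, hb⟩,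
    let ⟨b, hb⟩ := exists_eventuallyEq_affine_iterate (hf.tendsto_nhdsLE hmono)
      hf.exists_eventuallyEq_leftSlope n t; ⟨_, b, hb⟩⟩

theorem logSlopeJump_iterate (n : ℕ) (t : ℝ) :
    logSlopeJump f^[n] t = ∑ j ∈ Finset.range n, logSlopeJump f (f^[j] t) := by
  obtain ⟨b, hb⟩ := exists_eventuallyEq_affine_iterate (hf.tendsto_nhdsGE hmono)
    hf.exists_eventuallyEq_rightSlope n t
  obtain ⟨b', hb'⟩ := exists_eventuallyEq_affine_iterate (hf.tendsto_nhdsLE hmono)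
    hf.exists_eventuallyEq_leftSlope n t
  rw [logSlopeJump, rightSlope_eq_of_eventuallyEq hb, leftSlope_eq_of_eventuallyEq hb',
    Real.log_prod fun j _ => (hf.rightSlope_pos hmono _).ne',
    Real.log_prod fun j _ => (hf.leftSlope_pos hmono _).ne', ← Finset.sum_sub_distrib]
  rfl

end HasAffineGerms

section Telescoping

variable {M : Type*} {ρ ℓ : ℝ → M} {c d : ℝ} (hρ : ∀ t, ∀ᶠ s in 𝓝[>] t, ρ s = ρ t)
  (hℓ : ∀ t, ∀ᶠ s in 𝓝[<] t, ρ s = ℓ t)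
include hρ hℓ

theorem eq_of_forall_mem_Ioo_eq (hcd : c < d) (h : ∀ t ∈ Ioo c d, ρ t = ℓ t) :
    ℓ d = ρ c := by
  have hloc : IsLocallyConstant fun x : Ioo c d => ρ x := by
    refine (IsLocallyConstant.iff_eventually_eq _).2 fun x => ?_
    have : ∀ᶠ y in 𝓝 (x : ℝ), ρ y = ρ x := by
      rw [← nhdsNE_sup_pure, ← nhdsLT_sup_nhdsGT]
      exact ⟨⟨(hℓ x).mono fun y hy => hy.trans (h x x.2).symm, hρ x⟩, rfl⟩
    exact (continuous_subtype_val.tendsto x).eventually this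
  obtain ⟨x, hx, hxcd⟩ := ((hρ c).and (Ioo_mem_nhdsGT hcd)).exists
  obtain ⟨y, hy, hycd⟩ := ((hℓ d).and (Ioo_mem_nhdsLT hcd)).exists
  have := hloc.apply_eq_of_isPreconnected
    (isPreconnected_iff_preconnectedSpace.1 isPreconnected_Ioo).isPreconnected_univ
    (mem_univ ⟨x, hxcd⟩) (mem_univ ⟨y, hycd⟩)
  rw [← hy, ← hx]
  exact this.symm

variable [AddCommGroup M]

theorem sum_filter_mem_Ioo_sub_eq (T : Finset ℝ) (hcd : c < d)
    (hT : ∀ t ∈ Ioo c d, t ∉ T → ρ t = ℓ t) :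
    ∑ t ∈ T with t ∈ Ioo c d, (ρ t - ℓ t) = ℓ d - ρ c := by
  classical
  induction T using Finset.induction_on generalizing c d with
  | empty =>
    simp [eq_of_forall_mem_Ioo_eq hρ hℓ hcd fun t ht => hT t ht (Finset.notMem_empty t)]
  | insert p T hp ih =>
    have hT' : ∀ {c' d'}, Ioo c' d' ⊆ Ioo c d → p ∉ Ioo c' d' →
        ∀ t ∈ Ioo c' d', t ∉ T → ρ t = ℓ t := fun hsub hp' t ht htT =>
      hT t (hsub ht) fun h => (Finset.mem_insert.1 h).elim (fun e => hp' (e ▸ ht)) htT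
    by_cases hpcd : p ∈ Ioo c d
    · have hsplit : ∑ t ∈ T with t ∈ Ioo c d, (ρ t - ℓ t) =
          ∑ t ∈ T with t ∈ Ioo c p, (ρ t - ℓ t) + ∑ t ∈ T with t ∈ Ioo p d, (ρ t - ℓ t) := by
        rw [← Finset.sum_filter_add_sum_filter_not _ (· < p), Finset.filter_filter,
          Finset.filter_filter]
        congr 2 <;> ext t <;> grind
      rw [Finset.filter_insert, if_pos hpcd, Finset.sum_insert (by simp [hp]), hsplit,
        ih hpcd.1 (hT' (Ioo_subset_Ioo_right hpcd.2.le) (by simp)),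
        ih hpcd.2 (hT' (Ioo_subset_Ioo_left hpcd.1.le) (by simp))]
      abel
    · rw [Finset.filter_insert, if_neg hpcd]
      exact ih hcd (hT' subset_rfl hpcd)

theorem finsum_mem_Ioo_sub_eq (hcd : c < d)
    (hfin : {t ∈ Ioo c d | ρ t ≠ ℓ t}.Finite) :
    ∑ᶠ t ∈ Ioo c d, (ρ t - ℓ t) = ℓ d - ρ c := by
  have key := sum_filter_mem_Ioo_sub_eq hρ hℓ hfin.toFinset hcd fun t ht htT =>
    by_contra fun hne => htT (hfin.mem_toFinset.2 ⟨ht, hne⟩)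
  rw [Finset.filter_true_of_mem fun t ht => (hfin.mem_toFinset.1 ht).1] at key
  rw [← key]
  refine finsum_mem_eq_sum_of_inter_support_eq _ ?_
  ext t
  simp [sub_ne_zero]

end Telescoping

theorem exists_Ioo_fixedPt_free {f : ℝ → ℝ} (hf : Continuous f) {a b u : ℝ} (ha : f a = a)
    (hb : f b = b) (hu : u ∈ Icc a b) (hfu : f u ≠ u) :
    ∃ c d, a ≤ c ∧ c < d ∧ d ≤ b ∧ f c = c ∧ f d = d ∧
      ∀ x ∈ Ioo c d, ∀ y ∈ Ioo c d, 0 < (f x - x) * (f y - y) := by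
  have hF : IsClosed {x | f x = x} := isClosed_eq hf continuous_id
  have hK₁ : IsCompact ({x | f x = x} ∩ Icc a u) := isCompact_Icc.inter_left hF
  have hK₂ : IsCompact ({x | f x = x} ∩ Icc u b) := isCompact_Icc.inter_left hF
  obtain ⟨hfc, hac, hcu⟩ := hK₁.sSup_mem ⟨a, ha, le_rfl, hu.1⟩
  obtain ⟨hfd, hud, hdb⟩ := hK₂.sInf_mem ⟨b, hb, hu.2, le_rfl⟩
  set c := sSup ({x | f x = x} ∩ Icc a u)
  set d := sInf ({x | f x = x} ∩ Icc u b)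
  have hcu : c < u := lt_of_le_of_ne hcu fun h => hfu (h ▸ hfc)
  have hud : u < d := lt_of_le_of_ne hud fun h => hfu (h ▸ hfd)
  have hfree : ∀ x ∈ Ioo c d, f x ≠ x := by
    intro x hx hfx
    rcases le_total x u with hxu | hux
    · exact (le_csSup hK₁.bddAbove ⟨hfx, hac.trans hx.1.le, hxu⟩).not_gt hx.1
    · exact (csInf_le hK₂.bddBelow ⟨hfx, hux, hx.2.le.trans hdb⟩).not_gt hx.2
  refine ⟨c, d, hac, hcu.trans hud, hdb, hfc, hfd, fun x hx y hy => ?_⟩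
  by_contra! hneg
  have hconn : IsPreconnected ((fun x => f x - x) '' Ioo c d) :=
    isPreconnected_Ioo.image _ (hf.sub continuous_id).continuousOn
  obtain ⟨z, hz, hz0⟩ : (0 : ℝ) ∈ (fun x => f x - x) '' Ioo c d := by
    rcases mul_nonpos_iff.1 hneg with ⟨h₁, h₂⟩ | ⟨h₁, h₂⟩
    · exact hconn.Icc_subset (mem_image_of_mem _ hy) (mem_image_of_mem _ hx) ⟨h₂, h₁⟩
    · exact hconn.Icc_subset (mem_image_of_mem _ hx) (mem_image_of_mem _ hy) ⟨h₁, h₂⟩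
  exact hfree z hz (sub_eq_zero.1 hz0)

theorem exists_sum_window_ne_zero {M : Type*} [AddCommMonoid M] {a : ℤ → M}
    (ha : ∑ᶠ i, a i ≠ 0) (n : ℕ) [NeZero n] (r : ℤ) :
    ∃ q : ℤ, ∑ j : Fin n, a (q * n + r + j) ≠ 0 := by
  by_contra! h
  rw [← finsum_comp_equiv (Equiv.addRight r), ← finsum_comp_equiv (Int.divModEquiv n).symm] at ha
  rw [finsum_curry _ (hasFiniteSupport_of_finsum_ne_zero ha)] at ha
  refine ha (finsum_eq_zero_of_forall_eq_zero fun q => ?_)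
  rw [finsum_eq_sum_of_fintype, ← h q]
  simp [add_right_comm]

theorem injOn_mul_natCast_add (q : ℤ → ℤ) (n : ℕ) :
    InjOn (fun r : ℕ => q r * n + r) (Finset.range n) := by
  intro r hr r' hr' h
  have hmod := congrArg (· % (n : ℤ)) h
  simp only [Finset.coe_range, mem_Iio] at hr hr'
  simp only [add_comm (q _ * _), Int.add_mul_emod_self_right,
    Int.emod_eq_of_lt (Int.natCast_nonneg _) (Int.ofNat_lt.2 hr),
    Int.emod_eq_of_lt (Int.natCast_nonneg _) (Int.ofNat_lt.2 hr')] at hmod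
  exact_mod_cast hmod

theorem exists_finsum_orbit_ne_zero {α M : Type*} [AddCommMonoid M] (f : Equiv.Perm α)
    {φ : α → M} (hφ : ∑ᶠ x, φ x ≠ 0) :
    ∃ z, φ z ≠ 0 ∧ ∑ᶠ x ∈ range fun i : ℤ => (f ^ i) z, φ x ≠ 0 := by
  classical
  have hfin := hasFiniteSupport_of_finsum_ne_zero hφ
  by_contra! h
  rw [finsum_eq_sum _ hfin] at hφ
  refine hφ (Finset.sum_cancels_of_partition_cancels (Equiv.Perm.SameCycle.setoid f) ?_)
  intro z hz
  rw [← h z (hfin.mem_toFinset.1 hz)]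
  refine (finsum_mem_eq_sum_of_inter_support_eq _ ?_).symm
  ext x
  simp only [mem_inter_iff, mem_range, Finset.coe_filter, mem_ofPred_eq, hfin.mem_toFinset]
  exact ⟨fun ⟨hzx, hx⟩ => ⟨⟨hx, Equiv.Perm.SameCycle.symm hzx⟩, hx⟩,
    fun ⟨⟨_, hxz⟩, hx⟩ => ⟨Equiv.Perm.SameCycle.symm hxz, hx⟩⟩

theorem StrictMono.injective_zpow_apply {α : Type*} [LinearOrder α] {f : Equiv.Perm α}
    (hf : StrictMono f) {z : α} (hz : f z ≠ z) : Injective fun i : ℤ => (f ^ i) z := by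
  have hper : ∀ k : ℕ, 0 < k → (f ^ (k : ℤ)) z ≠ z := fun k hk h => hz <|
    (Commute.id_right.iterate_pos_eq_iff_map_eq hf.monotone strictMono_id hk).1
      (by simpa [← Equiv.Perm.coe_pow] using h)
  intro i j hij
  by_contra hne
  wlog hlt : i < j generalizing i j
  · exact this hij.symm (Ne.symm hne) (lt_of_le_of_ne (not_lt.1 hlt) (Ne.symm hne))
  obtain ⟨k, rfl⟩ : ∃ k : ℕ, j = i + k := ⟨(j - i).toNat, by omega⟩
  refine hper k (by omega) ((f ^ i).injective ?_)
  simpa [zpow_add, Equiv.Perm.mul_apply] using hij.symm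

theorem StrictMono.apply_mem_Ioo_iff {α : Type*} [LinearOrder α] {f : α → α} (hf : StrictMono f)
    {c d x : α} (hc : f c = c) (hd : f d = d) : f x ∈ Ioo c d ↔ x ∈ Ioo c d := by
  conv_lhs => rw [← hc, ← hd]
  simp only [mem_Ioo, hf.lt_iff_lt]

namespace HasAffineGerms

variable {f : ℝ → ℝ} (hf : HasAffineGerms f) {c d : ℝ}
include hf

theorem rightSlope_ne_leftSlope (hcd : c < d) (hc : f c = c) (hd : f d = d)
    (hsign : ∀ x ∈ Ioo c d, ∀ y ∈ Ioo c d, 0 < (f x - x) * (f y - y)) :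
    rightSlope f c ≠ leftSlope f d := by
  obtain ⟨b, hb⟩ := hf.exists_eventuallyEq_rightSlope c
  obtain ⟨b', hb'⟩ := hf.exists_eventuallyEq_leftSlope d
  obtain ⟨x, hx, hxcd⟩ :=
    ((hb.filter_mono (nhdsWithin_mono _ Ioi_subset_Ici_self)).and (Ioo_mem_nhdsGT hcd)).exists
  obtain ⟨y, hy, hycd⟩ :=
    ((hb'.filter_mono (nhdsWithin_mono _ Iio_subset_Iic_self)).and (Ioo_mem_nhdsLT hcd)).exists
  obtain rfl : b = c - rightSlope f c * c := by
    have := hb.eq_of_nhdsWithin self_mem_Ici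
    rw [hc] at this
    linarith
  obtain rfl : b' = d - leftSlope f d * d := by
    have := hb'.eq_of_nhdsWithin self_mem_Iic
    rw [hd] at this
    linarith
  intro heq
  have := hsign x hxcd y hycd
  rw [hx, hy, ← heq] at this
  -- with `a` the common slope, `f x - x = (a - 1) (x - c)` and `f y - y = (a - 1) (y - d)`
  nlinarith [mul_nonneg (sq_nonneg (rightSlope f c - 1))
    (mul_nonneg (sub_nonneg.2 hxcd.1.le) (sub_nonneg.2 hycd.2.le))]

theorem finsum_logSlopeJump_ne_zero (hmono : StrictMono f) (hcd : c < d) (hc : f c = c)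
    (hd : f d = d) (hsign : ∀ x ∈ Ioo c d, ∀ y ∈ Ioo c d, 0 < (f x - x) * (f y - y))
    (hfin : {t ∈ Ioo c d | logSlopeJump f t ≠ 0}.Finite) :
    ∑ᶠ t ∈ Ioo c d, logSlopeJump f t ≠ 0 := by
  have key := finsum_mem_Ioo_sub_eq (ρ := fun t => Real.log (rightSlope f t))
    (ℓ := fun t => Real.log (leftSlope f t))
    (fun t => (hf.eventually_rightSlope_eq t).mono fun s hs => by rw [hs])
    (fun t => (hf.eventually_rightSlope_eq_leftSlope t).mono fun s hs => by rw [hs]) hcd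
    (hfin.subset fun t ht => ⟨ht.1, sub_ne_zero.2 ht.2⟩)
  simp only [logSlopeJump, key]
  exact sub_ne_zero.2 fun h => hf.rightSlope_ne_leftSlope hcd hc hd hsign
    (Real.log_injOn_pos (hf.leftSlope_pos hmono d) (hf.rightSlope_pos hmono c) h).symm

end HasAffineGerms

theorem exists_finset_card_eq_sum_logSlopeJump_ne_zero {f : Equiv.Perm ℝ}
    (hf : HasAffineGerms f) (hmono : StrictMono f) {c d : ℝ} (hcd : c < d) (hc : f c = c)
    (hd : f d = d) (hsign : ∀ x ∈ Ioo c d, ∀ y ∈ Ioo c d, 0 < (f x - x) * (f y - y))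
    (hfin : {t ∈ Ioo c d | logSlopeJump f t ≠ 0}.Finite) (n : ℕ) [NeZero n] :
    ∃ s : Finset ℝ, s.card = n ∧
      ∀ t ∈ s, t ∈ Ioo c d ∧ ∑ j ∈ Finset.range n, logSlopeJump f (f^[j] t) ≠ 0 := by
  set ψ := (Ioo c d).indicator (logSlopeJump f) with hψdef
  have hψ : ∑ᶠ t, ψ t ≠ 0 := by
    rw [← finsum_mem_def]
    exact hf.finsum_logSlopeJump_ne_zero hmono hcd hc hd hsign hfin
  obtain ⟨z, hz, horb⟩ := exists_finsum_orbit_ne_zero f hψ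
  have hzcd : z ∈ Ioo c d := by
    by_contra h
    exact hz (indicator_of_notMem h _)
  have horbit : ∀ i : ℤ, (f ^ i) z ∈ Ioo c d := fun i => by
    simpa [Equiv.Perm.subtypePerm_zpow] using
      (((f.subtypePerm fun x => hmono.apply_mem_Ioo_iff hc hd) ^ i) ⟨z, hzcd⟩).2
  have hinj := hmono.injective_zpow_apply (z := z) fun h => by
    simpa [h] using hsign z hzcd z hzcd
  rw [finsum_mem_range hinj] at horb
  choose q hq using exists_sum_window_ne_zero horb n
  have hwindow : ∀ k : ℤ, ∑ j : Fin n, ψ ((f ^ (k + j)) z) =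
      ∑ j ∈ Finset.range n, logSlopeJump f (f^[j] ((f ^ k) z)) := by
    intro k
    rw [← Fin.sum_univ_eq_sum_range]
    refine Finset.sum_congr rfl fun j _ => ?_
    rw [hψdef, indicator_of_mem (horbit _), add_comm, zpow_add, zpow_natCast, Equiv.Perm.mul_apply,
      Equiv.Perm.coe_pow]
  refine ⟨(Finset.range n).image fun r : ℕ => (f ^ (q r * n + r)) z, ?_, ?_⟩
  · exact (Finset.card_image_of_injOn (hinj.comp_injOn (injOn_mul_natCast_add q n))).trans
      (Finset.card_range n)
  · simp only [Finset.mem_image, Finset.mem_range]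
    rintro t ⟨r, -, rfl⟩
    exact ⟨horbit _, by rw [← hwindow]; exact hq r⟩

theorem Monotone.exists_mem_Ico_castSucc_succ {α : Type*} [LinearOrder α] {k : ℕ}
    {x : Fin (k + 1) → α} (hx : Monotone x) {t : α} (ht : t ∈ Ico (x 0) (x (Fin.last k))) :
    ∃ i : Fin k, t ∈ Ico (x i.castSucc) (x i.succ) := by
  induction k with
  | zero => exact absurd ht.2 (not_lt.2 ht.1)
  | succ k ih =>
    by_cases h : t < x (Fin.last k).castSucc
    · obtain ⟨i, hi⟩ := ih (x := x ∘ Fin.castSucc) (hx.comp Fin.strictMono_castSucc.monotone)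
        ⟨ht.1, h⟩
      exact ⟨i.castSucc, by simpa using hi⟩
    · exact ⟨Fin.last k, not_lt.1 h, by simpa using ht.2⟩

theorem Monotone.exists_mem_Ioc_castSucc_succ {α : Type*} [LinearOrder α] {k : ℕ}
    {x : Fin (k + 1) → α} (hx : Monotone x) {t : α} (ht : t ∈ Ioc (x 0) (x (Fin.last k))) :
    ∃ i : Fin k, t ∈ Ioc (x i.castSucc) (x i.succ) := by
  induction k with
  | zero => exact absurd ht.2 (not_le.2 ht.1)
  | succ k ih =>
    by_cases h : t ≤ x (Fin.last k).castSucc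
    · obtain ⟨i, hi⟩ := ih (x := x ∘ Fin.castSucc) (hx.comp Fin.strictMono_castSucc.monotone)
        ⟨ht.1, h⟩
      exact ⟨i.castSucc, by simpa using hi⟩
    · exact ⟨Fin.last k, not_le.1 h, by simpa using ht.2⟩

namespace Stmt

open Equiv.Perm (ofSubtype)

variable {g : Equiv.Perm (Icc (-1 : ℝ) 1)}

theorem IsPL.exists_partition (h : IsPL g) :
    ∃ (k : ℕ) (x : Fin (k + 1) → ℝ), StrictMono x ∧ x 0 = -1 ∧ x (Fin.last k) = 1 ∧
      ∀ i : Fin k, ∃ a b,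
        EqOn (ofSubtype g) (fun y => a * y + b) (Icc (x i.castSucc) (x i.succ)) := by
  obtain ⟨k, x, hx, h0, hk, hpiece⟩ := h
  refine ⟨k, x, hx, h0, hk, fun i => ?_⟩
  obtain ⟨a, b, hab⟩ := hpiece i
  refine ⟨a, b, fun y hy => ?_⟩
  have hyI : y ∈ Icc (-1 : ℝ) 1 :=
    ⟨h0 ▸ (hx.monotone (Fin.zero_le _)).trans hy.1, hk ▸ hy.2.trans (hx.monotone (Fin.le_last _))⟩
  rw [Equiv.Perm.ofSubtype_apply_of_mem g hyI]
  exact hab ⟨y, hyI⟩ hy.1 hy.2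

theorem IsPLHomeo.ofSubtype_apply_of_notMem (hg : IsPLHomeo g) {x : ℝ} (hx : x ∉ Ioo (-1) 1) :
    ofSubtype g x = x := by
  by_cases hxI : x ∈ Icc (-1 : ℝ) 1
  · rw [Equiv.Perm.ofSubtype_apply_of_mem g hxI]
    obtain rfl | rfl : x = -1 ∨ x = 1 := by
      by_contra! h
      exact hx ⟨lt_of_le_of_ne hxI.1 (Ne.symm h.1), lt_of_le_of_ne hxI.2 h.2⟩
    · exact congrArg Subtype.val hg.2.2.1
    · exact congrArg Subtype.val hg.2.2.2.1
  · exact Equiv.Perm.ofSubtype_apply_of_not_mem g hxI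

theorem IsPLHomeo.exists_eqOn_affine_Ico (hg : IsPLHomeo g) (t : ℝ) :
    ∃ p q a b, t ∈ Ico p q ∧ EqOn (ofSubtype g) (fun y => a * y + b) (Icc p q) := by
  by_cases h₁ : t < -1
  · exact ⟨t, -1, 1, 0, ⟨le_rfl, h₁⟩, fun y hy => by
      simpa using hg.ofSubtype_apply_of_notMem fun h => h.1.not_ge hy.2⟩
  by_cases h₂ : 1 ≤ t
  · exact ⟨t, t + 1, 1, 0, ⟨le_rfl, by linarith⟩, fun y hy => by
      simpa using hg.ofSubtype_apply_of_notMem fun h => h.2.not_ge (h₂.trans hy.1)⟩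
  obtain ⟨k, x, hx, h0, hk, hpiece⟩ := hg.2.2.2.2.exists_partition
  obtain ⟨i, hi⟩ := hx.monotone.exists_mem_Ico_castSucc_succ (t := t)
    ⟨by rw [h0]; exact not_lt.1 h₁, by rw [hk]; exact not_le.1 h₂⟩
  obtain ⟨a, b, hab⟩ := hpiece i
  exact ⟨_, _, a, b, hi, hab⟩

theorem IsPLHomeo.exists_eqOn_affine_Ioc (hg : IsPLHomeo g) (t : ℝ) :
    ∃ p q a b, t ∈ Ioc p q ∧ EqOn (ofSubtype g) (fun y => a * y + b) (Icc p q) := by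
  by_cases h₁ : t ≤ -1
  · exact ⟨t - 1, t, 1, 0, ⟨by linarith, le_rfl⟩, fun y hy => by
      simpa using hg.ofSubtype_apply_of_notMem fun h => h.1.not_ge (hy.2.trans h₁)⟩
  by_cases h₂ : 1 < t
  · exact ⟨1, t, 1, 0, ⟨h₂, le_rfl⟩, fun y hy => by
      simpa using hg.ofSubtype_apply_of_notMem fun h => h.2.not_ge hy.1⟩
  obtain ⟨k, x, hx, h0, hk, hpiece⟩ := hg.2.2.2.2.exists_partition
  obtain ⟨i, hi⟩ := hx.monotone.exists_mem_Ioc_castSucc_succ (t := t)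
    ⟨by rw [h0]; exact not_le.1 h₁, by rw [hk]; exact not_lt.1 h₂⟩
  obtain ⟨a, b, hab⟩ := hpiece i
  exact ⟨_, _, a, b, hi, hab⟩

theorem IsPLHomeo.hasAffineGerms (hg : IsPLHomeo g) : HasAffineGerms (ofSubtype g) := by
  intro t
  obtain ⟨_, _, a, b, ht, hab⟩ := hg.exists_eqOn_affine_Ico t
  obtain ⟨_, _, a', b', ht', hab'⟩ := hg.exists_eqOn_affine_Ioc t
  exact ⟨⟨a, b, eventually_of_mem (Icc_mem_nhdsGE_of_mem ht) hab⟩,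
    ⟨a', b', eventually_of_mem (Icc_mem_nhdsLE_of_mem ht') hab'⟩⟩

theorem IsPLHomeo.strictMono (hg : IsPLHomeo g) : StrictMono (ofSubtype g) := by
  refine (hg.hasAffineGerms.continuous.strictMono_of_inj (ofSubtype g).injective).resolve_right
    fun h => ?_
  have := h (show (-2 : ℝ) < 2 by norm_num)
  rw [hg.ofSubtype_apply_of_notMem (by norm_num), hg.ofSubtype_apply_of_notMem (by norm_num)]
    at this
  norm_num at this

theorem mem_breakpoints_iff {h : Equiv.Perm (Icc (-1 : ℝ) 1)} {t : ℝ} (ht : t ∈ Ioo (-1) 1) :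
    t ∈ breakpoints h ↔ ¬∃ a b, ofSubtype h =ᶠ[𝓝 t] fun x => a * x + b := by
  simp only [breakpoints, mem_ofPred_eq, ht, true_and]
  refine not_congr ⟨fun ⟨a, b, ε, hε, H⟩ => ⟨a, b, ?_⟩, fun ⟨a, b, H⟩ => ?_⟩
  · filter_upwards [Icc_mem_nhds ht.1 ht.2, Metric.ball_mem_nhds t hε] with x hxI hxε
    rw [Equiv.Perm.ofSubtype_apply_of_mem h hxI]
    exact H ⟨x, hxI⟩ hxε
  · obtain ⟨ε, hε, Hε⟩ := Metric.eventually_nhds_iff.1 H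
    exact ⟨a, b, ε, hε, fun s hs => by simpa using Hε (show dist (s : ℝ) t < ε from hs)⟩

theorem mem_breakpoints_iff_logSlopeJump_ne_zero {h : Equiv.Perm (Icc (-1 : ℝ) 1)} {t : ℝ}
    (hh : HasAffineGerms (ofSubtype h)) (hmono : StrictMono (ofSubtype h)) (ht : t ∈ Ioo (-1) 1) :
    t ∈ breakpoints h ↔ logSlopeJump (ofSubtype h) t ≠ 0 := by
  rw [mem_breakpoints_iff ht, hh.exists_eventuallyEq_affine_iff hmono]

theorem IsPLHomeo.mem_breakpoints_pow_iff (hg : IsPLHomeo g) (n : ℕ) {t : ℝ}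
    (ht : t ∈ Ioo (-1) 1) : t ∈ breakpoints (g ^ n) ↔
      ∑ j ∈ Finset.range n, logSlopeJump (ofSubtype g) ((ofSubtype g)^[j] t) ≠ 0 := by
  have hcoe : ⇑(ofSubtype (g ^ n)) = (ofSubtype g)^[n] := by rw [map_pow, Equiv.Perm.coe_pow]
  rw [mem_breakpoints_iff_logSlopeJump_ne_zero
    (by rw [hcoe]; exact hg.hasAffineGerms.iterate hg.strictMono n)
    (by rw [hcoe]; exact hg.strictMono.iterate n) ht, hcoe,
    hg.hasAffineGerms.logSlopeJump_iterate hg.strictMono]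

theorem IsPLHomeo.mapsTo_Ioo (hg : IsPLHomeo g) : MapsTo (ofSubtype g) (Ioo (-1) 1) (Ioo (-1) 1) :=
  fun _ hx => (hg.strictMono.apply_mem_Ioo_iff (hg.ofSubtype_apply_of_notMem (by simp))
    (hg.ofSubtype_apply_of_notMem (by simp))).2 hx

theorem IsPLHomeo.breakpoints_finite (hg : IsPLHomeo g) : (breakpoints g).Finite := by
  obtain ⟨k, x, hx, h0, hk, hpiece⟩ := hg.2.2.2.2.exists_partition
  refine (finite_range x).subset fun t ht => ?_
  by_contra htx
  obtain ⟨i, hi⟩ := hx.monotone.exists_mem_Ico_castSucc_succ (t := t) ⟨h0 ▸ ht.1.1.le, hk ▸ ht.1.2⟩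
  obtain ⟨a, b, hab⟩ := hpiece i
  exact (mem_breakpoints_iff ht.1).1 ht ⟨a, b, eventually_of_mem
    (Icc_mem_nhds (lt_of_le_of_ne hi.1 fun e => htx ⟨_, e⟩) hi.2) hab⟩

theorem IsPLHomeo.breakpoints_pow_finite (hg : IsPLHomeo g) (n : ℕ) :
    (breakpoints (g ^ n)).Finite := by
  refine ((finite_lt_nat n).biUnion fun j _ => hg.breakpoints_finite.preimage
    ((ofSubtype g).injective.iterate j).injOn).subset fun t ht => ?_
  obtain ⟨j, hj, hjump⟩ :=
    Finset.exists_ne_zero_of_sum_ne_zero ((hg.mem_breakpoints_pow_iff n ht.1).1 ht)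
  exact mem_biUnion (Finset.mem_range.1 hj) ((mem_breakpoints_iff_logSlopeJump_ne_zero
    hg.hasAffineGerms hg.strictMono (hg.mapsTo_Ioo.iterate j ht.1)).2 hjump)

/-- If `g ∈ PL(I,∂I)` is not the identity, then `g^n` has at least `n - 1` breakpoints;
equivalently `Δ(gⁿ) ≥ n`. -/
theorem delta_pow_ge (g : Equiv.Perm (Set.Icc (-1 : ℝ) 1)) (hg : Stmt.IsPLHomeo g)
    (hne : g ≠ 1) (n : ℕ) (hn : 0 < n) : n ≤ Stmt.Δ (g ^ n) := by
  obtain ⟨u, hu⟩ : ∃ u, g u ≠ u := not_forall.1 fun h => hne (Equiv.ext h)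
  obtain ⟨c, d, hc, hcd, hd, hfc, hfd, hsign⟩ := exists_Ioo_fixedPt_free
    hg.hasAffineGerms.continuous (hg.ofSubtype_apply_of_notMem (by simp))
    (hg.ofSubtype_apply_of_notMem (by simp)) u.2
    (by rwa [Equiv.Perm.ofSubtype_apply_coe, Ne, ← Subtype.ext_iff])
  have hIoo : Ioo c d ⊆ Ioo (-1) 1 := Ioo_subset_Ioo hc hd
  have hfin : {t ∈ Ioo c d | logSlopeJump (ofSubtype g) t ≠ 0}.Finite :=
    hg.breakpoints_finite.subset fun t ht => (mem_breakpoints_iff_logSlopeJump_ne_zero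
      hg.hasAffineGerms hg.strictMono (hIoo ht.1)).2 ht.2
  have : NeZero n := ⟨hn.ne'⟩
  obtain ⟨s, hs, hsbp⟩ := exists_finset_card_eq_sum_logSlopeJump_ne_zero hg.hasAffineGerms
    hg.strictMono hcd hfc hfd hsign hfin n
  have hsub : (s : Set ℝ) ⊆ breakpoints (g ^ n) := fun t ht =>
    (hg.mem_breakpoints_pow_iff n (hIoo (hsbp t ht).1)).2 (hsbp t ht).2
  have := Set.ncard_le_ncard hsub (hg.breakpoints_pow_finite n)
  rw [Set.ncard_coe_finset, hs] at this
  exact this.trans (Nat.le_succ _)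
end Stmt
end
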